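/- arXiv:2511.09963 — 5 statements merged into one kernel-verified Lean document; each statement's English description precedes it below -/
import Mathlib

section
/- Let T, τ > 0 and D ∈ L^∞_loc([0,∞);[0,∞)). Assume (f,S) is a weak solution on [0,T] with input D and initial condition (f₀,S₀) ∈ X, and (f̄,S̄) is a weak solution on [0,τ] with input D̄(s) := D(T+s) and initial condition (f[T], S(T)). Define (f̂[t], Ŝ(t)) = (f[t], S(t)) for 0 ≤ t ≤ T and (f̂[t], Ŝ(t)) = (f̄[t−T], S̄(t−T)) for T < t ≤ T+τ. Then (f̂, Ŝ) is a weak solution on [0,T+τ] with input D and initial condition (f₀,S₀). (Proposition 1: concatenation of weak solutions.) -/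
open MeasureTheory Set Filter

noncomputable section

/-- Membership in the state space `X`: `f` is a positive continuous integrable
age-distribution vanishing at infinity, `S ∈ (0, S_in)`, and the renewal
compatibility condition `f(0) = μ(S)·∫₀^∞ k(a) f(a) da` holds. -/
def MemX (μ k : ℝ → ℝ) (S_in : ℝ) (f : ℝ → ℝ) (S : ℝ) : Prop :=
  ContinuousOn f (Ici 0) ∧ (∀ a, 0 ≤ a → 0 < f a) ∧
  Tendsto f atTop (nhds 0) ∧ IntegrableOn f (Ioi 0) ∧
  S ∈ Ioo 0 S_in ∧ f 0 = μ S * ∫ a in Ioi (0:ℝ), k a * f a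

/-- Admissible inputs: `D ∈ L^∞_loc([0,∞); [0,∞))` (represented by a measurable,
non-negative function bounded on every compact interval `[0,T]`). -/
def AdmissibleInput (D : ℝ → ℝ) : Prop :=
  Measurable D ∧ (∀ t, 0 ≤ t → 0 ≤ D t) ∧
  ∀ T, 0 < T → ∃ C, ∀ t ∈ Icc (0:ℝ) T, D t ≤ C

/-- Standing assumptions on the model data `μ, β, k, q : [0,∞) → [0,∞)` and `S_in > 0`:
all are bounded continuous non-negative, `μ ∈ C¹`, `μ(0) = 0`, `μ(S) > 0` for `S > 0`,
and `∫₀^∞ k > 0`, `∫₀^∞ q > 0`. -/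
def ModelHyp (μ β k q : ℝ → ℝ) (S_in : ℝ) : Prop :=
  ContinuousOn μ (Ici 0) ∧ (∀ s, 0 ≤ s → 0 ≤ μ s) ∧ (∃ C, ∀ s, 0 ≤ s → μ s ≤ C) ∧
  ContDiffOn ℝ 1 μ (Ici 0) ∧ μ 0 = 0 ∧ (∀ s, 0 < s → 0 < μ s) ∧
  ContinuousOn β (Ici 0) ∧ (∀ a, 0 ≤ a → 0 ≤ β a) ∧ (∃ C, ∀ a, 0 ≤ a → β a ≤ C) ∧
  ContinuousOn k (Ici 0) ∧ (∀ a, 0 ≤ a → 0 ≤ k a) ∧ (∃ C, ∀ a, 0 ≤ a → k a ≤ C) ∧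
  ContinuousOn q (Ici 0) ∧ (∀ a, 0 ≤ a → 0 ≤ q a) ∧ (∃ C, ∀ a, 0 ≤ a → q a ≤ C) ∧
  (0 < ∫⁻ a in Ioi (0:ℝ), ENNReal.ofReal (k a)) ∧
  (0 < ∫⁻ a in Ioi (0:ℝ), ENNReal.ofReal (q a)) ∧
  0 < S_in

/-- Test functions for the weak formulation: `φ` is bounded, of class `C¹` on
`[0,T]×[0,∞)` (with partial derivatives `φt`, `φa`), and `∂φ/∂a + ∂φ/∂t` is bounded. -/
def TestFun (T : ℝ) (φ φt φa : ℝ → ℝ → ℝ) : Prop :=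
  ContinuousOn (fun p : ℝ × ℝ => φ p.1 p.2) (Icc 0 T ×ˢ Ici (0:ℝ)) ∧
  ContinuousOn (fun p : ℝ × ℝ => φt p.1 p.2) (Icc 0 T ×ˢ Ici (0:ℝ)) ∧
  ContinuousOn (fun p : ℝ × ℝ => φa p.1 p.2) (Icc 0 T ×ˢ Ici (0:ℝ)) ∧
  (∀ s ∈ Icc 0 T, ∀ a ∈ Ici (0:ℝ),
    HasDerivAt (fun u => φ u a) (φt s a) s ∧ HasDerivAt (fun u => φ s u) (φa s a) a) ∧
  (∃ C, ∀ s ∈ Icc 0 T, ∀ a ∈ Ici (0:ℝ), |φ s a| ≤ C) ∧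
  (∃ C, ∀ s ∈ Icc 0 T, ∀ a ∈ Ici (0:ℝ), |φa s a + φt s a| ≤ C)

/-- Weak solution on `[0,T]` with input `D` and initial condition `(f₀,S₀)` of the
age-structured chemostat (2.1)–(2.3), (2.6): a continuous map `t ↦ (f[t],S(t))` into `X`
(jointly continuous and `L¹`-continuous in time), satisfying the initial condition, the
renewal boundary condition for all `t`, the substrate equation in integrated
(absolutely continuous / a.e.) form, and the weak (test function) formulation of the PDE. -/
def IsWeakSolution (μ β k q : ℝ → ℝ) (S_in : ℝ) (D : ℝ → ℝ) (T : ℝ)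
    (f : ℝ → ℝ → ℝ) (S : ℝ → ℝ) (f₀ : ℝ → ℝ) (S₀ : ℝ) : Prop :=
  (∀ a, 0 ≤ a → f 0 a = f₀ a) ∧ S 0 = S₀ ∧
  (∀ t ∈ Icc 0 T, MemX μ k S_in (f t) (S t)) ∧
  (∀ t₀ ∈ Icc 0 T, Tendsto (fun t => ∫ a in Ioi (0:ℝ), |f t a - f t₀ a|)
      (nhdsWithin t₀ (Icc 0 T)) (nhds 0)) ∧
  ContinuousOn (fun p : ℝ × ℝ => f p.1 p.2) (Icc 0 T ×ˢ Ici (0:ℝ)) ∧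
  ContinuousOn S (Icc 0 T) ∧
  (∀ t ∈ Icc 0 T, f t 0 = μ (S t) * ∫ a in Ioi (0:ℝ), k a * f t a) ∧
  (∀ t ∈ Icc 0 T, S t = S₀ + ∫ s in (0:ℝ)..t,
      (D s * (S_in - S s) - μ (S s) * ∫ a in Ioi (0:ℝ), q a * f s a)) ∧
  (∀ φ φt φa, TestFun T φ φt φa → ∀ t ∈ Icc 0 T,
    (∫ a in Ioi (0:ℝ), f₀ a * φ 0 a) + (∫ s in (0:ℝ)..t, f s 0 * φ s 0)
      = (∫ a in Ioi (0:ℝ), f t a * φ t a)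
        + ∫ s in (0:ℝ)..t, ∫ a in Ioi (0:ℝ),
            ((β a + D s) * φ s a - φa s a - φt s a) * f s a)

open Topology


lemma glue_continuousOn {X Y : Type*} [TopologicalSpace X] [TopologicalSpace Y]
    {s t : Set X} (hs : IsClosed s) (ht : IsClosed t) {F : X → Y}
    (h1 : ContinuousOn F s) (h2 : ContinuousOn F t) : ContinuousOn F (s ∪ t) := by
  intro x hx
  unfold ContinuousWithinAt
  rw [nhdsWithin_union, tendsto_sup]
  constructor
  · by_cases hxs : x ∈ s
    · exact h1 x hxs
    · have : 𝓝[s] x = ⊥ := by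
        rw [← not_neBot, ← mem_closure_iff_nhdsWithin_neBot, hs.closure_eq]
        exact hxs
      rw [this]; exact tendsto_bot
  · by_cases hxt : x ∈ t
    · exact h2 x hxt
    · have : 𝓝[t] x = ⊥ := by
        rw [← not_neBot, ← mem_closure_iff_nhdsWithin_neBot, ht.closure_eq]
        exact hxt
      rw [this]; exact tendsto_bot

lemma nhdsWithin_bot_of_lt {x c : ℝ} {s : Set ℝ} (hs : s ⊆ Ici c) (hx : x < c) :
    𝓝[s] x = ⊥ := by
  rw [← not_neBot, ← mem_closure_iff_nhdsWithin_neBot]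
  intro h
  have := closure_mono hs h
  rw [closure_Ici] at this
  exact absurd this (not_le.2 hx)

lemma nhdsWithin_bot_of_gt {x c : ℝ} {s : Set ℝ} (hs : s ⊆ Iic c) (hx : c < x) :
    𝓝[s] x = ⊥ := by
  rw [← not_neBot, ← mem_closure_iff_nhdsWithin_neBot]
  intro h
  have := closure_mono hs h
  rw [closure_Iic] at this
  exact absurd this (not_le.2 hx)

/-- Master lemma : continuity of parametric integrals `s ↦ ∫ w(s,a) F(s,a) da`
for `F` continuous in `L¹` and `w` continuous and bounded. -/
lemma cont_param_integral {R : ℝ} (F : ℝ → ℝ → ℝ)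
    (hInt : ∀ t ∈ Icc (0:ℝ) R, IntegrableOn (F t) (Ioi 0))
    (hL1 : ∀ t₀ ∈ Icc (0:ℝ) R, Tendsto (fun t => ∫ a in Ioi (0:ℝ), |F t a - F t₀ a|)
      (nhdsWithin t₀ (Icc 0 R)) (nhds 0))
    (w : ℝ → ℝ → ℝ)
    (hw : ContinuousOn (fun p : ℝ × ℝ => w p.1 p.2) (Icc 0 R ×ˢ Ici (0:ℝ)))
    (C : ℝ) (hCb : ∀ s ∈ Icc (0:ℝ) R, ∀ a ∈ Ici (0:ℝ), |w s a| ≤ C) :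
    ContinuousOn (fun s => ∫ a in Ioi (0:ℝ), w s a * F s a) (Icc 0 R) := by
  have hwslice : ∀ s ∈ Icc (0:ℝ) R, ContinuousOn (fun a => w s a) (Ici 0) := by
    intro s hs
    exact hw.comp (Continuous.continuousOn (continuous_const.prodMk continuous_id))
      (fun a ha => ⟨hs, ha⟩)
  have hwm : ∀ s ∈ Icc (0:ℝ) R,
      AEStronglyMeasurable (fun a => w s a) (volume.restrict (Ioi 0)) :=
    fun s hs => (((hwslice s hs).mono Ioi_subset_Ici_self).aestronglyMeasurable
      measurableSet_Ioi)
  have hbound_ae : ∀ s ∈ Icc (0:ℝ) R,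
      ∀ᵐ a ∂(volume.restrict (Ioi (0:ℝ))), ‖w s a‖ ≤ C := by
    intro s hs
    refine (ae_restrict_iff' measurableSet_Ioi).2 (Eventually.of_forall fun a ha => ?_)
    simpa [Real.norm_eq_abs] using hCb s hs a (mem_Ici.2 (mem_Ioi.1 ha).le)
  have hIntws : ∀ s ∈ Icc (0:ℝ) R, ∀ t ∈ Icc (0:ℝ) R,
      Integrable (fun a => w s a * F t a) (volume.restrict (Ioi 0)) :=
    fun s hs t ht => (hInt t ht).bdd_mul (hwm s hs) (hbound_ae s hs)
  intro t₀ ht₀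
  have key : ∀ s ∈ Icc (0:ℝ) R,
      (∫ a in Ioi (0:ℝ), w s a * F s a)
        = (∫ a in Ioi (0:ℝ), w s a * (F s a - F t₀ a))
          + ∫ a in Ioi (0:ℝ), w s a * F t₀ a := by
    intro s hs
    have hsub' : IntegrableOn (fun a => F s a - F t₀ a) (Ioi 0) :=
      (hInt s hs).sub (hInt t₀ ht₀)
    rw [← integral_add (hsub'.bdd_mul (hwm s hs) (hbound_ae s hs))
      (hIntws s hs t₀ ht₀)]
    congr 1; funext a; ring
  have habs : ∀ s ∈ Icc (0:ℝ) R, ∀ (a : ℝ), a ∈ Ioi (0:ℝ) →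
      ‖w s a * (F s a - F t₀ a)‖ ≤ C * |F s a - F t₀ a| := by
    intro s hs a ha
    rw [norm_mul, Real.norm_eq_abs, Real.norm_eq_abs]
    exact mul_le_mul_of_nonneg_right (hCb s hs a (mem_Ici.2 (mem_Ioi.1 ha).le)) (abs_nonneg _)
  have hA : Tendsto (fun s => ∫ a in Ioi (0:ℝ), w s a * (F s a - F t₀ a))
      (nhdsWithin t₀ (Icc 0 R)) (nhds 0) := by
    have hle : ∀ᶠ s in nhdsWithin t₀ (Icc 0 R),
        ‖∫ a in Ioi (0:ℝ), w s a * (F s a - F t₀ a)‖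
          ≤ C * ∫ a in Ioi (0:ℝ), |F s a - F t₀ a| := by
      filter_upwards [self_mem_nhdsWithin] with s hs
      calc ‖∫ a in Ioi (0:ℝ), w s a * (F s a - F t₀ a)‖
          ≤ ∫ a in Ioi (0:ℝ), ‖w s a * (F s a - F t₀ a)‖ :=
            norm_integral_le_integral_norm _
        _ ≤ ∫ a in Ioi (0:ℝ), C * |F s a - F t₀ a| := by
            have hsub' : IntegrableOn (fun a => F s a - F t₀ a) (Ioi 0) :=
              (hInt s hs).sub (hInt t₀ ht₀)
            refine integral_mono_of_nonneg (Eventually.of_forall fun a => norm_nonneg _)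
              (hsub'.abs.const_mul C) ?_
            exact (ae_restrict_iff' measurableSet_Ioi).2
              (Eventually.of_forall fun a ha => habs s hs a ha)
        _ = C * ∫ a in Ioi (0:ℝ), |F s a - F t₀ a| := integral_const_mul C _
    have h2 : Tendsto (fun s => C * ∫ a in Ioi (0:ℝ), |F s a - F t₀ a|)
        (nhdsWithin t₀ (Icc 0 R)) (nhds 0) := by
      simpa using (hL1 t₀ ht₀).const_mul C
    exact squeeze_zero_norm' hle h2
  have hB : Tendsto (fun s => ∫ a in Ioi (0:ℝ), w s a * F t₀ a)
      (nhdsWithin t₀ (Icc 0 R)) (nhds (∫ a in Ioi (0:ℝ), w t₀ a * F t₀ a)) := by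
    refine tendsto_integral_filter_of_dominated_convergence (fun a => C * |F t₀ a|)
      ?_ ?_ ((hInt t₀ ht₀).abs.const_mul C) ?_
    · filter_upwards [self_mem_nhdsWithin] with s hs
      exact (hwm s hs).mul (hInt t₀ ht₀).aestronglyMeasurable
    · filter_upwards [self_mem_nhdsWithin] with s hs
      refine (ae_restrict_iff' measurableSet_Ioi).2 (Eventually.of_forall fun a ha => ?_)
      rw [norm_mul, Real.norm_eq_abs, Real.norm_eq_abs]
      exact mul_le_mul_of_nonneg_right (hCb s hs a (mem_Ici.2 (mem_Ioi.1 ha).le)) (abs_nonneg _)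
    · refine (ae_restrict_iff' measurableSet_Ioi).2 (Eventually.of_forall fun a ha => ?_)
      have hwc : ContinuousWithinAt (fun s : ℝ => w s a) (Icc 0 R) t₀ :=
        ContinuousWithinAt.comp (f := fun s : ℝ => ((s, a) : ℝ × ℝ))
          (g := fun p : ℝ × ℝ => w p.1 p.2) (s := Icc 0 R) (t := Icc 0 R ×ˢ Ici 0)
          (hw (t₀, a) ⟨ht₀, mem_Ici.2 (mem_Ioi.1 ha).le⟩)
          ((continuous_id.prodMk continuous_const).continuousWithinAt)
          (fun s hs => ⟨hs, mem_Ici.2 (mem_Ioi.1 ha).le⟩)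
      exact hwc.mul tendsto_const_nhds
  have hsum := hA.add hB
  rw [zero_add] at hsum
  unfold ContinuousWithinAt
  exact hsum.congr' (eventuallyEq_of_mem self_mem_nhdsWithin fun s hs => (key s hs).symm)

lemma interval_integrable_of_integrableOn_Icc {c d : ℝ} {g : ℝ → ℝ}
    (h : IntegrableOn g (Icc c d)) {u v : ℝ} (hu : u ∈ Icc c d) (hv : v ∈ Icc c d) :
    IntervalIntegrable g volume u v := by
  rw [intervalIntegrable_iff]
  refine h.mono_set (fun x hx => ?_)
  rcases Set.mem_uIoc.1 hx with h' | h'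
  · exact ⟨hu.1.trans h'.1.le, h'.2.trans hv.2⟩
  · exact ⟨hv.1.trans h'.1.le, h'.2.trans hu.2⟩

lemma bdd_cont_mul_integrable {R : ℝ} {g : ℝ → ℝ} (hg : IntegrableOn g (Ioi 0))
    (w : ℝ → ℝ → ℝ) (hw : ContinuousOn (fun p : ℝ × ℝ => w p.1 p.2) (Icc 0 R ×ˢ Ici (0:ℝ)))
    (C : ℝ) (hCb : ∀ s ∈ Icc (0:ℝ) R, ∀ a ∈ Ici (0:ℝ), |w s a| ≤ C)
    {s : ℝ} (hs : s ∈ Icc (0:ℝ) R) :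
    Integrable (fun a => w s a * g a) (volume.restrict (Ioi 0)) := by
  have hwslice : ContinuousOn (fun a => w s a) (Ici 0) :=
    hw.comp (Continuous.continuousOn (continuous_const.prodMk continuous_id))
      (fun a ha => ⟨hs, ha⟩)
  refine hg.bdd_mul (c := C) ((hwslice.mono Ioi_subset_Ici_self).aestronglyMeasurable
    measurableSet_Ioi) ?_
  refine (ae_restrict_iff' measurableSet_Ioi).2 (Eventually.of_forall fun a ha => ?_)
  simpa [Real.norm_eq_abs] using hCb s hs a (mem_Ici.2 (mem_Ioi.1 ha).le)

/-- **Proposition 1 (concatenation of weak solutions).** If `(f,S)` is a weak solution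
on `[0,T]` with input `D` and initial condition `(f₀,S₀) ∈ X`, and `(fb,Sb)` is a weak
solution on `[0,τ]` with input `s ↦ D(T+s)` and initial condition `(f[T],S(T))`, then
the concatenation `(f̂,Ŝ)` (equal to `(f,S)` on `[0,T]` and to the shifted `(fb,Sb)` on
`(T,T+τ]`) is a weak solution on `[0,T+τ]` with input `D` and initial condition `(f₀,S₀)`. -/
theorem concatenation_of_weak_solutions
    (μ β k q : ℝ → ℝ) (S_in : ℝ) (hmodel : ModelHyp μ β k q S_in)
    (T τ : ℝ) (hT : 0 < T) (hτ : 0 < τ)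
    (D : ℝ → ℝ) (hD : AdmissibleInput D)
    (f : ℝ → ℝ → ℝ) (S : ℝ → ℝ) (f₀ : ℝ → ℝ) (S₀ : ℝ)
    (hX : MemX μ k S_in f₀ S₀)
    (hsol : IsWeakSolution μ β k q S_in D T f S f₀ S₀)
    (fb : ℝ → ℝ → ℝ) (Sb : ℝ → ℝ)
    (hsolb : IsWeakSolution μ β k q S_in (fun s => D (T + s)) τ fb Sb (f T) (S T)) :
    IsWeakSolution μ β k q S_in D (T + τ)
      (fun t a => if t ≤ T then f t a else fb (t - T) a)
      (fun t => if t ≤ T then S t else Sb (t - T)) f₀ S₀ := by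
  obtain ⟨hμc, hμnn, ⟨Cμ, hμb⟩, hμC1, hμ0, hμpos, hβc, hβnn, ⟨Cβ, hβb⟩, hkc, hknn, ⟨Ck, hkb⟩,
    hqc, hqnn, ⟨Cq, hqb⟩, hkpos, hqpos, hSin⟩ := hmodel
  obtain ⟨hDm, hDnn, hDloc⟩ := hD
  obtain ⟨h0, hS0, hmem, hL1, hcont, hScont, hbc, hsub, hweak⟩ := hsol
  obtain ⟨h0b, hS0b, hmemb, hL1b, hcontb, hScontb, hbcb, hsubb, hweakb⟩ := hsolb
  have h0T : (0:ℝ) ≤ T := hT.le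
  have hTR : T ≤ T + τ := le_add_of_nonneg_right hτ.le
  have h0R : (0:ℝ) ≤ T + τ := h0T.trans hTR
  obtain ⟨CD, hCD⟩ := hDloc (T + τ) (lt_of_lt_of_le hT hTR)
  set R := T + τ with hRdef
  set F : ℝ → ℝ → ℝ := fun t a => if t ≤ T then f t a else fb (t - T) a with hFdef
  set Sc : ℝ → ℝ := fun t => if t ≤ T then S t else Sb (t - T) with hScdef
  have hFle : ∀ t a, t ≤ T → F t a = f t a := by
    intro t a h; simp only [hFdef]; rw [if_pos h]
  have hFgt : ∀ t a, ¬ t ≤ T → F t a = fb (t - T) a := by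
    intro t a h; simp only [hFdef]; rw [if_neg h]
  have hSle : ∀ t, t ≤ T → Sc t = S t := by
    intro t h; simp only [hScdef]; rw [if_pos h]
  have hSgt : ∀ t, ¬ t ≤ T → Sc t = Sb (t - T) := by
    intro t h; simp only [hScdef]; rw [if_neg h]
  have hshift : ∀ t : ℝ, t ∈ Icc 0 R → ¬ t ≤ T → t - T ∈ Icc 0 τ := by
    intro t ht hnt
    have h1 := not_le.1 hnt
    have h2 := ht.2
    constructor <;> [linarith; linarith]
  -- membership in X
  have hmemF : ∀ t ∈ Icc 0 R, MemX μ k S_in (F t) (Sc t) := by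
    intro t ht
    by_cases htT : t ≤ T
    · have hF : F t = f t := funext fun a => hFle t a htT
      rw [hF, hSle t htT]; exact hmem t ⟨ht.1, htT⟩
    · have hF : F t = fb (t - T) := funext fun a => hFgt t a htT
      rw [hF, hSgt t htT]; exact hmemb (t - T) (hshift t ht htT)
  have hFint : ∀ t ∈ Icc 0 R, IntegrableOn (F t) (Ioi 0) := fun t ht => (hmemF t ht).2.2.2.1
  have hScmem : ∀ t ∈ Icc 0 R, Sc t ∈ Ioo 0 S_in := fun t ht => (hmemF t ht).2.2.2.2.1
  have hbcF : ∀ t ∈ Icc 0 R, F t 0 = μ (Sc t) * ∫ a in Ioi (0:ℝ), k a * F t a :=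
    fun t ht => (hmemF t ht).2.2.2.2.2
  -- L¹-continuity in time
  have hL1F : ∀ t₀ ∈ Icc 0 R, Tendsto (fun t => ∫ a in Ioi (0:ℝ), |F t a - F t₀ a|)
      (nhdsWithin t₀ (Icc 0 R)) (nhds 0) := by
    intro t₀ ht₀
    have hsplit : Icc (0:ℝ) R = Icc 0 T ∪ Ioc T R := (Icc_union_Ioc_eq_Icc h0T hTR).symm
    rw [hsplit, nhdsWithin_union, tendsto_sup]
    constructor
    · by_cases htT : t₀ ≤ T
      · refine (hL1 t₀ ⟨ht₀.1, htT⟩).congr' ?_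
        filter_upwards [self_mem_nhdsWithin] with t htm
        refine (setIntegral_congr_fun measurableSet_Ioi (fun a _ => ?_)).symm
        rw [hFle t a htm.2, hFle t₀ a htT]
      · rw [nhdsWithin_bot_of_gt Icc_subset_Iic_self (not_le.1 htT)]; exact tendsto_bot
    · by_cases htT : t₀ ≤ T
      · by_cases htT' : t₀ = T
        · rw [htT']
          have hmap : Tendsto (fun t => t - T) (nhdsWithin T (Ioc T R))
              (nhdsWithin 0 (Icc 0 τ)) := by
            have hc : ContinuousWithinAt (fun t : ℝ => t - T) (Ioc T R) T :=
              (continuous_sub_right T).continuousWithinAt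
            have := hc.tendsto_nhdsWithin (fun t htm =>
              hshift t ⟨h0T.trans htm.1.le, htm.2⟩ (not_le.2 htm.1))
            simpa using this
          refine ((hL1b 0 ⟨le_rfl, hτ.le⟩).comp hmap).congr' ?_
          filter_upwards [self_mem_nhdsWithin] with t htm
          have hnt : ¬ t ≤ T := not_le.2 htm.1
          refine (setIntegral_congr_fun measurableSet_Ioi (fun a ha => ?_)).symm
          rw [hFle T a le_rfl, hFgt t a hnt, ← h0b a ha.le]
        · rw [nhdsWithin_bot_of_lt (fun x hx => hx.1.le) (lt_of_le_of_ne htT htT')]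
          exact tendsto_bot
      · have hmem' : t₀ - T ∈ Icc 0 τ := hshift t₀ ht₀ htT
        have hmap : Tendsto (fun t => t - T) (nhdsWithin t₀ (Ioc T R))
            (nhdsWithin (t₀ - T) (Icc 0 τ)) := by
          have hc : ContinuousWithinAt (fun t : ℝ => t - T) (Ioc T R) t₀ :=
            (continuous_sub_right T).continuousWithinAt
          exact hc.tendsto_nhdsWithin (fun t htm =>
            hshift t ⟨h0T.trans htm.1.le, htm.2⟩ (not_le.2 htm.1))
        refine ((hL1b (t₀ - T) hmem').comp hmap).congr' ?_
        filter_upwards [self_mem_nhdsWithin] with t htm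
        refine (setIntegral_congr_fun measurableSet_Ioi (fun a _ => ?_)).symm
        rw [hFgt t a (not_le.2 htm.1), hFgt t₀ a htT]
  -- joint continuity
  have hFmid : ∀ p : ℝ × ℝ, p ∈ Icc T R ×ˢ Ici (0:ℝ) → F p.1 p.2 = fb (p.1 - T) p.2 := by
    intro p hp
    by_cases h : p.1 ≤ T
    · have hpT : p.1 = T := le_antisymm h hp.1.1
      rw [hFle _ _ h, hpT, sub_self, h0b p.2 hp.2]
    · rw [hFgt _ _ h]
  have hcontF : ContinuousOn (fun p : ℝ × ℝ => F p.1 p.2) (Icc 0 R ×ˢ Ici 0) := by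
    have hsplit : Icc (0:ℝ) R ×ˢ Ici (0:ℝ)
        = (Icc 0 T ×ˢ Ici 0) ∪ (Icc T R ×ˢ Ici 0) := by
      rw [← union_prod, Icc_union_Icc_eq_Icc h0T hTR]
    rw [hsplit]
    refine glue_continuousOn (isClosed_Icc.prod isClosed_Ici)
      (isClosed_Icc.prod isClosed_Ici) ?_ ?_
    · exact hcont.congr (fun p hp => hFle p.1 p.2 hp.1.2)
    · have hbase : ContinuousOn (fun p : ℝ × ℝ => fb (p.1 - T) p.2) (Icc T R ×ˢ Ici 0) := by
        refine ContinuousOn.comp (f := fun p : ℝ × ℝ => ((p.1 - T, p.2) : ℝ × ℝ))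
          (g := fun p : ℝ × ℝ => fb p.1 p.2) hcontb ?_ ?_
        · exact Continuous.continuousOn (by fun_prop)
        · intro p hp
          have h1 : (0:ℝ) ≤ p.1 - T := by linarith [hp.1.1]
          have h2 : p.1 - T ≤ τ := by linarith [hp.1.2]
          exact ⟨⟨h1, h2⟩, hp.2⟩
      exact hbase.congr hFmid
  have hScontF : ContinuousOn Sc (Icc 0 R) := by
    rw [← Icc_union_Icc_eq_Icc h0T hTR]
    refine glue_continuousOn isClosed_Icc isClosed_Icc ?_ ?_
    · exact hScont.congr (fun t ht => hSle t ht.2)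
    · have hbase : ContinuousOn (fun t => Sb (t - T)) (Icc T R) := by
        refine hScontb.comp (continuous_sub_right T).continuousOn ?_
        intro t ht
        have h1 : (0:ℝ) ≤ t - T := by linarith [ht.1]
        have h2 : t - T ≤ τ := by linarith [ht.2]
        exact ⟨h1, h2⟩
      refine hbase.congr (fun t ht => ?_)
      by_cases h : t ≤ T
      · have hteq : t = T := le_antisymm h ht.1
        rw [hSle t h, hteq]; beta_reduce; rw [sub_self, hS0b]
      · exact hSgt t h
  -- continuity of auxiliary integrals
  have hJq : ContinuousOn (fun s => ∫ a in Ioi (0:ℝ), q a * F s a) (Icc 0 R) := by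
    refine cont_param_integral F hFint hL1F (fun _ a => q a) ?_ Cq ?_
    · exact hqc.comp continuous_snd.continuousOn (fun p hp => hp.2)
    · intro s _ a ha
      rw [abs_of_nonneg (hqnn a ha)]; exact hqb a ha
  have hJk : ContinuousOn (fun s => ∫ a in Ioi (0:ℝ), k a * F s a) (Icc 0 R) := by
    refine cont_param_integral F hFint hL1F (fun _ a => k a) ?_ Ck ?_
    · exact hkc.comp continuous_snd.continuousOn (fun p hp => hp.2)
    · intro s _ a ha
      rw [abs_of_nonneg (hknn a ha)]; exact hkb a ha
  have hμScont : ContinuousOn (fun s => μ (Sc s)) (Icc 0 R) :=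
    hμc.comp hScontF (fun s hs => le_of_lt (hScmem s hs).1)
  have hDb : ∀ᵐ s ∂volume.restrict (Icc (0:ℝ) R), ‖D s‖ ≤ CD := by
    refine (ae_restrict_iff' measurableSet_Icc).2 (Eventually.of_forall fun s hs => ?_)
    rw [Real.norm_eq_abs, abs_of_nonneg (hDnn s hs.1)]
    exact hCD s hs
  -- the substrate equation
  have hsubF : ∀ t ∈ Icc 0 R, Sc t = S₀ + ∫ s in (0:ℝ)..t,
      (D s * (S_in - Sc s) - μ (Sc s) * ∫ a in Ioi (0:ℝ), q a * F s a) := by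
    have hgint : IntegrableOn (fun s => D s * (S_in - Sc s)
        - μ (Sc s) * ∫ a in Ioi (0:ℝ), q a * F s a) (Icc 0 R) := by
      refine Integrable.sub ?_ ?_
      · refine Integrable.bdd_mul (c := CD) ?_ hDm.aestronglyMeasurable.restrict hDb
        exact (continuousOn_const.sub hScontF).integrableOn_compact isCompact_Icc
      · exact (hμScont.mul hJq).integrableOn_compact isCompact_Icc
    intro t ht
    by_cases htT : t ≤ T
    · rw [hSle t htT, hsub t ⟨ht.1, htT⟩]
      congr 1
      refine intervalIntegral.integral_congr (fun s hs => ?_)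
      rw [uIcc_of_le ht.1] at hs
      have hsT : s ≤ T := hs.2.trans htT
      have hint : (∫ a in Ioi (0:ℝ), q a * f s a) = ∫ a in Ioi (0:ℝ), q a * F s a :=
        setIntegral_congr_fun measurableSet_Ioi (fun a _ => by rw [hFle s a hsT])
      rw [hSle s hsT, hint]
    · have htm : t - T ∈ Icc 0 τ := hshift t ht htT
      have hST : S T = S₀ + ∫ s in (0:ℝ)..T,
          (D s * (S_in - Sc s) - μ (Sc s) * ∫ a in Ioi (0:ℝ), q a * F s a) := by
        rw [hsub T ⟨h0T, le_rfl⟩]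
        congr 1
        refine intervalIntegral.integral_congr (fun s hs => ?_)
        rw [uIcc_of_le h0T] at hs
        have hint : (∫ a in Ioi (0:ℝ), q a * f s a) = ∫ a in Ioi (0:ℝ), q a * F s a :=
          setIntegral_congr_fun measurableSet_Ioi (fun a _ => by rw [hFle s a hs.2])
        rw [hSle s hs.2, hint]
      have hshifteq : (∫ s in (0:ℝ)..(t - T), (D (T + s) * (S_in - Sb s)
          - μ (Sb s) * ∫ a in Ioi (0:ℝ), q a * fb s a))
          = ∫ s in T..t, (D s * (S_in - Sc s)
              - μ (Sc s) * ∫ a in Ioi (0:ℝ), q a * F s a) := by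
        have hcomp := intervalIntegral.integral_comp_add_left (a := (0:ℝ)) (b := t - T)
          (fun s => D s * (S_in - Sc s) - μ (Sc s) * ∫ a in Ioi (0:ℝ), q a * F s a) T
        have h2 : T + (t - T) = t := by ring
        rw [add_zero, h2] at hcomp
        rw [← hcomp]
        refine intervalIntegral.integral_congr (fun s hs => ?_)
        rw [uIcc_of_le (by linarith [htm.1] : (0:ℝ) ≤ t - T)] at hs
        beta_reduce
        by_cases hs0 : T + s ≤ T
        · have hseq : s = 0 := le_antisymm (by linarith) hs.1
          subst hseq
          rw [add_zero]
          have hint : (∫ a in Ioi (0:ℝ), q a * fb 0 a) = ∫ a in Ioi (0:ℝ), q a * F T a :=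
            setIntegral_congr_fun measurableSet_Ioi (fun a ha => by
              rw [hFle T a le_rfl, ← h0b a ha.le])
          rw [hSle T le_rfl, ← hS0b, hint]
        · have hint : (∫ a in Ioi (0:ℝ), q a * fb s a) = ∫ a in Ioi (0:ℝ), q a * F (T+s) a :=
            setIntegral_congr_fun measurableSet_Ioi (fun a _ => by
              rw [hFgt (T+s) a hs0, add_sub_cancel_left])
          rw [hSgt (T+s) hs0, add_sub_cancel_left, hint]
      have hBB := hsubb (t - T) htm
      beta_reduce at hBB
      rw [hSgt t htT, hBB, hST, hshifteq]
      rw [← intervalIntegral.integral_add_adjacent_intervals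
        (interval_integrable_of_integrableOn_Icc hgint ⟨le_rfl, h0R⟩ ⟨h0T, hTR⟩)
        (interval_integrable_of_integrableOn_Icc hgint ⟨h0T, hTR⟩ ht)]
      ring
  -- the weak formulation
  have hweakF : ∀ φ φt φa, TestFun R φ φt φa → ∀ t ∈ Icc 0 R,
      (∫ a in Ioi (0:ℝ), f₀ a * φ 0 a) + (∫ s in (0:ℝ)..t, F s 0 * φ s 0)
        = (∫ a in Ioi (0:ℝ), F t a * φ t a)
          + ∫ s in (0:ℝ)..t, ∫ a in Ioi (0:ℝ),
              ((β a + D s) * φ s a - φa s a - φt s a) * F s a := by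
    intro φ φt φa hφ t ht
    obtain ⟨hφc, hφtc, hφac, hφd, ⟨C1, hC1⟩, ⟨C2, hC2⟩⟩ := id hφ
    have hφT : TestFun T φ φt φa := by
      have hsubprod : Icc (0:ℝ) T ×ˢ Ici (0:ℝ) ⊆ Icc 0 R ×ˢ Ici 0 :=
        prod_mono (Icc_subset_Icc_right hTR) subset_rfl
      exact ⟨hφc.mono hsubprod, hφtc.mono hsubprod, hφac.mono hsubprod,
        fun s hs a ha => hφd s ⟨hs.1, hs.2.trans hTR⟩ a ha,
        ⟨C1, fun s hs a ha => hC1 s ⟨hs.1, hs.2.trans hTR⟩ a ha⟩,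
        ⟨C2, fun s hs a ha => hC2 s ⟨hs.1, hs.2.trans hTR⟩ a ha⟩⟩
    have hmemshift : ∀ s ∈ Icc (0:ℝ) τ, T + s ∈ Icc (0:ℝ) R := by
      intro s hs
      exact ⟨by linarith [hs.1], by linarith [hs.2]⟩
    have hψ : TestFun τ (fun s a => φ (T + s) a) (fun s a => φt (T + s) a)
        (fun s a => φa (T + s) a) := by
      have hcs : Continuous (fun p : ℝ × ℝ => ((T + p.1, p.2) : ℝ × ℝ)) := by fun_prop
      have hms : MapsTo (fun p : ℝ × ℝ => ((T + p.1, p.2) : ℝ × ℝ))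
          (Icc 0 τ ×ˢ Ici 0) (Icc 0 R ×ˢ Ici 0) := by
        intro p hp
        exact ⟨hmemshift p.1 hp.1, hp.2⟩
      refine ⟨?_, ?_, ?_, ?_, ⟨C1, fun s hs a ha => hC1 (T+s) (hmemshift s hs) a ha⟩,
        ⟨C2, fun s hs a ha => hC2 (T+s) (hmemshift s hs) a ha⟩⟩
      · exact ContinuousOn.comp (g := fun p : ℝ × ℝ => φ p.1 p.2) hφc hcs.continuousOn hms
      · exact ContinuousOn.comp (g := fun p : ℝ × ℝ => φt p.1 p.2) hφtc hcs.continuousOn hms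
      · exact ContinuousOn.comp (g := fun p : ℝ × ℝ => φa p.1 p.2) hφac hcs.continuousOn hms
      · intro s hs a ha
        constructor
        · have h := (hφd (T+s) (hmemshift s hs) a ha).1
          have hshiftd : HasDerivAt (fun u : ℝ => T + u) 1 s := (hasDerivAt_id s).const_add T
          have hcomp := h.comp s hshiftd
          exact h.comp_const_add T s
        · exact (hφd (T+s) (hmemshift s hs) a ha).2
    have hβφc : ContinuousOn (fun p : ℝ × ℝ => β p.2 * φ p.1 p.2) (Icc 0 R ×ˢ Ici 0) :=
      (hβc.comp continuous_snd.continuousOn (fun p hp => hp.2)).mul hφc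
    have hβφb : ∀ s ∈ Icc (0:ℝ) R, ∀ a ∈ Ici (0:ℝ), |β a * φ s a| ≤ Cβ * C1 := by
      intro s hs a ha
      rw [abs_mul]
      exact mul_le_mul (by rw [abs_of_nonneg (hβnn a ha)]; exact hβb a ha)
        (hC1 s hs a ha) (abs_nonneg _) ((hβnn a ha).trans (hβb a ha))
    have hw3c : ContinuousOn (fun p : ℝ × ℝ => φa p.1 p.2 + φt p.1 p.2)
        (Icc 0 R ×ˢ Ici 0) := hφac.add hφtc
    have hA1 : ContinuousOn (fun s => ∫ a in Ioi (0:ℝ), (β a * φ s a) * F s a) (Icc 0 R) :=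
      cont_param_integral F hFint hL1F (fun s a => β a * φ s a) hβφc (Cβ * C1) hβφb
    have hA2 : ContinuousOn (fun s => ∫ a in Ioi (0:ℝ), φ s a * F s a) (Icc 0 R) :=
      cont_param_integral F hFint hL1F φ hφc C1 hC1
    have hA3 : ContinuousOn (fun s => ∫ a in Ioi (0:ℝ), (φa s a + φt s a) * F s a)
        (Icc 0 R) :=
      cont_param_integral F hFint hL1F (fun s a => φa s a + φt s a) hw3c C2 hC2
    have hGsplit : ∀ s ∈ Icc (0:ℝ) R,
        (∫ a in Ioi (0:ℝ), ((β a + D s) * φ s a - φa s a - φt s a) * F s a)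
          = (∫ a in Ioi (0:ℝ), (β a * φ s a) * F s a)
            + D s * (∫ a in Ioi (0:ℝ), φ s a * F s a)
            - ∫ a in Ioi (0:ℝ), (φa s a + φt s a) * F s a := by
      intro s hs
      have hi1 : Integrable (fun a => (β a * φ s a) * F s a) (volume.restrict (Ioi 0)) :=
        bdd_cont_mul_integrable (hFint s hs) _ hβφc _ hβφb hs
      have hi2' : Integrable (fun a => φ s a * F s a) (volume.restrict (Ioi 0)) :=
        bdd_cont_mul_integrable (hFint s hs) _ hφc _ hC1 hs
      have hi2 : Integrable (fun a => D s * (φ s a * F s a)) (volume.restrict (Ioi 0)) :=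
        hi2'.const_mul _
      have hi3 : Integrable (fun a => (φa s a + φt s a) * F s a) (volume.restrict (Ioi 0)) :=
        bdd_cont_mul_integrable (hFint s hs) _ hw3c _ hC2 hs
      have hi12 : Integrable (fun a => (β a * φ s a) * F s a + D s * (φ s a * F s a))
          (volume.restrict (Ioi 0)) := hi1.add hi2
      have hring : (fun a => ((β a + D s) * φ s a - φa s a - φt s a) * F s a)
          = fun a => ((β a * φ s a) * F s a + D s * (φ s a * F s a))
            - (φa s a + φt s a) * F s a := by
        funext a; ring
      rw [hring, integral_sub hi12 hi3, integral_add hi1 hi2, integral_const_mul]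
    have hGint : IntegrableOn (fun s => ∫ a in Ioi (0:ℝ),
        ((β a + D s) * φ s a - φa s a - φt s a) * F s a) (Icc 0 R) := by
      have hcombo : IntegrableOn (fun s => (∫ a in Ioi (0:ℝ), (β a * φ s a) * F s a)
          + D s * (∫ a in Ioi (0:ℝ), φ s a * F s a)
          - ∫ a in Ioi (0:ℝ), (φa s a + φt s a) * F s a) (Icc 0 R) := by
        refine Integrable.sub (Integrable.add ?_ ?_) ?_
        · exact hA1.integrableOn_compact isCompact_Icc
        · exact Integrable.bdd_mul (c := CD) (hA2.integrableOn_compact isCompact_Icc)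
            hDm.aestronglyMeasurable.restrict hDb
        · exact hA3.integrableOn_compact isCompact_Icc
      exact hcombo.congr_fun (fun s hs => (hGsplit s hs).symm) measurableSet_Icc
    have hFzc : ContinuousOn (fun s => F s 0 * φ s 0) (Icc 0 R) := by
      have h1 : ContinuousOn (fun s => F s 0) (Icc 0 R) :=
        (hμScont.mul hJk).congr (fun s hs => hbcF s hs)
      have h2 : ContinuousOn (fun s => φ s 0) (Icc 0 R) :=
        ContinuousOn.comp (f := fun s : ℝ => ((s, 0) : ℝ × ℝ))
          (g := fun p : ℝ × ℝ => φ p.1 p.2) hφc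
          (Continuous.continuousOn (by fun_prop))
          (fun s hs => show ((s, 0) : ℝ × ℝ) ∈ Icc 0 R ×ˢ Ici 0 from ⟨hs, by simp⟩)
      exact h1.mul h2
    have hbint : IntegrableOn (fun s => F s 0 * φ s 0) (Icc 0 R) :=
      hFzc.integrableOn_compact isCompact_Icc
    by_cases htT : t ≤ T
    · have hTf := hweak φ φt φa hφT t ⟨ht.1, htT⟩
      have e1 : (∫ s in (0:ℝ)..t, F s 0 * φ s 0) = ∫ s in (0:ℝ)..t, f s 0 * φ s 0 :=
        intervalIntegral.integral_congr (fun s hs => by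
          rw [uIcc_of_le ht.1] at hs
          rw [hFle s 0 (hs.2.trans htT)])
      have e2 : (∫ a in Ioi (0:ℝ), F t a * φ t a) = ∫ a in Ioi (0:ℝ), f t a * φ t a :=
        setIntegral_congr_fun measurableSet_Ioi (fun a _ => by rw [hFle t a htT])
      have e3 : (∫ s in (0:ℝ)..t, ∫ a in Ioi (0:ℝ),
            ((β a + D s) * φ s a - φa s a - φt s a) * F s a)
          = ∫ s in (0:ℝ)..t, ∫ a in Ioi (0:ℝ),
            ((β a + D s) * φ s a - φa s a - φt s a) * f s a :=
        intervalIntegral.integral_congr (fun s hs => by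
          rw [uIcc_of_le ht.1] at hs
          exact setIntegral_congr_fun measurableSet_Ioi
            (fun a _ => by rw [hFle s a (hs.2.trans htT)]))
      rw [e1, e2, e3]
      exact hTf
    · have htm : t - T ∈ Icc (0:ℝ) τ := hshift t ht htT
      have ht0 : (0:ℝ) ≤ t - T := htm.1
      have htu : T + (t - T) = t := by ring
      have hA := hweak φ φt φa hφT T ⟨h0T, le_rfl⟩
      have hB := hweakb _ _ _ hψ (t - T) htm
      beta_reduce at hB
      rw [htu, add_zero] at hB
      have e_split : (∫ s in (0:ℝ)..t, F s 0 * φ s 0)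
          = (∫ s in (0:ℝ)..T, F s 0 * φ s 0) + ∫ s in T..t, F s 0 * φ s 0 :=
        (intervalIntegral.integral_add_adjacent_intervals
          (interval_integrable_of_integrableOn_Icc hbint ⟨le_rfl, h0R⟩ ⟨h0T, hTR⟩)
          (interval_integrable_of_integrableOn_Icc hbint ⟨h0T, hTR⟩ ht)).symm
      have e_b1 : (∫ s in (0:ℝ)..T, F s 0 * φ s 0) = ∫ s in (0:ℝ)..T, f s 0 * φ s 0 :=
        intervalIntegral.integral_congr (fun s hs => by
          rw [uIcc_of_le h0T] at hs
          rw [hFle s 0 hs.2])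
      have e_b2 : (∫ s in T..t, F s 0 * φ s 0)
          = ∫ s in (0:ℝ)..(t - T), fb s 0 * φ (T + s) 0 := by
        have hcompb := intervalIntegral.integral_comp_add_left (a := (0:ℝ)) (b := t - T)
          (fun s => F s 0 * φ s 0) T
        rw [add_zero, htu] at hcompb
        rw [← hcompb]
        refine intervalIntegral.integral_congr (fun s hs => ?_)
        rw [uIcc_of_le ht0] at hs
        beta_reduce
        by_cases hs0 : T + s ≤ T
        · have hseq : s = 0 := le_antisymm (by linarith) hs.1
          subst hseq
          rw [add_zero, hFle T 0 le_rfl, ← h0b 0 le_rfl]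
        · rw [hFgt (T+s) 0 hs0, add_sub_cancel_left]
      have e_out : (∫ a in Ioi (0:ℝ), F t a * φ t a)
          = ∫ a in Ioi (0:ℝ), fb (t - T) a * φ t a :=
        setIntegral_congr_fun measurableSet_Ioi (fun a _ => by rw [hFgt t a htT])
      have e_gsplit : (∫ s in (0:ℝ)..t, ∫ a in Ioi (0:ℝ),
            ((β a + D s) * φ s a - φa s a - φt s a) * F s a)
          = (∫ s in (0:ℝ)..T, ∫ a in Ioi (0:ℝ),
              ((β a + D s) * φ s a - φa s a - φt s a) * F s a)
            + ∫ s in T..t, ∫ a in Ioi (0:ℝ),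
              ((β a + D s) * φ s a - φa s a - φt s a) * F s a :=
        (intervalIntegral.integral_add_adjacent_intervals
          (interval_integrable_of_integrableOn_Icc hGint ⟨le_rfl, h0R⟩ ⟨h0T, hTR⟩)
          (interval_integrable_of_integrableOn_Icc hGint ⟨h0T, hTR⟩ ht)).symm
      have e_g1 : (∫ s in (0:ℝ)..T, ∫ a in Ioi (0:ℝ),
            ((β a + D s) * φ s a - φa s a - φt s a) * F s a)
          = ∫ s in (0:ℝ)..T, ∫ a in Ioi (0:ℝ),
            ((β a + D s) * φ s a - φa s a - φt s a) * f s a :=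
        intervalIntegral.integral_congr (fun s hs => by
          rw [uIcc_of_le h0T] at hs
          exact setIntegral_congr_fun measurableSet_Ioi
            (fun a _ => by rw [hFle s a hs.2]))
      have e_g2 : (∫ s in T..t, ∫ a in Ioi (0:ℝ),
            ((β a + D s) * φ s a - φa s a - φt s a) * F s a)
          = ∫ s in (0:ℝ)..(t - T), ∫ a in Ioi (0:ℝ),
            ((β a + D (T + s)) * φ (T + s) a - φa (T + s) a - φt (T + s) a) * fb s a := by
        have hcompg := intervalIntegral.integral_comp_add_left (a := (0:ℝ)) (b := t - T)
          (fun s => ∫ a in Ioi (0:ℝ), ((β a + D s) * φ s a - φa s a - φt s a) * F s a) T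
        rw [add_zero, htu] at hcompg
        rw [← hcompg]
        refine intervalIntegral.integral_congr (fun s hs => ?_)
        rw [uIcc_of_le ht0] at hs
        beta_reduce
        by_cases hs0 : T + s ≤ T
        · have hseq : s = 0 := le_antisymm (by linarith) hs.1
          subst hseq
          rw [add_zero]
          exact setIntegral_congr_fun measurableSet_Ioi (fun a ha => by
            rw [hFle T a le_rfl, ← h0b a ha.le])
        · exact setIntegral_congr_fun measurableSet_Ioi (fun a _ => by
            rw [hFgt (T+s) a hs0, add_sub_cancel_left])
      linarith [hA, hB, e_split, e_b1, e_b2, e_out, e_gsplit, e_g1, e_g2]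
  exact ⟨fun a ha => by rw [hFle 0 a h0T]; exact h0 a ha,
    by rw [hSle 0 h0T]; exact hS0,
    hmemF, hL1F, hcontF, hScontF, hbcF, hsubF, hweakF⟩
end
end

section
/- (Semigroup property of the solution map.) Let t, τ ≥ 0 with t > 0, D ∈ L^∞_loc([0,∞);[0,∞)) and (f₀,S₀) ∈ X. If (f,S) is a weak solution on [0, τ+t] with input D and initial condition (f₀,S₀), and (f̄,S̄) is a weak solution on [0,t] with input s ↦ D(τ+s) and initial condition (f[τ], S(τ)), then f̄[s] = f[τ+s] and S̄(s) = S(τ+s) for all s ∈ [0,t]. -/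
open MeasureTheory Set Filter

noncomputable section

open Topology


lemma testFun_shift {T : ℝ} (ψ ψd : ℝ → ℝ) (hψ : Continuous ψ) (hψd : Continuous ψd)
    (hder : ∀ x, HasDerivAt ψ (ψd x) x) (hbd : ∀ x, |ψ x| ≤ 1) :
    TestFun T (fun u a => ψ (a + (T - u))) (fun u a => -ψd (a + (T - u)))
      (fun u a => ψd (a + (T - u))) := by
  refine ⟨by fun_prop, by fun_prop, by fun_prop, ?_, ⟨1, fun s _ a _ => hbd _⟩,
    ⟨1, fun s _ a _ => by simp⟩⟩
  intro s _ a _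
  constructor
  · have h1 : HasDerivAt (fun u : ℝ => a + (T - u)) (-1) s := by
      simpa using (((hasDerivAt_id s).const_sub T).const_add a)
    have := (hder (a + (T - s))).comp s h1
    simpa [mul_comm, Function.comp_def] using this
  · have h1 : HasDerivAt (fun x : ℝ => x + (T - s)) 1 a := (hasDerivAt_id a).add_const (T - s)
    have := (hder (a + (T - s))).comp a h1
    simpa [Function.comp_def] using this

lemma gronwall_zero {h : ℝ → ℝ} {t K : ℝ} (ht : 0 ≤ t) (hK : 0 ≤ K)
    (hcont : ContinuousOn h (Icc 0 t))
    (hnn : ∀ s ∈ Icc 0 t, 0 ≤ h s)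
    (hineq : ∀ s ∈ Icc 0 t, h s ≤ K * ∫ r in (0:ℝ)..s, h r) :
    ∀ s ∈ Icc 0 t, h s = 0 := by
  obtain ⟨M, hM⟩ := (isCompact_Icc (a := (0:ℝ)) (b := t)).exists_bound_of_continuousOn hcont
  have hint : ∀ s ∈ Icc (0:ℝ) t, IntervalIntegrable h volume 0 s := by
    intro s hs
    apply ContinuousOn.intervalIntegrable
    rw [uIcc_of_le hs.1]
    exact hcont.mono (Icc_subset_Icc le_rfl hs.2)
  have key : ∀ n : ℕ, ∀ s ∈ Icc 0 t, h s ≤ M * (K * s) ^ n / n.factorial := by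
    intro n
    induction n with
    | zero =>
      intro s hs
      simpa using (le_abs_self (h s)).trans (hM s hs)
    | succ n ih =>
      intro s hs
      have h1 : h s ≤ K * ∫ r in (0:ℝ)..s, h r := hineq s hs
      have h2 : (∫ r in (0:ℝ)..s, h r) ≤ ∫ r in (0:ℝ)..s, M * (K * r) ^ n / n.factorial := by
        apply intervalIntegral.integral_mono_on hs.1 (hint s hs)
        · apply ContinuousOn.intervalIntegrable
          fun_prop
        · intro x hx
          exact ih x ⟨hx.1, hx.2.trans hs.2⟩
      have h3 : (∫ r in (0:ℝ)..s, M * (K * r) ^ n / n.factorial)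
          = M * K ^ n / n.factorial * ∫ r in (0:ℝ)..s, r ^ n := by
        rw [← intervalIntegral.integral_const_mul]
        congr 1 with r
        ring
      rw [h3, integral_pow] at h2
      have h4 : K * (M * K ^ n / n.factorial * ((s ^ (n + 1) - 0 ^ (n + 1)) / (n + 1)))
          = M * (K * s) ^ (n + 1) / (n + 1).factorial := by
        rw [Nat.factorial_succ]
        push_cast
        field_simp
        ring
      calc h s ≤ K * ∫ r in (0:ℝ)..s, h r := h1
        _ ≤ K * (M * K ^ n / n.factorial * ((s ^ (n + 1) - 0 ^ (n + 1)) / (n + 1))) := by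
            apply mul_le_mul_of_nonneg_left h2 hK
        _ = M * (K * s) ^ (n + 1) / (n + 1).factorial := h4
  intro s hs
  refine le_antisymm ?_ (hnn s hs)
  have hlim : Tendsto (fun n : ℕ => M * (K * s) ^ n / n.factorial) atTop (𝓝 0) := by
    have := FloorSemiring.tendsto_pow_div_factorial_atTop (K * s)
    have h2 := this.const_mul M
    simpa [mul_div_assoc] using h2
  exact ge_of_tendsto hlim (Filter.Eventually.of_forall fun n => key n s hs)


lemma l1_duality {W : ℝ → ℝ} {c A : ℝ}
    (hW : ContinuousOn W (Ici 0)) (hWi : IntegrableOn W (Ioi 0)) (hc : 0 ≤ c)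
    (hA : ∀ ψ ψd : ℝ → ℝ, Continuous ψ → Continuous ψd →
      (∀ x, HasDerivAt ψ (ψd x) x) → (∀ x, |ψ x| ≤ 1) →
      (∫ a in Ioi (0:ℝ), W a * ψ (a + c)) ≤ A) :
    (∫ a in Ioi (0:ℝ), |W a|) ≤ A := by
  -- the extension of W shifted by c
  set V : ℝ → ℝ := fun x => W (max (x - c) 0) with hV
  have hVcont : Continuous V :=
    hW.comp_continuous (by fun_prop) (fun x => mem_Ici.mpr (le_max_right _ _))
  have hVa : ∀ a ∈ Ioi (0:ℝ), V (a + c) = W a := by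
    intro a ha
    simp only [hV, add_sub_cancel_right]
    rw [max_eq_left (le_of_lt ha)]
  set G : ℝ → ℝ := fun x => ∫ r in (0:ℝ)..x, V r with hGdef
  have hG : ∀ x, HasDerivAt G (V x) x := by
    intro x
    exact intervalIntegral.integral_hasDerivAt_right
      (hVcont.intervalIntegrable _ _)
      (hVcont.stronglyMeasurable.stronglyMeasurableAtFilter)
      hVcont.continuousAt
  have hGdiff : Differentiable ℝ G := fun x => (hG x).differentiableAt
  have hGcont : Continuous G := hGdiff.continuous
  -- difference quotients
  set Φ : ℝ → ℝ → ℝ := fun δ x => (G (x + δ) - G x) / δ with hΦdef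
  have hΦder : ∀ δ : ℝ, ∀ x, HasDerivAt (Φ δ) ((V (x + δ) - V x) / δ) x := by
    intro δ x
    have h1 : HasDerivAt (fun y => G (y + δ)) (V (x + δ)) x := by
      have := (hG (x + δ)).comp x ((hasDerivAt_id x).add_const δ)
      simpa [Function.comp_def] using this
    exact ((h1.sub (hG x)).div_const δ)
  have hΦcont : ∀ δ : ℝ, Continuous (Φ δ) := by
    intro δ; fun_prop
  have hΦtendsto : ∀ x : ℝ, Tendsto (fun n : ℕ => Φ (1/(n+1)) x) atTop (𝓝 (V x)) := by
    intro x
    have hslope := hasDerivAt_iff_tendsto_slope.mp (hG x)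
    have hseq : Tendsto (fun n : ℕ => x + 1/(n+1:ℝ)) atTop (𝓝[≠] x) := by
      apply tendsto_nhdsWithin_of_tendsto_nhds_of_eventually_within
      · have := tendsto_one_div_add_atTop_nhds_zero_nat (𝕜 := ℝ)
        have h2 := this.const_add x
        simpa using h2
      · filter_upwards with n
        have : (0:ℝ) < 1/(n+1) := by positivity
        simp only [mem_compl_iff, mem_singleton_iff]
        have hp : (0:ℝ) < 1/(n+1) := by positivity
        intro hcontr
        nlinarith
    have := hslope.comp hseq
    have heq : ∀ n : ℕ, slope G x (x + 1/(n+1:ℝ)) = Φ (1/(n+1)) x := by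
      intro n
      rw [slope_def_field, add_sub_cancel_left]
    refine Tendsto.congr (fun n => heq n) this
  -- smooth saturation
  have hgbound : ∀ ε y : ℝ, 0 < ε → |y / Real.sqrt (y^2 + ε^2)| ≤ 1 := by
    intro ε y hε
    rw [abs_div, abs_of_nonneg (Real.sqrt_nonneg _), div_le_one (by positivity)]
    rw [← Real.sqrt_sq_eq_abs]
    apply Real.sqrt_le_sqrt; nlinarith
  have hgder : ∀ ε : ℝ, 0 < ε → ∀ y : ℝ, HasDerivAt (fun y => y / Real.sqrt (y^2 + ε^2))
      ((1 * Real.sqrt (y^2 + ε^2) - y * (y / Real.sqrt (y^2 + ε^2))) / Real.sqrt (y^2 + ε^2) ^ 2) y := by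
    intro ε hε y
    have hpos : (0:ℝ) < y^2 + ε^2 := by positivity
    have hsqrtpos : 0 < Real.sqrt (y^2 + ε^2) := Real.sqrt_pos.mpr hpos
    have hsq : HasDerivAt (fun y : ℝ => Real.sqrt (y^2 + ε^2)) (y / Real.sqrt (y^2 + ε^2)) y := by
      have h1 : HasDerivAt (fun y : ℝ => y^2 + ε^2) (2*y) y := by
        simpa using ((hasDerivAt_pow 2 y).add_const (ε^2))
      have h2 := (Real.hasDerivAt_sqrt (ne_of_gt hpos)).comp y h1
      rw [div_mul_eq_mul_div, one_mul, mul_div_mul_left _ _ two_ne_zero] at h2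
      exact h2
    exact (hasDerivAt_id y).div hsq (ne_of_gt hsqrtpos)
  have hgcont : ∀ ε : ℝ, 0 < ε → Continuous (fun y : ℝ => y / Real.sqrt (y^2 + ε^2)) := by
    intro ε hε
    apply Continuous.div continuous_id
    · fun_prop
    · intro y
      exact ne_of_gt (Real.sqrt_pos.mpr (by positivity))
  have hgdcont : ∀ ε : ℝ, 0 < ε → Continuous (fun y : ℝ =>
      (1 * Real.sqrt (y^2 + ε^2) - y * (y / Real.sqrt (y^2 + ε^2))) / Real.sqrt (y^2 + ε^2) ^ 2) := by
    intro ε hε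
    have h0 : ∀ y : ℝ, Real.sqrt (y^2 + ε^2) ≠ 0 :=
      fun y => ne_of_gt (Real.sqrt_pos.mpr (by positivity))
    apply Continuous.div
    · apply Continuous.sub
      · fun_prop
      · exact continuous_id.mul ((hgcont ε hε))
    · fun_prop
    · intro y; exact pow_ne_zero _ (h0 y)
  -- Step 1
  have claim1 : ∀ ε : ℝ, 0 < ε →
      (∫ a in Ioi (0:ℝ), W a * (W a / Real.sqrt ((W a)^2 + ε^2))) ≤ A := by
    intro ε hε
    set g : ℝ → ℝ := fun y => y / Real.sqrt (y^2 + ε^2) with hg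
    have hits : ∀ n : ℕ, (∫ a in Ioi (0:ℝ), W a * g (Φ (1/(n+1)) (a + c))) ≤ A := by
      intro n
      apply hA (fun x => g (Φ (1/(n+1)) x))
        (fun x => ((1 * Real.sqrt ((Φ (1/(n+1)) x)^2 + ε^2) -
          (Φ (1/(n+1)) x) * ((Φ (1/(n+1)) x) / Real.sqrt ((Φ (1/(n+1)) x)^2 + ε^2))) /
          Real.sqrt ((Φ (1/(n+1)) x)^2 + ε^2) ^ 2) * ((V (x + 1/(n+1)) - V x) / (1/(n+1))))
      · exact (hgcont ε hε).comp (hΦcont _)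
      · exact ((hgdcont ε hε).comp (hΦcont _)).mul (by fun_prop)
      · intro x
        exact (hgder ε hε _).comp x (hΦder _ x)
      · intro x
        exact hgbound ε _ hε
    have htend : Tendsto (fun n : ℕ => ∫ a in Ioi (0:ℝ), W a * g (Φ (1/(n+1)) (a + c)))
        atTop (𝓝 (∫ a in Ioi (0:ℝ), W a * g (W a))) := by
      apply tendsto_integral_of_dominated_convergence (fun a => |W a|)
      · intro n
        exact hWi.aestronglyMeasurable.mul
          (((hgcont ε hε).comp (hΦcont _)).comp (by fun_prop)).aestronglyMeasurable
      · exact hWi.abs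
      · intro n
        filter_upwards with a
        rw [Real.norm_eq_abs, abs_mul]
        calc |W a| * |g (Φ (1/(n+1)) (a+c))| ≤ |W a| * 1 :=
          mul_le_mul_of_nonneg_left (hgbound ε _ hε) (abs_nonneg _)
        _ = |W a| := mul_one _
      · rw [ae_restrict_iff' measurableSet_Ioi]
        filter_upwards with a ha
        have h1 : Tendsto (fun n : ℕ => Φ (1/(n+1)) (a + c)) atTop (𝓝 (W a)) := by
          have := hΦtendsto (a + c)
          rwa [hVa a ha] at this
        exact (Tendsto.const_mul (W a) (((hgcont ε hε).tendsto (W a)).comp h1))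
    exact le_of_tendsto htend (Eventually.of_forall hits)
  -- Step 2
  have htend2 : Tendsto (fun n : ℕ => ∫ a in Ioi (0:ℝ),
      W a * (W a / Real.sqrt ((W a)^2 + (1/(n+1:ℝ))^2))) atTop (𝓝 (∫ a in Ioi (0:ℝ), |W a|)) := by
    apply tendsto_integral_of_dominated_convergence (fun a => |W a|)
    · intro n
      have hε : (0:ℝ) < 1/(n+1) := by positivity
      exact hWi.aestronglyMeasurable.mul
        (((hgcont _ hε)).comp_aestronglyMeasurable hWi.aestronglyMeasurable)
    · exact hWi.abs
    · intro n
      have hε : (0:ℝ) < 1/(n+1) := by positivity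
      filter_upwards with a
      rw [Real.norm_eq_abs, abs_mul]
      calc |W a| * |W a / Real.sqrt ((W a)^2 + (1/(n+1:ℝ))^2)| ≤ |W a| * 1 :=
        mul_le_mul_of_nonneg_left (hgbound _ _ hε) (abs_nonneg _)
      _ = |W a| := mul_one _
    · filter_upwards with a
      by_cases h0 : W a = 0
      · simp [h0]
      · set y := W a with hy
        have hcontat : ContinuousAt (fun e : ℝ => y * (y / Real.sqrt (y^2 + e^2))) 0 := by
          apply ContinuousAt.mul continuousAt_const
          apply ContinuousAt.div continuousAt_const
          · fun_prop
          · apply ne_of_gt; apply Real.sqrt_pos.mpr; positivity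
        have hseq : Tendsto (fun n : ℕ => (1/(n+1:ℝ))) atTop (𝓝 0) := by
          exact tendsto_one_div_add_atTop_nhds_zero_nat
        have := (hcontat.tendsto).comp hseq
        simp only [Function.comp_def] at this
        convert this using 2
        rw [show (0:ℝ)^2 = 0 by ring, add_zero, Real.sqrt_sq_eq_abs]
        rcases lt_or_gt_of_ne h0 with h | h
        · rw [abs_of_neg h]; field_simp
        · rw [abs_of_pos h]; field_simp
  exact le_of_tendsto htend2 (Eventually.of_forall fun n => claim1 _ (by positivity))

lemma l1_diff_bound {u v : ℝ → ℝ} (hu : IntegrableOn u (Ioi (0:ℝ)))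
    (hv : IntegrableOn v (Ioi (0:ℝ))) :
    abs ((∫ a in Ioi (0:ℝ), |u a|) - ∫ a in Ioi (0:ℝ), |v a|) ≤ ∫ a in Ioi (0:ℝ), |u a - v a| := by
  rw [← integral_sub hu.abs hv.abs]
  have h1 : abs (∫ a in Ioi (0:ℝ), (|u a| - |v a|)) ≤ ∫ a in Ioi (0:ℝ), abs (|u a| - |v a|) := by
    simpa [Real.norm_eq_abs] using
      norm_integral_le_integral_norm (μ := volume.restrict (Ioi 0)) (f := fun a => |u a| - |v a|)
  refine h1.trans (integral_mono (hu.abs.sub hv.abs).abs (hu.sub hv).abs fun a => ?_)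
  exact abs_abs_sub_abs_le_abs_sub _ _

lemma zero_of_ae_zero {w : ℝ → ℝ} (hw : ContinuousOn w (Ici (0:ℝ)))
    (h : ∀ᵐ a ∂(volume.restrict (Ioi (0:ℝ))), w a = 0) : ∀ a, 0 ≤ a → w a = 0 := by
  have hpos : ∀ a : ℝ, 0 < a → w a = 0 := by
    intro a ha
    by_contra hne
    have hca : ContinuousAt w a :=
      hw.continuousAt (Ici_mem_nhds ha)
    have h2 : ∀ᶠ x in 𝓝 a, w x ≠ 0 := hca.eventually_ne hne
    obtain ⟨ε, hε, hball⟩ := Metric.eventually_nhds_iff_ball.mp h2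
    set r := min ε a with hr
    have hr0 : 0 < r := lt_min hε ha
    have hsub : Ioo (a - r) (a + r) ⊆ {x | w x ≠ 0} := by
      intro x hx
      apply hball
      rw [Metric.mem_ball, Real.dist_eq, abs_lt]
      constructor
      · linarith [hx.1, min_le_left ε a]
      · linarith [hx.2, min_le_left ε a]
    have hsubIoi : Ioo (a - r) (a + r) ⊆ Ioi 0 := by
      intro x hx
      have := min_le_right ε a
      simp only [mem_Ioi]
      linarith [hx.1]
    have hnull : volume.restrict (Ioi (0:ℝ)) {x | ¬ w x = 0} = 0 := ae_iff.mp h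
    have h3 : volume.restrict (Ioi (0:ℝ)) (Ioo (a - r) (a + r)) = 0 :=
      measure_mono_null hsub hnull
    rw [Measure.restrict_apply' measurableSet_Ioi, inter_eq_left.mpr hsubIoi] at h3
    rw [Real.volume_Ioo] at h3
    simp only [ENNReal.ofReal_eq_zero] at h3
    linarith
  intro a ha
  rcases eq_or_lt_of_le ha with rfl | hlt
  · have h1 : Tendsto w (𝓝[>] (0:ℝ)) (𝓝 (w 0)) :=
      ((hw 0 Set.self_mem_Ici).mono Ioi_subset_Ici_self).tendsto
    have h2 : Tendsto w (𝓝[>] (0:ℝ)) (𝓝 0) := by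
      apply Tendsto.congr' _ tendsto_const_nhds
      filter_upwards [self_mem_nhdsWithin] with x hx
      exact (hpos x hx).symm
    exact tendsto_nhds_unique h1 h2
  · exact hpos a hlt

lemma contOn_l1 {T : ℝ} {F : ℝ → ℝ → ℝ}
    (hint : ∀ r ∈ Icc (0:ℝ) T, IntegrableOn (F r) (Ioi (0:ℝ)))
    (hmod : ∀ t₀ ∈ Icc (0:ℝ) T, Tendsto (fun r => ∫ a in Ioi (0:ℝ), |F r a - F t₀ a|)
      (𝓝[Icc (0:ℝ) T] t₀) (𝓝 0)) :
    ContinuousOn (fun r => ∫ a in Ioi (0:ℝ), |F r a|) (Icc (0:ℝ) T) := by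
  intro t₀ ht₀
  have hsq : ∀ r ∈ Icc (0:ℝ) T,
      ‖(∫ a in Ioi (0:ℝ), |F r a|) - ∫ a in Ioi (0:ℝ), |F t₀ a|‖
        ≤ ∫ a in Ioi (0:ℝ), |F r a - F t₀ a| := by
    intro r hr
    rw [Real.norm_eq_abs]
    exact l1_diff_bound (hint r hr) (hint t₀ ht₀)
  have h1 : Tendsto (fun r => (∫ a in Ioi (0:ℝ), |F r a|) - ∫ a in Ioi (0:ℝ), |F t₀ a|)
      (𝓝[Icc (0:ℝ) T] t₀) (𝓝 0) := by
    apply squeeze_zero_norm' _ (hmod t₀ ht₀)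
    filter_upwards [self_mem_nhdsWithin] with r hr
    exact hsq r hr
  have := h1.add_const (∫ a in Ioi (0:ℝ), |F t₀ a|)
  simpa [ContinuousWithinAt] using this


lemma integrableOn_mul_bdd {g b : ℝ → ℝ} {s : Set ℝ} (hs : MeasurableSet s)
    (hg : IntegrableOn g s) (hb : AEStronglyMeasurable b (volume.restrict s))
    {C : ℝ} (hbd : ∀ a ∈ s, |b a| ≤ C) :
    IntegrableOn (fun a => b a * g a) s := by
  apply Integrable.mono' (hg.abs.const_mul C) (hb.mul hg.aestronglyMeasurable)
  rw [ae_restrict_iff' hs]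
  apply ae_of_all
  intro a ha
  simp only [Pi.mul_apply, Real.norm_eq_abs, abs_mul]
  exact mul_le_mul_of_nonneg_right (hbd a ha) (abs_nonneg _)

lemma abs_setIntegral_mul_le {g b : ℝ → ℝ} (hg : IntegrableOn g (Ioi (0:ℝ)))
    (hb : AEStronglyMeasurable b (volume.restrict (Ioi (0:ℝ))))
    {C : ℝ} (hC : 0 ≤ C) (hbd : ∀ a ∈ Ioi (0:ℝ), |b a| ≤ C) :
    abs (∫ a in Ioi (0:ℝ), b a * g a) ≤ C * ∫ a in Ioi (0:ℝ), |g a| := by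
  have hi := integrableOn_mul_bdd measurableSet_Ioi hg hb hbd
  calc abs (∫ a in Ioi (0:ℝ), b a * g a) ≤ ∫ a in Ioi (0:ℝ), |b a| * |g a| := by
        simpa [Real.norm_eq_abs] using
          norm_integral_le_integral_norm (μ := volume.restrict (Ioi 0)) (f := fun a => b a * g a)
    _ ≤ ∫ a in Ioi (0:ℝ), C * |g a| := by
        apply setIntegral_mono_on ?_ (hg.abs.const_mul C) measurableSet_Ioi
        · intro a ha
          exact mul_le_mul_of_nonneg_right (hbd a ha) (abs_nonneg _)
        · simpa [abs_mul, IntegrableOn] using hi.abs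
    _ = C * ∫ a in Ioi (0:ℝ), |g a| := integral_const_mul _ _

lemma lipschitz_of_contDiffOn {μ : ℝ → ℝ} {S_in : ℝ} (hS : 0 < S_in)
    (hμC1 : ContDiffOn ℝ 1 μ (Ici 0)) :
    ∃ L : ℝ, 0 ≤ L ∧ ∀ x ∈ Icc (0:ℝ) S_in, ∀ y ∈ Icc (0:ℝ) S_in, |μ x - μ y| ≤ L * |x - y| := by
  have hd : DifferentiableOn ℝ μ (Ici 0) := hμC1.differentiableOn one_ne_zero
  have hdc : ContinuousOn (derivWithin μ (Ici 0)) (Icc (0:ℝ) S_in) :=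
    (hμC1.continuousOn_derivWithin (uniqueDiffOn_Ici 0) le_rfl).mono Icc_subset_Ici_self
  obtain ⟨L, hL⟩ := (isCompact_Icc (a := (0:ℝ)) (b := S_in)).exists_bound_of_continuousOn hdc
  have hd' : DifferentiableOn ℝ μ (Icc (0:ℝ) S_in) := hd.mono Icc_subset_Ici_self
  have hL0 : 0 ≤ L := le_trans (norm_nonneg _) (hL 0 (left_mem_Icc.mpr hS.le))
  refine ⟨L, hL0, fun x hx y hy => ?_⟩
  have hbd : ∀ z ∈ Icc (0:ℝ) S_in, ‖derivWithin μ (Icc (0:ℝ) S_in) z‖ ≤ L := by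
    intro z hz
    rw [derivWithin_subset Icc_subset_Ici_self ((uniqueDiffOn_Icc hS) z hz)
      (hd z (Icc_subset_Ici_self hz))]
    exact hL z hz
  have := Convex.norm_image_sub_le_of_norm_derivWithin_le hd' hbd (convex_Icc _ _) hy hx
  simpa [Real.norm_eq_abs] using this

lemma intervalIntegrable_inner {T : ℝ} (hT : 0 ≤ T) {F : ℝ → ℝ → ℝ}
    (hFc : ContinuousOn (fun p : ℝ × ℝ => F p.1 p.2) (Icc 0 T ×ˢ Ici (0:ℝ)))
    {G : ℝ → ℝ} (hG : Measurable G)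
    {ψ : ℝ → ℝ} (hψ : Continuous ψ) (hψb : ∀ x, |ψ x| ≤ 1)
    {β : ℝ → ℝ} (hβ : ContinuousOn β (Ici 0))
    {MF C1 C2 : ℝ} (hC1 : 0 ≤ C1) (hC2 : 0 ≤ C2)
    (hFi : ∀ r ∈ Icc (0:ℝ) T, IntegrableOn (F r) (Ioi (0:ℝ)))
    (hMF : ∀ r ∈ Icc (0:ℝ) T, (∫ a in Ioi (0:ℝ), |F r a|) ≤ MF)
    (hBb : ∀ a ∈ Ici (0:ℝ), |β a| ≤ C1) (hGb : ∀ r ∈ Icc (0:ℝ) T, |G r| ≤ C2)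
    {c : ℝ → ℝ} (hc : Continuous c)
    {u v : ℝ} (hu : u ∈ Icc (0:ℝ) T) (hv : v ∈ Icc (0:ℝ) T) :
    IntervalIntegrable (fun r => ∫ a in Ioi (0:ℝ), (β a + G r) * ψ (a + c r) * F r a)
      volume u v := by
  have hsub : Set.uIoc u v ⊆ Icc 0 T := uIoc_subset_uIcc.trans (uIcc_subset_Icc hu hv)
  rw [intervalIntegrable_iff]
  have hβe : Continuous (fun a : ℝ => β (max a 0)) :=
    hβ.comp_continuous (by fun_prop) (fun a => mem_Ici.mpr (le_max_right _ _))
  have hFe : Continuous (fun p : ℝ × ℝ => F (max 0 (min p.1 T)) (max p.2 0)) := by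
    exact hFc.comp_continuous
      (show Continuous fun p : ℝ × ℝ => ((max 0 (min p.1 T), max p.2 0) : ℝ × ℝ) by fun_prop)
      (fun p => mem_prod.mpr ⟨⟨le_max_left _ _, max_le hT (min_le_right _ _)⟩,
        mem_Ici.mpr (le_max_right _ _)⟩)
  have hHm : StronglyMeasurable (fun p : ℝ × ℝ =>
      (β (max p.2 0) + G p.1) * ψ (p.2 + c p.1) * F (max 0 (min p.1 T)) (max p.2 0)) := by
    apply Measurable.stronglyMeasurable
    exact (((hβe.measurable.comp measurable_snd).add (hG.comp measurable_fst)).mul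
      (hψ.measurable.comp (measurable_snd.add (hc.measurable.comp measurable_fst)))).mul
      hFe.measurable
  have hIm : StronglyMeasurable (fun r => ∫ a in Ioi (0:ℝ),
      (β (max a 0) + G r) * ψ (a + c r) * F (max 0 (min r T)) (max a 0)) :=
    hHm.integral_prod_right'
  have hbAESM : ∀ r : ℝ, AEStronglyMeasurable (fun a => (β a + G r) * ψ (a + c r))
      (volume.restrict (Ioi (0:ℝ))) := by
    intro r
    apply AEStronglyMeasurable.mul
    · exact AEStronglyMeasurable.add
        ((hβ.mono Ioi_subset_Ici_self).aestronglyMeasurable measurableSet_Ioi)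
        aestronglyMeasurable_const
    · exact (hψ.comp (by fun_prop)).aestronglyMeasurable
  have hbbd : ∀ r ∈ Icc (0:ℝ) T, ∀ a ∈ Ioi (0:ℝ),
      |(β a + G r) * ψ (a + c r)| ≤ C1 + C2 := by
    intro r hr a ha
    rw [abs_mul]
    calc |β a + G r| * |ψ (a + c r)| ≤ |β a + G r| * 1 :=
          mul_le_mul_of_nonneg_left (hψb _) (abs_nonneg _)
      _ = |β a + G r| := mul_one _
      _ ≤ |β a| + |G r| := abs_add_le _ _
      _ ≤ C1 + C2 := add_le_add (hBb a (mem_Ici.mpr (le_of_lt ha))) (hGb r hr)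
  have hagree : ∀ r ∈ Icc (0:ℝ) T,
      (∫ a in Ioi (0:ℝ), (β (max a 0) + G r) * ψ (a + c r) * F (max 0 (min r T)) (max a 0))
        = ∫ a in Ioi (0:ℝ), (β a + G r) * ψ (a + c r) * F r a := by
    intro r hr
    apply setIntegral_congr_fun measurableSet_Ioi
    intro a ha
    have h1 : max a 0 = a := max_eq_left (le_of_lt ha)
    have h2 : max 0 (min r T) = r := by rw [min_eq_left hr.2, max_eq_right hr.1]
    simp only [h1, h2]
  have hbound : ∀ r ∈ Icc (0:ℝ) T,
      abs (∫ a in Ioi (0:ℝ), (β a + G r) * ψ (a + c r) * F r a) ≤ (C1 + C2) * MF := by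
    intro r hr
    calc abs (∫ a in Ioi (0:ℝ), (β a + G r) * ψ (a + c r) * F r a)
        ≤ (C1 + C2) * ∫ a in Ioi (0:ℝ), |F r a| :=
          abs_setIntegral_mul_le (hFi r hr) (hbAESM r) (by positivity) (hbbd r hr)
      _ ≤ (C1 + C2) * MF := mul_le_mul_of_nonneg_left (hMF r hr) (by positivity)
  apply Integrable.mono' (g := fun _ => (C1 + C2) * MF)
    (integrableOn_const (lt_of_le_of_lt (measure_mono hsub) measure_Icc_lt_top).ne)
  · apply hIm.aestronglyMeasurable.congr
    rw [Filter.EventuallyEq, ae_restrict_iff' measurableSet_uIoc]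
    exact ae_of_all _ (fun r hr => hagree r (hsub hr))
  · rw [ae_restrict_iff' measurableSet_uIoc]
    refine ae_of_all _ (fun r hr => ?_)
    rw [Real.norm_eq_abs]
    exact hbound r (hsub hr)

lemma intervalIntegrable_D_mul {T : ℝ} (hT : 0 ≤ T) {D S : ℝ → ℝ} (hD : Measurable D)
    (hS : ContinuousOn S (Icc 0 T)) {CD BS S_in : ℝ}
    (hCD : ∀ r ∈ Icc (0:ℝ) T, |D r| ≤ CD) (hBS : ∀ r ∈ Icc (0:ℝ) T, |S_in - S r| ≤ BS)
    {u v : ℝ} (hu : u ∈ Icc (0:ℝ) T) (hv : v ∈ Icc (0:ℝ) T) :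
    IntervalIntegrable (fun r => D r * (S_in - S r)) volume u v := by
  have hsub : Set.uIoc u v ⊆ Icc 0 T := uIoc_subset_uIcc.trans (uIcc_subset_Icc hu hv)
  rw [intervalIntegrable_iff]
  have hSe : Continuous (fun r : ℝ => S_in - S (max 0 (min r T))) := by
    apply continuous_const.sub
    exact hS.comp_continuous (by fun_prop)
      (fun r => ⟨le_max_left _ _, max_le hT (min_le_right _ _)⟩)
  have hm : StronglyMeasurable (fun r => D r * (S_in - S (max 0 (min r T)))) :=
    (hD.mul hSe.measurable).stronglyMeasurable
  apply Integrable.mono' (g := fun _ => CD * BS)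
    (integrableOn_const (lt_of_le_of_lt (measure_mono hsub) measure_Icc_lt_top).ne)
  · apply hm.aestronglyMeasurable.congr
    rw [Filter.EventuallyEq, ae_restrict_iff' measurableSet_uIoc]
    apply ae_of_all
    intro r hr
    have h2 : max 0 (min r T) = r := by
      rw [min_eq_left (hsub hr).2, max_eq_right (hsub hr).1]
    rw [h2]
  · rw [ae_restrict_iff' measurableSet_uIoc]
    apply ae_of_all
    intro r hr
    rw [Real.norm_eq_abs, abs_mul]
    exact mul_le_mul (hCD r (hsub hr)) (hBS r (hsub hr)) (abs_nonneg _)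
      ((abs_nonneg _).trans (hCD r (hsub hr)))

lemma abs_sub_le' (p q : ℝ) : |p - q| ≤ |p| + |q| := by
  rw [sub_eq_add_neg]
  exact (abs_add_le p (-q)).trans_eq (by rw [abs_neg])

set_option maxHeartbeats 1000000 in
/-- **Semigroup property of the solution map.** If `(f,S)` is a weak solution on
`[0,τ+t]` with input `D` and initial condition `(f₀,S₀) ∈ X`, and `(fb,Sb)` is a weak
solution on `[0,t]` with input `s ↦ D(τ+s)` and initial condition `(f[τ],S(τ))`, then
`fb[s] = f[τ+s]` and `Sb(s) = S(τ+s)` for all `s ∈ [0,t]`. -/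
theorem semigroup_property
    (μ β k q : ℝ → ℝ) (S_in : ℝ) (hmodel : ModelHyp μ β k q S_in)
    (t τ : ℝ) (ht : 0 < t) (hτ : 0 ≤ τ)
    (D : ℝ → ℝ) (hD : AdmissibleInput D)
    (f₀ : ℝ → ℝ) (S₀ : ℝ) (hX : MemX μ k S_in f₀ S₀)
    (f : ℝ → ℝ → ℝ) (S : ℝ → ℝ)
    (hsol : IsWeakSolution μ β k q S_in D (τ + t) f S f₀ S₀)
    (fb : ℝ → ℝ → ℝ) (Sb : ℝ → ℝ)
    (hsolb : IsWeakSolution μ β k q S_in (fun s => D (τ + s)) t fb Sb (f τ) (S τ)) :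
    ∀ s ∈ Icc 0 t, (∀ a, 0 ≤ a → fb s a = f (τ + s) a) ∧ Sb s = S (τ + s) := by
  obtain ⟨hμc, hμnn, ⟨Cμ0, hCμ0⟩, hμC1, hμ0, hμpos, hβc, hβnn, ⟨Cβ0, hCβ0⟩, hkc, hknn,
    ⟨Ck0, hCk0⟩, hqc, hqnn, ⟨Cq0, hCq0⟩, -, -, hSin⟩ := hmodel
  obtain ⟨hDmeas, hDnn, hDloc⟩ := hD
  obtain ⟨hinit, hS0, hmemX, hL1, hjc, hScont, hbc, hSeq, hweak⟩ := hsol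
  obtain ⟨hinitb, hSb0, hmemXb, hL1b, hjcb, hScontb, hbcb, hSeqb, hweakb⟩ := hsolb
  have hT0 : (0:ℝ) ≤ τ + t := by linarith
  obtain ⟨CD0, hCD0⟩ := hDloc (τ + t) (by linarith)
  set CD := max CD0 0 with hCDdef
  have hCDnn : 0 ≤ CD := le_max_right _ _
  have hCD : ∀ r ∈ Icc (0:ℝ) (τ + t), |D r| ≤ CD := by
    intro r hr
    rw [abs_of_nonneg (hDnn r hr.1)]
    exact le_trans (hCD0 r hr) (le_max_left _ _)
  set Cβ := max Cβ0 0 with hCβdef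
  have hCβnn : 0 ≤ Cβ := le_max_right _ _
  have hCβ : ∀ a ∈ Ici (0:ℝ), |β a| ≤ Cβ := fun a ha => by
    rw [abs_of_nonneg (hβnn a ha)]; exact le_trans (hCβ0 a ha) (le_max_left _ _)
  set Ck := max Ck0 0 with hCkdef
  have hCknn : 0 ≤ Ck := le_max_right _ _
  have hCk : ∀ a ∈ Ici (0:ℝ), |k a| ≤ Ck := fun a ha => by
    rw [abs_of_nonneg (hknn a ha)]; exact le_trans (hCk0 a ha) (le_max_left _ _)
  set Cq := max Cq0 0 with hCqdef
  have hCqnn : 0 ≤ Cq := le_max_right _ _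
  have hCq : ∀ a ∈ Ici (0:ℝ), |q a| ≤ Cq := fun a ha => by
    rw [abs_of_nonneg (hqnn a ha)]; exact le_trans (hCq0 a ha) (le_max_left _ _)
  set Cμ := max Cμ0 0 with hCμdef
  have hCμnn : 0 ≤ Cμ := le_max_right _ _
  have hCμ : ∀ x ∈ Ici (0:ℝ), |μ x| ≤ Cμ := fun x hx => by
    rw [abs_of_nonneg (hμnn x hx)]; exact le_trans (hCμ0 x hx) (le_max_left _ _)
  obtain ⟨L, hL0, hLip⟩ := lipschitz_of_contDiffOn hSin hμC1
  -- memberships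
  have hmem : ∀ s ∈ Icc (0:ℝ) t, τ + s ∈ Icc (0:ℝ) (τ + t) :=
    fun s hs => ⟨by linarith [hs.1], by linarith [hs.2]⟩
  have hτmem : τ ∈ Icc (0:ℝ) (τ + t) := ⟨hτ, by linarith⟩
  have hCDb : ∀ r ∈ Icc (0:ℝ) t, |D (τ + r)| ≤ CD := fun r hr => hCD _ (hmem r hr)
  have htnn : 0 ≤ t := ht.le
  -- integrability and bounds
  have hfi : ∀ r ∈ Icc (0:ℝ) (τ + t), IntegrableOn (f r) (Ioi 0) volume :=
    fun r hr => (hmemX r hr).2.2.2.1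
  have hfbi : ∀ r ∈ Icc (0:ℝ) t, IntegrableOn (fb r) (Ioi 0) volume :=
    fun r hr => (hmemXb r hr).2.2.2.1
  have hfc : ∀ r ∈ Icc (0:ℝ) (τ + t), ContinuousOn (f r) (Ici 0) := fun r hr => (hmemX r hr).1
  have hfbc : ∀ r ∈ Icc (0:ℝ) t, ContinuousOn (fb r) (Ici 0) := fun r hr => (hmemXb r hr).1
  have hSmem : ∀ r ∈ Icc (0:ℝ) (τ + t), S r ∈ Icc (0:ℝ) S_in :=
    fun r hr => Ioo_subset_Icc_self (hmemX r hr).2.2.2.2.1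
  have hSbmem : ∀ r ∈ Icc (0:ℝ) t, Sb r ∈ Icc (0:ℝ) S_in :=
    fun r hr => Ioo_subset_Icc_self (hmemXb r hr).2.2.2.2.1
  have hnfc : ContinuousOn (fun r => ∫ a in Ioi (0:ℝ), |f r a|) (Icc 0 (τ + t)) :=
    contOn_l1 hfi hL1
  have hnfbc : ContinuousOn (fun r => ∫ a in Ioi (0:ℝ), |fb r a|) (Icc 0 t) :=
    contOn_l1 hfbi hL1b
  obtain ⟨M1, hM1⟩ := isCompact_Icc.exists_bound_of_continuousOn hnfc
  obtain ⟨M2, hM2⟩ := isCompact_Icc.exists_bound_of_continuousOn hnfbc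
  set M := max M1 M2 with hMdef
  have hMf : ∀ r ∈ Icc (0:ℝ) (τ + t), (∫ a in Ioi (0:ℝ), |f r a|) ≤ M :=
    fun r hr => le_trans (le_trans (le_abs_self _) (hM1 r hr)) (le_max_left _ _)
  have hMfb : ∀ r ∈ Icc (0:ℝ) t, (∫ a in Ioi (0:ℝ), |fb r a|) ≤ M :=
    fun r hr => le_trans (le_trans (le_abs_self _) (hM2 r hr)) (le_max_right _ _)
  have hM0 : 0 ≤ M :=
    le_trans (integral_nonneg (fun a => abs_nonneg _)) (hMf 0 ⟨le_rfl, hT0⟩)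
  -- AESM facts
  have hkAESM : AEStronglyMeasurable k (volume.restrict (Ioi (0:ℝ))) :=
    (hkc.mono Ioi_subset_Ici_self).aestronglyMeasurable measurableSet_Ioi
  have hqAESM : AEStronglyMeasurable q (volume.restrict (Ioi (0:ℝ))) :=
    (hqc.mono Ioi_subset_Ici_self).aestronglyMeasurable measurableSet_Ioi
  have hβAESM : AEStronglyMeasurable β (volume.restrict (Ioi (0:ℝ))) :=
    (hβc.mono Ioi_subset_Ici_self).aestronglyMeasurable measurableSet_Ioi
  -- the difference and its L¹ norm
  set N : ℝ → ℝ := fun s => ∫ a in Ioi (0:ℝ), |f (τ + s) a - fb s a| with hNdef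
  set dS : ℝ → ℝ := fun s => S (τ + s) - Sb s with hdSdef
  have hwi : ∀ s ∈ Icc (0:ℝ) t, IntegrableOn (fun a => f (τ + s) a - fb s a) (Ioi 0) volume :=
    fun s hs => ((hfi _ (hmem s hs)).sub (hfbi s hs))
  have hNnn : ∀ s ∈ Icc (0:ℝ) t, 0 ≤ N s := fun s _ => integral_nonneg (fun a => abs_nonneg _)
  have hNc : ContinuousOn N (Icc 0 t) := by
    apply contOn_l1 (T := t) (F := fun s a => f (τ + s) a - fb s a) hwi
    intro t₀ ht₀
    beta_reduce
    have hmap : Tendsto (fun s => τ + s) (𝓝[Icc (0:ℝ) t] t₀) (𝓝[Icc (0:ℝ) (τ + t)] (τ + t₀)) := by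
      apply tendsto_nhdsWithin_of_tendsto_nhds_of_eventually_within
      · exact ((continuous_const.add continuous_id).tendsto t₀).mono_left nhdsWithin_le_nhds
      · filter_upwards [self_mem_nhdsWithin] with s hs using hmem s hs
    have h1 : Tendsto (fun s => ∫ a in Ioi (0:ℝ), |f (τ + s) a - f (τ + t₀) a|)
        (𝓝[Icc (0:ℝ) t] t₀) (𝓝 0) := (hL1 (τ + t₀) (hmem t₀ ht₀)).comp hmap
    have h2 := hL1b t₀ ht₀
    apply squeeze_zero'
    · filter_upwards [self_mem_nhdsWithin] with s _
      exact integral_nonneg fun a => abs_nonneg _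
    · filter_upwards [self_mem_nhdsWithin] with s hs
      calc (∫ a in Ioi (0:ℝ), |f (τ + s) a - fb s a - (f (τ + t₀) a - fb t₀ a)|)
          ≤ ∫ a in Ioi (0:ℝ), (|f (τ + s) a - f (τ + t₀) a| + |fb s a - fb t₀ a|) := by
            apply setIntegral_mono_on ((hwi s hs).sub (hwi t₀ ht₀)).abs
              ((((hfi _ (hmem s hs)).sub (hfi _ (hmem t₀ ht₀))).abs.add
                ((hfbi s hs).sub (hfbi t₀ ht₀)).abs)) measurableSet_Ioi
            intro a _
            simp only [Pi.sub_apply]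
            have heq : f (τ + s) a - fb s a - (f (τ + t₀) a - fb t₀ a)
                = (f (τ + s) a - f (τ + t₀) a) - (fb s a - fb t₀ a) := by ring
            rw [heq, sub_eq_add_neg]
            refine (abs_add_le _ _).trans ?_
            simp [abs_neg, abs_sub_comm]
        _ = (∫ a in Ioi (0:ℝ), |f (τ + s) a - f (τ + t₀) a|)
            + ∫ a in Ioi (0:ℝ), |fb s a - fb t₀ a| :=
            integral_add ((hfi _ (hmem s hs)).sub (hfi _ (hmem t₀ ht₀))).abs
              ((hfbi s hs).sub (hfbi t₀ ht₀)).abs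
    · simpa using h1.add h2
  have hdSc : ContinuousOn dS (Icc 0 t) := by
    have h1 : ContinuousOn (fun s => S (τ + s)) (Icc 0 t) :=
      hScont.comp (by fun_prop) hmem
    exact h1.sub hScontb
  -- boundary trace continuity
  have hfb0c : ContinuousOn (fun r => f r 0) (Icc (0:ℝ) (τ + t)) :=
    hjc.comp ((by fun_prop : Continuous fun r : ℝ => ((r, (0:ℝ)) : ℝ × ℝ)).continuousOn)
      (fun r hr => mem_prod.mpr ⟨hr, mem_Ici.mpr le_rfl⟩)
  have hfbb0c : ContinuousOn (fun r => fb r 0) (Icc (0:ℝ) t) :=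
    hjcb.comp ((by fun_prop : Continuous fun r : ℝ => ((r, (0:ℝ)) : ℝ × ℝ)).continuousOn)
      (fun r hr => mem_prod.mpr ⟨hr, mem_Ici.mpr le_rfl⟩)
  have hbdiffc : ContinuousOn (fun r => f (τ + r) 0 - fb r 0) (Icc (0:ℝ) t) :=
    (hfb0c.comp ((by fun_prop : Continuous fun r : ℝ => τ + r).continuousOn) hmem).sub hfbb0c
  -- constants
  set KB := Cμ * Ck + L * (Ck * M) with hKBdef
  set KC := CD + Cμ * Cq + L * (Cq * M) with hKCdef
  have hKBnn : 0 ≤ KB := by positivity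
  have hKCnn : 0 ≤ KC := by positivity
  -- boundary difference bound
  have keyB : ∀ r ∈ Icc (0:ℝ) t, |f (τ + r) 0 - fb r 0| ≤ KB * (N r + |dS r|) := by
    intro r hr
    have hrT := hmem r hr
    rw [hbc (τ + r) hrT, hbcb r hr]
    have hint1 : IntegrableOn (fun a => k a * f (τ + r) a) (Ioi (0:ℝ)) volume :=
      integrableOn_mul_bdd measurableSet_Ioi (hfi _ hrT) hkAESM (fun a ha => hCk a (mem_Ici.mpr (le_of_lt ha)))
    have hint2 : IntegrableOn (fun a => k a * fb r a) (Ioi (0:ℝ)) volume :=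
      integrableOn_mul_bdd measurableSet_Ioi (hfbi r hr) hkAESM (fun a ha => hCk a (mem_Ici.mpr (le_of_lt ha)))
    have hsub : (∫ a in Ioi (0:ℝ), k a * f (τ + r) a) - (∫ a in Ioi (0:ℝ), k a * fb r a)
        = ∫ a in Ioi (0:ℝ), k a * (f (τ + r) a - fb r a) := by
      rw [← integral_sub hint1 hint2]
      congr 1; funext a; ring
    have hb1 : abs (∫ a in Ioi (0:ℝ), k a * (f (τ + r) a - fb r a)) ≤ Ck * N r := by
      rw [hNdef]
      exact abs_setIntegral_mul_le (hwi r hr) hkAESM hCknn (fun a ha => hCk a (mem_Ici.mpr (le_of_lt ha)))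
    have hb2 : abs (∫ a in Ioi (0:ℝ), k a * fb r a) ≤ Ck * M :=
      (abs_setIntegral_mul_le (hfbi r hr) hkAESM hCknn (fun a ha => hCk a (mem_Ici.mpr (le_of_lt ha)))).trans
        (mul_le_mul_of_nonneg_left (hMfb r hr) hCknn)
    have hμ1 : |μ (S (τ + r))| ≤ Cμ := hCμ _ (hSmem _ hrT).1
    have hμd : |μ (S (τ + r)) - μ (Sb r)| ≤ L * |dS r| := by
      have := hLip _ (hSmem _ hrT) _ (hSbmem r hr)
      simpa [hdSdef] using this
    have hrw : μ (S (τ + r)) * (∫ a in Ioi (0:ℝ), k a * f (τ + r) a)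
        - μ (Sb r) * (∫ a in Ioi (0:ℝ), k a * fb r a)
        = μ (S (τ + r)) * ((∫ a in Ioi (0:ℝ), k a * f (τ + r) a)
            - ∫ a in Ioi (0:ℝ), k a * fb r a)
          + (μ (S (τ + r)) - μ (Sb r)) * ∫ a in Ioi (0:ℝ), k a * fb r a := by ring
    rw [hrw, hsub]
    have htri := abs_add_le (μ (S (τ + r)) * ∫ a in Ioi (0:ℝ), k a * (f (τ + r) a - fb r a))
      ((μ (S (τ + r)) - μ (Sb r)) * ∫ a in Ioi (0:ℝ), k a * fb r a)
    refine htri.trans ?_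
    rw [abs_mul, abs_mul]
    have ht1 : |μ (S (τ + r))| * abs (∫ a in Ioi (0:ℝ), k a * (f (τ + r) a - fb r a))
        ≤ Cμ * (Ck * N r) :=
      mul_le_mul hμ1 hb1 (abs_nonneg _) hCμnn
    have ht2 : |μ (S (τ + r)) - μ (Sb r)| * abs (∫ a in Ioi (0:ℝ), k a * fb r a)
        ≤ (L * |dS r|) * (Ck * M) :=
      mul_le_mul hμd hb2 (abs_nonneg _) (by positivity)
    have hNr := hNnn r hr
    have hdSr : 0 ≤ |dS r| := abs_nonneg _
    rw [hKBdef]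
    have hexp : (Cμ * Ck + L * (Ck * M)) * (N r + |dS r|)
        = Cμ * (Ck * N r) + (L * |dS r|) * (Ck * M)
          + (Cμ * Ck * |dS r| + L * (Ck * M) * N r) := by ring
    have hp1 : 0 ≤ Cμ * Ck * |dS r| := by positivity
    have hp2 : 0 ≤ L * (Ck * M) * N r :=
      mul_nonneg (mul_nonneg hL0 (mul_nonneg hCknn hM0)) hNr
    linarith [ht1, ht2, hexp, hp1, hp2]
  -- facts for keyA
  have hjcτ : ContinuousOn (fun p : ℝ × ℝ => f (τ + p.1) p.2) (Icc (0:ℝ) t ×ˢ Ici (0:ℝ)) :=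
    hjc.comp ((by fun_prop : Continuous fun p : ℝ × ℝ => ((τ + p.1, p.2) : ℝ × ℝ)).continuousOn)
      (fun p hp => mem_prod.mpr ⟨hmem _ hp.1, hp.2⟩)
  have hfiτ : ∀ r ∈ Icc (0:ℝ) t, IntegrableOn (fun a => f (τ + r) a) (Ioi (0:ℝ)) volume :=
    fun r hr => hfi _ (hmem r hr)
  have hMfτ : ∀ r ∈ Icc (0:ℝ) t, (∫ a in Ioi (0:ℝ), |f (τ + r) a|) ≤ M :=
    fun r hr => hMf _ (hmem r hr)
  have hDτmeas : Measurable (fun r => D (τ + r)) := hDmeas.comp (by fun_prop)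
  have hMw : ∀ r ∈ Icc (0:ℝ) t, (∫ a in Ioi (0:ℝ), |f (τ + r) a - fb r a|) ≤ M + M := by
    intro r hr
    calc (∫ a in Ioi (0:ℝ), |f (τ + r) a - fb r a|)
        ≤ ∫ a in Ioi (0:ℝ), (|f (τ + r) a| + |fb r a|) :=
          setIntegral_mono_on (hwi r hr).abs
            ((hfi _ (hmem r hr)).abs.add (hfbi r hr).abs) measurableSet_Ioi
            (fun a _ => abs_sub_le' _ _)
      _ = (∫ a in Ioi (0:ℝ), |f (τ + r) a|) + ∫ a in Ioi (0:ℝ), |fb r a| :=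
          integral_add (hfi _ (hmem r hr)).abs (hfbi r hr).abs
      _ ≤ M + M := add_le_add (hMf _ (hmem r hr)) (hMfb r hr)
  -- main L¹ estimate via duality
  have keyA : ∀ s ∈ Icc (0:ℝ) t, N s ≤ (∫ r in (0:ℝ)..s, |f (τ + r) 0 - fb r 0|)
      + (Cβ + CD) * ∫ r in (0:ℝ)..s, N r := by
    intro s hs
    have hsτ := hmem s hs
    have hzmem : (0:ℝ) ∈ Icc (0:ℝ) (τ + t) := ⟨le_rfl, hT0⟩
    have hzmemt : (0:ℝ) ∈ Icc (0:ℝ) t := ⟨le_rfl, htnn⟩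
    have hc : (0:ℝ) ≤ t - s := by linarith [hs.2]
    simp only [hNdef]
    beta_reduce
    apply l1_duality (W := fun a => f (τ + s) a - fb s a) (c := t - s)
      ((hfc _ hsτ).sub (hfbc s hs)) (hwi s hs) hc
    intro ψ ψd hψ hψd hder hbd
    beta_reduce
    have E1 := hweak _ _ _ (testFun_shift (T := τ + t) ψ ψd hψ hψd hder hbd) (τ + s) hsτ
    have E2 := hweak _ _ _ (testFun_shift (T := τ + t) ψ ψd hψ hψd hder hbd) τ hτmem
    have E3 := hweakb _ _ _ (testFun_shift (T := t) ψ ψd hψ hψd hder hbd) s hs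
    beta_reduce at E1 E2 E3
    have hsimp1 : (fun r => ∫ a in Ioi (0:ℝ),
        ((β a + D r) * ψ (a + (τ + t - r)) - ψd (a + (τ + t - r))
          - -ψd (a + (τ + t - r))) * f r a)
        = fun r => ∫ a in Ioi (0:ℝ), (β a + D r) * ψ (a + (τ + t - r)) * f r a := by
      funext r; congr 1; funext a; ring
    have hsimp2 : (fun r => ∫ a in Ioi (0:ℝ),
        ((β a + D (τ + r)) * ψ (a + (t - r)) - ψd (a + (t - r))
          - -ψd (a + (t - r))) * fb r a)
        = fun r => ∫ a in Ioi (0:ℝ), (β a + D (τ + r)) * ψ (a + (t - r)) * fb r a := by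
      funext r; congr 1; funext a; ring
    rw [hsimp1] at E1 E2
    rw [hsimp2] at E3
    -- interval integrabilities
    have hbint : ∀ u v, u ∈ Icc (0:ℝ) (τ + t) → v ∈ Icc (0:ℝ) (τ + t) →
        IntervalIntegrable (fun r => f r 0 * ψ (0 + (τ + t - r))) volume u v := by
      intro u v hu hv
      apply ContinuousOn.intervalIntegrable
      exact (hfb0c.mono (uIcc_subset_Icc hu hv)).mul (Continuous.continuousOn (by fun_prop))
    have hJint : ∀ u v, u ∈ Icc (0:ℝ) (τ + t) → v ∈ Icc (0:ℝ) (τ + t) →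
        IntervalIntegrable
          (fun r => ∫ a in Ioi (0:ℝ), (β a + D r) * ψ (a + (τ + t - r)) * f r a)
          volume u v := by
      intro u v hu hv
      exact intervalIntegrable_inner (T := τ + t) hT0 hjc hDmeas hψ hbd hβc hCβnn hCDnn
        hfi hMf hCβ hCD (c := fun r => τ + t - r) (by fun_prop) hu hv
    have hJbint : IntervalIntegrable
        (fun r => ∫ a in Ioi (0:ℝ), (β a + D (τ + r)) * ψ (a + (t - r)) * fb r a)
        volume 0 s :=
      intervalIntegrable_inner (T := t) htnn hjcb hDτmeas hψ hbd hβc hCβnn hCDnn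
        hfbi hMfb hCβ hCDb (c := fun r => t - r) (by fun_prop) hzmemt hs
    have hJfsint : IntervalIntegrable
        (fun r => ∫ a in Ioi (0:ℝ), (β a + D (τ + r)) * ψ (a + (t - r)) * f (τ + r) a)
        volume 0 s :=
      intervalIntegrable_inner (T := t) htnn hjcτ hDτmeas hψ hbd hβc hCβnn hCDnn
        hfiτ hMfτ hCβ hCDb (c := fun r => t - r) (by fun_prop) hzmemt hs
    have hJwint : IntervalIntegrable
        (fun r => ∫ a in Ioi (0:ℝ),
          (β a + D (τ + r)) * ψ (a + (t - r)) * (f (τ + r) a - fb r a))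
        volume 0 s :=
      intervalIntegrable_inner (T := t) htnn (hjcτ.sub hjcb) hDτmeas hψ hbd hβc hCβnn hCDnn
        hwi hMw hCβ hCDb (c := fun r => t - r) (by fun_prop) hzmemt hs
    -- splits
    have hsplitb := intervalIntegral.integral_interval_sub_left
      (hbint 0 (τ + s) hzmem hsτ) (hbint 0 τ hzmem hτmem)
    have hsplitJ := intervalIntegral.integral_interval_sub_left
      (hJint 0 (τ + s) hzmem hsτ) (hJint 0 τ hzmem hτmem)
    -- change of variables
    have hcvb : (∫ r in (0:ℝ)..s, f (τ + r) 0 * ψ (0 + (τ + t - (τ + r))))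
        = ∫ r in τ..(τ + s), f r 0 * ψ (0 + (τ + t - r)) := by
      have h := intervalIntegral.integral_comp_add_left (a := (0:ℝ)) (b := s)
        (fun r => f r 0 * ψ (0 + (τ + t - r))) τ
      simpa using h
    have hcvJ : (∫ r in (0:ℝ)..s,
          ∫ a in Ioi (0:ℝ), (β a + D (τ + r)) * ψ (a + (τ + t - (τ + r))) * f (τ + r) a)
        = ∫ r in τ..(τ + s), ∫ a in Ioi (0:ℝ), (β a + D r) * ψ (a + (τ + t - r)) * f r a := by
      have h := intervalIntegral.integral_comp_add_left (a := (0:ℝ)) (b := s)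
        (fun r => ∫ a in Ioi (0:ℝ), (β a + D r) * ψ (a + (τ + t - r)) * f r a) τ
      simpa using h
    -- alignments
    have hal1 : (∫ r in (0:ℝ)..s, f (τ + r) 0 * ψ (0 + (τ + t - (τ + r))))
        = ∫ r in (0:ℝ)..s, f (τ + r) 0 * ψ (0 + (t - r)) := by
      apply intervalIntegral.integral_congr
      intro r _
      beta_reduce
      rw [show (0:ℝ) + (τ + t - (τ + r)) = 0 + (t - r) by ring]
    have hal2 : (∫ r in (0:ℝ)..s,
          ∫ a in Ioi (0:ℝ), (β a + D (τ + r)) * ψ (a + (τ + t - (τ + r))) * f (τ + r) a)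
        = ∫ r in (0:ℝ)..s,
            ∫ a in Ioi (0:ℝ), (β a + D (τ + r)) * ψ (a + (t - r)) * f (τ + r) a := by
      apply intervalIntegral.integral_congr
      intro r _
      beta_reduce
      congr 1
      funext a
      rw [show a + (τ + t - (τ + r)) = a + (t - r) by ring]
    have hal3 : (∫ a in Ioi (0:ℝ), f (τ + s) a * ψ (a + (τ + t - (τ + s))))
        = ∫ a in Ioi (0:ℝ), f (τ + s) a * ψ (a + (t - s)) := by
      congr 1
      funext a
      rw [show a + (τ + t - (τ + s)) = a + (t - s) by ring]
    have hal4 : (∫ a in Ioi (0:ℝ), f τ a * ψ (a + (τ + t - τ)))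
        = ∫ a in Ioi (0:ℝ), f τ a * ψ (a + (t - 0)) := by
      congr 1
      funext a
      rw [show a + (τ + t - τ) = a + (t - 0) by ring]
    have EF : (∫ r in (0:ℝ)..s, f (τ + r) 0 * ψ (0 + (t - r)))
        = (∫ a in Ioi (0:ℝ), f (τ + s) a * ψ (a + (t - s)))
          - (∫ a in Ioi (0:ℝ), f τ a * ψ (a + (t - 0)))
          + ∫ r in (0:ℝ)..s,
              ∫ a in Ioi (0:ℝ), (β a + D (τ + r)) * ψ (a + (t - r)) * f (τ + r) a := by
      linarith [E1, E2, hsplitb, hsplitJ, hcvb, hcvJ, hal1, hal2, hal3, hal4]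
    -- split the goal integral
    have hψa : Continuous (fun a : ℝ => ψ (a + (t - s))) := by fun_prop
    have hintfψ : IntegrableOn (fun a => f (τ + s) a * ψ (a + (t - s))) (Ioi (0:ℝ)) volume := by
      have h := integrableOn_mul_bdd measurableSet_Ioi (hfi _ hsτ) hψa.aestronglyMeasurable
        (fun a _ => hbd (a + (t - s)))
      have h2 : (fun a => ψ (a + (t - s)) * f (τ + s) a)
          = fun a => f (τ + s) a * ψ (a + (t - s)) := by funext a; ring
      rwa [h2] at h
    have hintfbψ : IntegrableOn (fun a => fb s a * ψ (a + (t - s))) (Ioi (0:ℝ)) volume := by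
      have h := integrableOn_mul_bdd measurableSet_Ioi (hfbi s hs) hψa.aestronglyMeasurable
        (fun a _ => hbd (a + (t - s)))
      have h2 : (fun a => ψ (a + (t - s)) * fb s a)
          = fun a => fb s a * ψ (a + (t - s)) := by funext a; ring
      rwa [h2] at h
    have hLHS : (∫ a in Ioi (0:ℝ), (f (τ + s) a - fb s a) * ψ (a + (t - s)))
        = (∫ a in Ioi (0:ℝ), f (τ + s) a * ψ (a + (t - s)))
          - ∫ a in Ioi (0:ℝ), fb s a * ψ (a + (t - s)) := by
      rw [← integral_sub hintfψ hintfbψ]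
      congr 1
      funext a
      ring
    -- boundary terms
    have hIb1 : IntervalIntegrable (fun r => f (τ + r) 0 * ψ (0 + (t - r))) volume 0 s := by
      apply ContinuousOn.intervalIntegrable
      rw [uIcc_of_le hs.1]
      refine ContinuousOn.mul ?_ (Continuous.continuousOn (by fun_prop))
      exact (hfb0c.comp ((by fun_prop : Continuous fun r : ℝ => τ + r).continuousOn)
        (fun r hr => hmem r ⟨hr.1, hr.2.trans hs.2⟩)).mono (fun x hx => hx)
    have hIb2 : IntervalIntegrable (fun r => fb r 0 * ψ (0 + (t - r))) volume 0 s := by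
      apply ContinuousOn.intervalIntegrable
      rw [uIcc_of_le hs.1]
      exact ((hfbb0c.mono (Icc_subset_Icc le_rfl hs.2)).mul
        (Continuous.continuousOn (by fun_prop)))
    have hbcomb : (∫ r in (0:ℝ)..s, f (τ + r) 0 * ψ (0 + (t - r)))
        - (∫ r in (0:ℝ)..s, fb r 0 * ψ (0 + (t - r)))
        = ∫ r in (0:ℝ)..s, (f (τ + r) 0 - fb r 0) * ψ (0 + (t - r)) := by
      rw [← intervalIntegral.integral_sub hIb1 hIb2]
      apply intervalIntegral.integral_congr
      intro r _
      beta_reduce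
      ring
    -- double integral terms
    have hbAESMψ : ∀ r : ℝ, AEStronglyMeasurable (fun a => (β a + D (τ + r)) * ψ (a + (t - r)))
        (volume.restrict (Ioi (0:ℝ))) := fun r =>
      (hβAESM.add aestronglyMeasurable_const).mul
        ((hψ.comp (by fun_prop : Continuous fun a : ℝ => a + (t - r))).aestronglyMeasurable)
    have hbbdψ : ∀ r ∈ Icc (0:ℝ) t, ∀ a ∈ Ioi (0:ℝ),
        |(β a + D (τ + r)) * ψ (a + (t - r))| ≤ Cβ + CD := by
      intro r hr a ha
      rw [abs_mul]
      calc |β a + D (τ + r)| * |ψ (a + (t - r))| ≤ |β a + D (τ + r)| * 1 :=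
            mul_le_mul_of_nonneg_left (hbd _) (abs_nonneg _)
        _ = |β a + D (τ + r)| := mul_one _
        _ ≤ |β a| + |D (τ + r)| := abs_add_le _ _
        _ ≤ Cβ + CD := add_le_add (hCβ a (mem_Ici.mpr (le_of_lt ha))) (hCDb r hr)
    have hJcomb : (∫ r in (0:ℝ)..s,
          ∫ a in Ioi (0:ℝ), (β a + D (τ + r)) * ψ (a + (t - r)) * f (τ + r) a)
        - (∫ r in (0:ℝ)..s, ∫ a in Ioi (0:ℝ), (β a + D (τ + r)) * ψ (a + (t - r)) * fb r a)
        = ∫ r in (0:ℝ)..s,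
            ∫ a in Ioi (0:ℝ), (β a + D (τ + r)) * ψ (a + (t - r)) * (f (τ + r) a - fb r a) := by
      rw [← intervalIntegral.integral_sub hJfsint hJbint]
      apply intervalIntegral.integral_congr
      intro r hr
      beta_reduce
      have hrt : r ∈ Icc (0:ℝ) t := (uIcc_subset_Icc hzmemt hs) hr
      have hif : IntegrableOn (fun a => (β a + D (τ + r)) * ψ (a + (t - r)) * f (τ + r) a)
          (Ioi (0:ℝ)) volume :=
        integrableOn_mul_bdd measurableSet_Ioi (hfi _ (hmem r hrt)) (hbAESMψ r)
          (hbbdψ r hrt)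
      have hifb : IntegrableOn (fun a => (β a + D (τ + r)) * ψ (a + (t - r)) * fb r a)
          (Ioi (0:ℝ)) volume :=
        integrableOn_mul_bdd measurableSet_Ioi (hfbi r hrt) (hbAESMψ r) (hbbdψ r hrt)
      rw [← integral_sub hif hifb]
      congr 1
      funext a
      ring
    -- the identity
    have hiden : (∫ a in Ioi (0:ℝ), (f (τ + s) a - fb s a) * ψ (a + (t - s)))
        = (∫ r in (0:ℝ)..s, (f (τ + r) 0 - fb r 0) * ψ (0 + (t - r)))
          - ∫ r in (0:ℝ)..s,
              ∫ a in Ioi (0:ℝ), (β a + D (τ + r)) * ψ (a + (t - r)) * (f (τ + r) a - fb r a) := by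
      rw [hLHS]
      linarith [EF, E3, hbcomb, hJcomb]
    -- bounds
    have hint_babs : IntervalIntegrable (fun r => |f (τ + r) 0 - fb r 0|) volume 0 s := by
      apply ContinuousOn.intervalIntegrable
      rw [uIcc_of_le hs.1]
      exact (hbdiffc.mono (Icc_subset_Icc le_rfl hs.2)).abs
    have habs1 : abs (∫ r in (0:ℝ)..s, (f (τ + r) 0 - fb r 0) * ψ (0 + (t - r)))
        ≤ ∫ r in (0:ℝ)..s, |f (τ + r) 0 - fb r 0| := by
      refine (intervalIntegral.abs_integral_le_integral_abs hs.1).trans ?_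
      refine intervalIntegral.integral_mono_on hs.1 ?_ hint_babs ?_
      · apply IntervalIntegrable.abs
        apply ContinuousOn.intervalIntegrable
        rw [uIcc_of_le hs.1]
        exact (hbdiffc.mono (Icc_subset_Icc le_rfl hs.2)).mul
          (Continuous.continuousOn (by fun_prop))
      · intro r _
        rw [abs_mul]
        exact mul_le_of_le_one_right (abs_nonneg _) (hbd _)
    have hNcont' : ContinuousOn (fun r => ∫ a in Ioi (0:ℝ), |f (τ + r) a - fb r a|)
        (Icc (0:ℝ) t) := by
      have h := hNc
      rw [hNdef] at h
      exact h
    have habs2 : abs (∫ r in (0:ℝ)..s,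
          ∫ a in Ioi (0:ℝ), (β a + D (τ + r)) * ψ (a + (t - r)) * (f (τ + r) a - fb r a))
        ≤ (Cβ + CD) * ∫ r in (0:ℝ)..s, ∫ a in Ioi (0:ℝ), |f (τ + r) a - fb r a| := by
      rw [← intervalIntegral.integral_const_mul]
      refine (intervalIntegral.abs_integral_le_integral_abs hs.1).trans ?_
      refine intervalIntegral.integral_mono_on hs.1 hJwint.abs ?_ ?_
      · apply IntervalIntegrable.const_mul
        apply ContinuousOn.intervalIntegrable
        rw [uIcc_of_le hs.1]
        exact hNcont'.mono (Icc_subset_Icc le_rfl hs.2)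
      · intro r hr
        have hrt : r ∈ Icc (0:ℝ) t := ⟨hr.1, hr.2.trans hs.2⟩
        exact abs_setIntegral_mul_le (hwi r hrt) (hbAESMψ r) (by positivity) (hbbdψ r hrt)
    calc (∫ a in Ioi (0:ℝ), (f (τ + s) a - fb s a) * ψ (a + (t - s)))
        = (∫ r in (0:ℝ)..s, (f (τ + r) 0 - fb r 0) * ψ (0 + (t - r)))
          - ∫ r in (0:ℝ)..s,
              ∫ a in Ioi (0:ℝ), (β a + D (τ + r)) * ψ (a + (t - r)) * (f (τ + r) a - fb r a) :=
          hiden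
      _ ≤ abs (∫ r in (0:ℝ)..s, (f (τ + r) 0 - fb r 0) * ψ (0 + (t - r)))
          + abs (∫ r in (0:ℝ)..s,
              ∫ a in Ioi (0:ℝ), (β a + D (τ + r)) * ψ (a + (t - r)) * (f (τ + r) a - fb r a)) := by
          have h1 := le_abs_self (∫ r in (0:ℝ)..s, (f (τ + r) 0 - fb r 0) * ψ (0 + (t - r)))
          have h2 := neg_abs_le (∫ r in (0:ℝ)..s,
            ∫ a in Ioi (0:ℝ), (β a + D (τ + r)) * ψ (a + (t - r)) * (f (τ + r) a - fb r a))
          linarith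
      _ ≤ (∫ r in (0:ℝ)..s, |f (τ + r) 0 - fb r 0|)
          + (Cβ + CD) * ∫ r in (0:ℝ)..s, ∫ a in Ioi (0:ℝ), |f (τ + r) a - fb r a| :=
          add_le_add habs1 habs2
  -- substrate preliminaries
  have hBS : ∀ r ∈ Icc (0:ℝ) (τ + t), |S_in - S r| ≤ S_in := by
    intro r hr
    have h := hSmem r hr
    rw [abs_of_nonneg (by linarith [h.2])]
    linarith [h.1]
  have hBSb : ∀ r ∈ Icc (0:ℝ) t, |S_in - Sb r| ≤ S_in := by
    intro r hr
    have h := hSbmem r hr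
    rw [abs_of_nonneg (by linarith [h.2])]
    linarith [h.1]
  have hμSc : ContinuousOn (fun r => μ (S r)) (Icc (0:ℝ) (τ + t)) :=
    hμc.comp hScont (fun r hr => mem_Ici.mpr (hSmem r hr).1)
  have hμSbc : ContinuousOn (fun r => μ (Sb r)) (Icc (0:ℝ) t) :=
    hμc.comp hScontb (fun r hr => mem_Ici.mpr (hSbmem r hr).1)
  have hQf : ∀ u v, u ∈ Icc (0:ℝ) (τ + t) → v ∈ Icc (0:ℝ) (τ + t) →
      IntervalIntegrable (fun r => ∫ a in Ioi (0:ℝ), q a * f r a) volume u v := by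
    intro u v hu hv
    have h0 := intervalIntegrable_inner (T := τ + t) hT0 hjc (measurable_const (a := (0:ℝ)))
      (continuous_const (y := (1:ℝ))) (fun x => by norm_num) hqc hCqnn le_rfl hfi hMf hCq
      (fun r _ => by simp) (continuous_const (y := (0:ℝ))) hu hv
    have h1 : IntervalIntegrable
        (fun r => ∫ a in Ioi (0:ℝ), (q a + (0:ℝ)) * (1:ℝ) * f r a) volume u v := h0
    have h2 : (fun r => ∫ a in Ioi (0:ℝ), (q a + (0:ℝ)) * (1:ℝ) * f r a)
        = fun r => ∫ a in Ioi (0:ℝ), q a * f r a := by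
      funext r; congr 1; funext a; ring
    rwa [h2] at h1
  have hQfb : ∀ u v, u ∈ Icc (0:ℝ) t → v ∈ Icc (0:ℝ) t →
      IntervalIntegrable (fun r => ∫ a in Ioi (0:ℝ), q a * fb r a) volume u v := by
    intro u v hu hv
    have h0 := intervalIntegrable_inner (T := t) htnn hjcb (measurable_const (a := (0:ℝ)))
      (continuous_const (y := (1:ℝ))) (fun x => by norm_num) hqc hCqnn le_rfl hfbi hMfb hCq
      (fun r _ => by simp) (continuous_const (y := (0:ℝ))) hu hv
    have h1 : IntervalIntegrable
        (fun r => ∫ a in Ioi (0:ℝ), (q a + (0:ℝ)) * (1:ℝ) * fb r a) volume u v := h0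
    have h2 : (fun r => ∫ a in Ioi (0:ℝ), (q a + (0:ℝ)) * (1:ℝ) * fb r a)
        = fun r => ∫ a in Ioi (0:ℝ), q a * fb r a := by
      funext r; congr 1; funext a; ring
    rwa [h2] at h1
  have hgfII : ∀ u v, u ∈ Icc (0:ℝ) (τ + t) → v ∈ Icc (0:ℝ) (τ + t) →
      IntervalIntegrable
        (fun r => D r * (S_in - S r) - μ (S r) * ∫ a in Ioi (0:ℝ), q a * f r a)
        volume u v := by
    intro u v hu hv
    exact (intervalIntegrable_D_mul hT0 hDmeas hScont hCD hBS hu hv).sub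
      ((hQf u v hu hv).continuousOn_mul (hμSc.mono (uIcc_subset_Icc hu hv)))
  have hgbII : ∀ u v, u ∈ Icc (0:ℝ) t → v ∈ Icc (0:ℝ) t →
      IntervalIntegrable
        (fun r => D (τ + r) * (S_in - Sb r) - μ (Sb r) * ∫ a in Ioi (0:ℝ), q a * fb r a)
        volume u v := by
    intro u v hu hv
    exact (intervalIntegrable_D_mul htnn (hDmeas.comp (by fun_prop)) hScontb hCDb hBSb hu hv).sub
      ((hQfb u v hu hv).continuousOn_mul (hμSbc.mono (uIcc_subset_Icc hu hv)))
  -- substrate estimate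
  have keyC : ∀ s ∈ Icc (0:ℝ) t, |dS s| ≤ ∫ r in (0:ℝ)..s, KC * (N r + |dS r|) := by
    intro s hs
    have hsτ := hmem s hs
    have hzmem : (0:ℝ) ∈ Icc (0:ℝ) (τ + t) := ⟨le_rfl, hT0⟩
    have hE1 := hSeq (τ + s) hsτ
    have hE2 := hSeq τ hτmem
    have hEb := hSeqb s hs
    beta_reduce at hEb
    have hsplit := intervalIntegral.integral_interval_sub_left
      (hgfII 0 (τ + s) hzmem hsτ) (hgfII 0 τ hzmem hτmem)
    have hcv : (∫ r in (0:ℝ)..s,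
        (D (τ + r) * (S_in - S (τ + r)) - μ (S (τ + r)) * ∫ a in Ioi (0:ℝ), q a * f (τ + r) a))
        = ∫ r in τ..(τ + s),
          (D r * (S_in - S r) - μ (S r) * ∫ a in Ioi (0:ℝ), q a * f r a) := by
      have h := intervalIntegral.integral_comp_add_left (a := (0:ℝ)) (b := s)
        (fun r => D r * (S_in - S r) - μ (S r) * ∫ a in Ioi (0:ℝ), q a * f r a) τ
      simpa using h
    have hgfτII : IntervalIntegrable (fun r =>
        D (τ + r) * (S_in - S (τ + r)) - μ (S (τ + r)) * ∫ a in Ioi (0:ℝ), q a * f (τ + r) a)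
        volume 0 s := by
      have h := (hgfII τ (τ + s) hτmem hsτ).comp_add_left τ
      simpa using h
    have hgbsII := hgbII 0 s ⟨le_rfl, htnn⟩ hs
    have hdseq : dS s = ∫ r in (0:ℝ)..s,
        ((D (τ + r) * (S_in - S (τ + r)) - μ (S (τ + r)) * ∫ a in Ioi (0:ℝ), q a * f (τ + r) a)
         - (D (τ + r) * (S_in - Sb r) - μ (Sb r) * ∫ a in Ioi (0:ℝ), q a * fb r a)) := by
      rw [intervalIntegral.integral_sub hgfτII hgbsII]
      rw [hdSdef]
      beta_reduce
      linarith [hE1, hE2, hEb, hsplit, hcv]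
    have hpt : ∀ r ∈ Icc (0:ℝ) s,
        |(D (τ + r) * (S_in - S (τ + r)) - μ (S (τ + r)) * ∫ a in Ioi (0:ℝ), q a * f (τ + r) a)
         - (D (τ + r) * (S_in - Sb r) - μ (Sb r) * ∫ a in Ioi (0:ℝ), q a * fb r a)|
        ≤ KC * (N r + |dS r|) := by
      intro r hr
      have hrt : r ∈ Icc (0:ℝ) t := ⟨hr.1, hr.2.trans hs.2⟩
      have hrT := hmem r hrt
      have hint1 : IntegrableOn (fun a => q a * f (τ + r) a) (Ioi (0:ℝ)) volume :=
        integrableOn_mul_bdd measurableSet_Ioi (hfi _ hrT) hqAESM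
          (fun a ha => hCq a (mem_Ici.mpr (le_of_lt ha)))
      have hint2 : IntegrableOn (fun a => q a * fb r a) (Ioi (0:ℝ)) volume :=
        integrableOn_mul_bdd measurableSet_Ioi (hfbi r hrt) hqAESM
          (fun a ha => hCq a (mem_Ici.mpr (le_of_lt ha)))
      have hsubq : (∫ a in Ioi (0:ℝ), q a * f (τ + r) a) - (∫ a in Ioi (0:ℝ), q a * fb r a)
          = ∫ a in Ioi (0:ℝ), q a * (f (τ + r) a - fb r a) := by
        rw [← integral_sub hint1 hint2]
        congr 1; funext a; ring
      have hb1 : abs (∫ a in Ioi (0:ℝ), q a * (f (τ + r) a - fb r a)) ≤ Cq * N r := by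
        rw [hNdef]
        exact abs_setIntegral_mul_le (hwi r hrt) hqAESM hCqnn (fun a ha => hCq a (mem_Ici.mpr (le_of_lt ha)))
      have hb2 : abs (∫ a in Ioi (0:ℝ), q a * fb r a) ≤ Cq * M :=
        (abs_setIntegral_mul_le (hfbi r hrt) hqAESM hCqnn
          (fun a ha => hCq a (mem_Ici.mpr (le_of_lt ha)))).trans
          (mul_le_mul_of_nonneg_left (hMfb r hrt) hCqnn)
      have hμ1 : |μ (S (τ + r))| ≤ Cμ := hCμ _ (hSmem _ hrT).1
      have hμd : |μ (S (τ + r)) - μ (Sb r)| ≤ L * |dS r| := by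
        have := hLip _ (hSmem _ hrT) _ (hSbmem r hrt)
        simpa [hdSdef] using this
      have hDr : |D (τ + r)| ≤ CD := hCD _ hrT
      have hrw : (D (τ + r) * (S_in - S (τ + r))
            - μ (S (τ + r)) * ∫ a in Ioi (0:ℝ), q a * f (τ + r) a)
          - (D (τ + r) * (S_in - Sb r) - μ (Sb r) * ∫ a in Ioi (0:ℝ), q a * fb r a)
          = (-(D (τ + r) * dS r))
            - (μ (S (τ + r)) * ((∫ a in Ioi (0:ℝ), q a * f (τ + r) a)
                - ∫ a in Ioi (0:ℝ), q a * fb r a)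
              + (μ (S (τ + r)) - μ (Sb r)) * ∫ a in Ioi (0:ℝ), q a * fb r a) := by
        rw [hdSdef]
        beta_reduce
        ring
      rw [hrw, hsubq]
      refine (abs_sub_le' _ _).trans ?_
      rw [abs_neg, abs_mul]
      refine (add_le_add le_rfl (abs_add_le _ _)).trans ?_
      rw [abs_mul, abs_mul]
      have ht0 : |D (τ + r)| * |dS r| ≤ CD * |dS r| :=
        mul_le_mul_of_nonneg_right hDr (abs_nonneg _)
      have ht1 : |μ (S (τ + r))| * abs (∫ a in Ioi (0:ℝ), q a * (f (τ + r) a - fb r a))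
          ≤ Cμ * (Cq * N r) := mul_le_mul hμ1 hb1 (abs_nonneg _) hCμnn
      have ht2 : |μ (S (τ + r)) - μ (Sb r)| * abs (∫ a in Ioi (0:ℝ), q a * fb r a)
          ≤ (L * |dS r|) * (Cq * M) := mul_le_mul hμd hb2 (abs_nonneg _) (by positivity)
      have hNr := hNnn r hrt
      have hdSr : 0 ≤ |dS r| := abs_nonneg _
      rw [hKCdef]
      have hexp : (CD + Cμ * Cq + L * (Cq * M)) * (N r + |dS r|)
          = CD * |dS r| + Cμ * (Cq * N r) + (L * |dS r|) * (Cq * M)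
            + (CD * N r + Cμ * Cq * |dS r| + L * (Cq * M) * N r) := by ring
      have hp0 : 0 ≤ CD * N r := mul_nonneg hCDnn hNr
      have hp1 : 0 ≤ Cμ * Cq * |dS r| := by positivity
      have hp2 : 0 ≤ L * (Cq * M) * N r :=
        mul_nonneg (mul_nonneg hL0 (mul_nonneg hCqnn hM0)) hNr
      linarith [ht0, ht1, ht2, hexp, hp0, hp1, hp2]
    have hIIdiff : IntervalIntegrable (fun r =>
        (D (τ + r) * (S_in - S (τ + r)) - μ (S (τ + r)) * ∫ a in Ioi (0:ℝ), q a * f (τ + r) a)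
         - (D (τ + r) * (S_in - Sb r) - μ (Sb r) * ∫ a in Ioi (0:ℝ), q a * fb r a))
        volume 0 s := by
      have h := (hgfII τ (τ + s) hτmem hsτ).comp_add_left τ
      simp only [add_sub_cancel_left, sub_self] at h
      exact h.sub hgbsII
    have hRHSint : IntervalIntegrable (fun r => KC * (N r + |dS r|)) volume 0 s := by
      apply IntervalIntegrable.const_mul
      apply ContinuousOn.intervalIntegrable
      rw [uIcc_of_le hs.1]
      exact (hNc.add hdSc.abs).mono (Icc_subset_Icc le_rfl hs.2)
    calc |dS s| = abs (∫ r in (0:ℝ)..s, _) := by rw [hdseq]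
      _ ≤ ∫ r in (0:ℝ)..s,
          |(D (τ + r) * (S_in - S (τ + r)) - μ (S (τ + r)) * ∫ a in Ioi (0:ℝ), q a * f (τ + r) a)
           - (D (τ + r) * (S_in - Sb r) - μ (Sb r) * ∫ a in Ioi (0:ℝ), q a * fb r a)| :=
          intervalIntegral.abs_integral_le_integral_abs hs.1
      _ ≤ ∫ r in (0:ℝ)..s, KC * (N r + |dS r|) :=
          intervalIntegral.integral_mono_on hs.1 hIIdiff.abs hRHSint hpt
  -- Gronwall
  have hgron : ∀ s ∈ Icc (0:ℝ) t, N s + |dS s| = 0 := by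
    have hhc : ContinuousOn (fun s => N s + |dS s|) (Icc (0:ℝ) t) := hNc.add hdSc.abs
    have hhnn : ∀ s ∈ Icc (0:ℝ) t, 0 ≤ N s + |dS s| :=
      fun s hs => add_nonneg (hNnn s hs) (abs_nonneg _)
    have hineq : ∀ s ∈ Icc (0:ℝ) t,
        N s + |dS s| ≤ (KB + (Cβ + CD) + KC) * ∫ r in (0:ℝ)..s, (N r + |dS r|) := by
      intro s hs
      have hint_h : IntervalIntegrable (fun r => N r + |dS r|) volume 0 s := by
        apply ContinuousOn.intervalIntegrable
        rw [uIcc_of_le hs.1]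
        exact hhc.mono (Icc_subset_Icc le_rfl hs.2)
      have hint_N : IntervalIntegrable N volume 0 s := by
        apply ContinuousOn.intervalIntegrable
        rw [uIcc_of_le hs.1]
        exact hNc.mono (Icc_subset_Icc le_rfl hs.2)
      have hint_b : IntervalIntegrable (fun r => |f (τ + r) 0 - fb r 0|) volume 0 s := by
        apply ContinuousOn.intervalIntegrable
        rw [uIcc_of_le hs.1]
        exact (hbdiffc.mono (Icc_subset_Icc le_rfl hs.2)).abs
      have h1 : (∫ r in (0:ℝ)..s, |f (τ + r) 0 - fb r 0|)
          ≤ ∫ r in (0:ℝ)..s, KB * (N r + |dS r|) :=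
        intervalIntegral.integral_mono_on hs.1 hint_b (hint_h.const_mul KB)
          (fun r hr => keyB r ⟨hr.1, hr.2.trans hs.2⟩)
      have h2 : (∫ r in (0:ℝ)..s, N r) ≤ ∫ r in (0:ℝ)..s, (N r + |dS r|) :=
        intervalIntegral.integral_mono_on hs.1 hint_N hint_h
          (fun r _ => by linarith [abs_nonneg (dS r)])
      have h3 := keyA s hs
      have h4 := keyC s hs
      rw [intervalIntegral.integral_const_mul] at h1 h4
      have h5 : (Cβ + CD) * (∫ r in (0:ℝ)..s, N r)
          ≤ (Cβ + CD) * ∫ r in (0:ℝ)..s, (N r + |dS r|) :=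
        mul_le_mul_of_nonneg_left h2 (by positivity)
      linarith [h3, h4, h1, h5]
    exact gronwall_zero htnn (by positivity) hhc hhnn hineq
  -- extraction
  intro s hs
  have hNz : N s = 0 ∧ |dS s| = 0 := by
    have h1 := hgron s hs
    have h2 := hNnn s hs
    have h3 : 0 ≤ |dS s| := abs_nonneg _
    constructor <;> linarith
  have hSbeq : Sb s = S (τ + s) := by
    have := hNz.2
    rw [abs_eq_zero, hdSdef] at this
    simp only [sub_eq_zero] at this
    exact this.symm
  refine ⟨?_, hSbeq⟩
  have hae : ∀ᵐ a ∂(volume.restrict (Ioi (0:ℝ))), f (τ + s) a - fb s a = 0 := by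
    have h1 : (∫ a in Ioi (0:ℝ), |f (τ + s) a - fb s a|) = 0 := hNz.1
    have h2 := (integral_eq_zero_iff_of_nonneg_ae
      (ae_of_all _ (fun a => abs_nonneg (f (τ + s) a - fb s a))) (hwi s hs).abs).mp h1
    filter_upwards [h2] with a ha
    exact abs_eq_zero.mp ha
  have hcont : ContinuousOn (fun a => f (τ + s) a - fb s a) (Ici 0) :=
    (hfc _ (hmem s hs)).sub (hfbc s hs)
  have hz := zero_of_ae_zero hcont hae
  intro a ha
  have := hz a ha
  linarith [this]
end
end

section
/- (Lemma 2: a priori estimates.) Let Γ > 0 be a constant with μ(S) ≤ Γ·S for all S ∈ [0,S_in] and set M = max_{0≤s≤S_in} μ(s). Then every weak solution (f,S) on [0,T] with input D and initial condition (f₀,S₀) ∈ X satisfies, for all t ∈ [0,T]: (i) ‖f[t]‖_{L¹} ≤ exp(M‖k‖_∞ t)·‖f₀‖_{L¹}; (ii) S(t) ≥ S₀·exp(−Γ‖q‖_∞‖f₀‖_{L¹}·(exp(M‖k‖_∞ t) − 1)/(M‖k‖_∞)); and (iii) S(t) ≤ S_in·(1 − exp(−∫₀^t D(s)ds)) + S₀·exp(−∫₀^t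 D(s)ds). -/
open MeasureTheory Set Filter
open scoped Topology

set_option maxHeartbeats 1000000
noncomputable section

lemma exp_conv_aux {x y : ℝ} (h : x ≤ y) :
    Real.exp (-y) - Real.exp (-x) ≤ -(Real.exp (-y) * (y - x)) := by
  have h1 := Real.add_one_le_exp (y - x)
  have h2 : Real.exp (-y) * (y - x + 1) ≤ Real.exp (-y) * Real.exp (y - x) :=
    mul_le_mul_of_nonneg_left h1 (Real.exp_pos _).le
  rw [← Real.exp_add] at h2
  have h3 : -y + (y - x) = -x := by ring
  rw [h3] at h2
  nlinarith [Real.exp_pos (-y)]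

/-- Lower Grönwall-type comparison for a function given in integral form. -/
lemma gronwall_lower (T : ℝ) (hT : 0 ≤ T) (V g c : ℝ → ℝ)
    (hVcont : ContinuousOn V (Icc 0 T))
    (hVpos : ∀ t ∈ Icc 0 T, 0 < V t)
    (hgint : IntegrableOn g (Ioc 0 T))
    (hrep : ∀ t ∈ Icc 0 T, V t = V 0 + ∫ s in Ioc 0 t, g s)
    (hcmeas : Measurable c) (Cc : ℝ)
    (hc0 : ∀ s ∈ Icc 0 T, 0 ≤ c s) (hcC : ∀ s ∈ Icc 0 T, c s ≤ Cc)
    (hgc : ∀ s ∈ Icc 0 T, -(c s * V s) ≤ g s) :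
    ∀ t ∈ Icc 0 T, V 0 * Real.exp (-∫ s in Ioc 0 t, c s) ≤ V t := by
  intro tstar htstar
  have hV0 : 0 < V 0 := hVpos 0 ⟨le_refl 0, hT⟩
  have hCc0 : 0 ≤ Cc := le_trans (hc0 0 ⟨le_refl 0, hT⟩) (hcC 0 ⟨le_refl 0, hT⟩)
  -- clamped version of V, globally continuous
  set cl : ℝ → ℝ := fun s => max 0 (min s T) with hcl
  have hcl_cont : Continuous cl := continuous_const.max (continuous_id.min continuous_const)
  have hcl_mem : ∀ s, cl s ∈ Icc 0 T := by
    intro s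
    constructor
    · exact le_max_left _ _
    · simp only [hcl, max_le_iff]
      exact ⟨hT, min_le_right _ _⟩
  have hcl_eq : ∀ s ∈ Icc 0 T, cl s = s := by
    intro s hs
    simp only [hcl]
    rw [min_eq_left hs.2, max_eq_right hs.1]
  set Vc : ℝ → ℝ := fun s => V (cl s) with hVc
  have hVc_cont : Continuous Vc := hVcont.comp_continuous hcl_cont hcl_mem
  have hVc_eq : ∀ s ∈ Icc 0 T, Vc s = V s := fun s hs => by
    simp only [hVc]; rw [hcl_eq s hs]
  obtain ⟨CV, hCV⟩ : ∃ CV, ∀ x ∈ Icc 0 T, ‖V x‖ ≤ CV :=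
    isCompact_Icc.exists_bound_of_continuousOn hVcont
  have hVc_bdd : ∀ s, ‖Vc s‖ ≤ CV := fun s => hCV _ (hcl_mem s)
  -- c is integrable on Ioc 0 T
  have hcint : IntegrableOn c (Ioc 0 T) := by
    apply Integrable.mono' (integrableOn_const (C := Cc) (by simp [Real.volume_Ioc]))
      (hcmeas.aestronglyMeasurable.restrict)
    refine (ae_restrict_iff' measurableSet_Ioc).mpr (ae_of_all _ fun s hs => ?_)
    have hsIcc : s ∈ Icc 0 T := ⟨hs.1.le, hs.2⟩
    rw [Real.norm_eq_abs, abs_of_nonneg (hc0 s hsIcc)]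
    exact hcC s hsIcc
  set ID : ℝ → ℝ := fun t => ∫ s in Ioc 0 t, c s with hID
  have hID_add : ∀ x ∈ Icc 0 T, ∀ y ∈ Icc 0 T, x ≤ y →
      ID y = ID x + ∫ s in Ioc x y, c s := by
    intro x hx y hy hxy
    have : Ioc (0:ℝ) y = Ioc 0 x ∪ Ioc x y := (Ioc_union_Ioc_eq_Ioc hx.1 hxy).symm
    rw [hID]
    simp only
    rw [this, setIntegral_union (Ioc_disjoint_Ioc_of_le le_rfl) measurableSet_Ioc
      (hcint.mono_set (Ioc_subset_Ioc_right hx.2))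
      (hcint.mono_set (Ioc_subset_Ioc hx.1 hy.2))]
  have hInc_nonneg : ∀ x y : ℝ, x ∈ Icc 0 T → y ∈ Icc 0 T →
      0 ≤ ∫ s in Ioc x y, c s := by
    intro x y hx hy
    apply setIntegral_nonneg measurableSet_Ioc
    intro s hs
    exact hc0 s ⟨le_trans hx.1 hs.1.le, le_trans hs.2 hy.2⟩
  -- continuity of ID on [0,T]
  have hID_cont : ContinuousOn ID (Icc 0 T) := by
    have hlip : LipschitzOnWith (Real.toNNReal Cc) ID (Icc 0 T) := by
      apply LipschitzOnWith.of_dist_le_mul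
      intro x hx y hy
      wlog hxy : y ≤ x generalizing x y
      · rw [dist_comm, dist_comm x y]; exact this y hy x hx (le_of_not_ge hxy)
      have heq : ID x - ID y = ∫ s in Ioc y x, c s := by
        rw [hID_add y hy x hx hxy]; ring
      rw [Real.dist_eq, Real.dist_eq, heq, abs_of_nonneg (hInc_nonneg y x hy hx),
        abs_of_nonneg (by linarith)]
      calc ∫ s in Ioc y x, c s ≤ ∫ _s in Ioc y x, Cc := by
            apply setIntegral_mono_on (hcint.mono_set (Ioc_subset_Ioc hy.1 hx.2))
              (integrableOn_const (by simp [Real.volume_Ioc]))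
              measurableSet_Ioc
            intro s hs
            exact hcC s ⟨le_trans hy.1 hs.1.le, le_trans hs.2 hx.2⟩
        _ = Cc * (x - y) := by
            rw [setIntegral_const, measureReal_def, Real.volume_Ioc, smul_eq_mul]
            rcases le_or_gt y x with h | h
            · rw [ENNReal.toReal_ofReal (by linarith)]; ring
            · rw [ENNReal.ofReal_of_nonpos (by linarith)]; simp; nlinarith [hxy]
        _ ≤ Real.toNNReal Cc * (x - y) := by
            have : Cc ≤ (Real.toNNReal Cc : ℝ) := Real.le_coe_toNNReal Cc
            nlinarith [hxy]
    exact hlip.continuousOn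
  -- the ε-family of comparisons
  have key : ∀ ε ∈ Ioo (0:ℝ) (V 0), (V 0 - ε) * Real.exp (-(ID tstar + ε * tstar)) ≤ V tstar := by
    intro ε hε
    by_contra hcon
    push_neg at hcon
    set R : ℝ → ℝ := fun t => (V 0 - ε) * Real.exp (-(ID t + ε * t)) with hRdef
    have hV0ε : 0 < V 0 - ε := by linarith [hε.2]
    have hRpos : ∀ t, 0 < R t := fun t => mul_pos hV0ε (Real.exp_pos _)
    have hR_cont : ContinuousOn R (Icc 0 T) := by
      apply continuousOn_const.mul
      apply ContinuousOn.rexp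
      exact (hID_cont.add ((continuous_const.mul continuous_id).continuousOn)).neg
    set F : ℝ → ℝ := fun t => Vc t - R t with hFdef
    have hF_cont : ContinuousOn F (Icc 0 tstar) :=
      (hVc_cont.continuousOn.sub (hR_cont.mono (Icc_subset_Icc_right htstar.2)))
    set A : Set ℝ := Icc 0 tstar ∩ F ⁻¹' (Iic 0) with hAdef
    have hA_closed : IsClosed A :=
      hF_cont.preimage_isClosed_of_isClosed isClosed_Icc isClosed_Iic
    have hA_sub : A ⊆ Icc 0 tstar := inter_subset_left
    have hA_ne : A.Nonempty := by
      refine ⟨tstar, ⟨⟨htstar.1, le_refl _⟩, ?_⟩⟩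
      simp only [hFdef, mem_preimage, mem_Iic]
      rw [hVc_eq tstar htstar]
      simp only [hRdef]
      linarith [hcon]
    have hA_bdd : BddBelow A := ⟨0, fun x hx => (hA_sub hx).1⟩
    set τ := sInf A with hτdef
    have hτA : τ ∈ A := hA_closed.csInf_mem hA_ne hA_bdd
    have hτIcc : τ ∈ Icc 0 tstar := hA_sub hτA
    have hτT : τ ∈ Icc 0 T := ⟨hτIcc.1, le_trans hτIcc.2 htstar.2⟩
    have hVτRτ : V τ ≤ R τ := by
      have := hτA.2
      simp only [hFdef, mem_preimage, mem_Iic] at this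
      rw [hVc_eq τ hτT] at this
      linarith
    -- τ > 0
    have hID0 : ID 0 = 0 := by simp [hID]
    have hτpos : 0 < τ := by
      rcases lt_or_eq_of_le hτIcc.1 with h | h
      · exact h
      · exfalso
        have h0A : (0:ℝ) ∈ A := by rw [← h] at hτA; exact hτA
        have := h0A.2
        simp only [hFdef, mem_preimage, mem_Iic] at this
        rw [hVc_eq 0 ⟨le_refl 0, hT⟩] at this
        have hR0 : R 0 = V 0 - ε := by simp [hRdef, hID0]
        rw [hR0] at this
        linarith [hε.1]
    set η : ℝ := ε * R τ / (Cc + 1) with hηdef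
    have hηpos : 0 < η := by
      apply div_pos (mul_pos hε.1 (hRpos τ)); linarith
    -- continuity of V at τ within Icc 0 T
    have hVτ := hVcont τ hτT
    rw [Metric.continuousWithinAt_iff] at hVτ
    obtain ⟨δ, hδpos, hδ⟩ := hVτ η hηpos
    -- pick t < τ close to τ
    set t := τ - min δ τ / 2 with htdef
    have hminpos : 0 < min δ τ := lt_min hδpos hτpos
    have htlt : t < τ := by simp only [htdef]; linarith
    have htpos : 0 < t := by
      have : min δ τ ≤ τ := min_le_right _ _
      simp only [htdef]; linarith
    have htτδ : τ - t < δ := by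
      have : min δ τ ≤ δ := min_le_left _ _
      simp only [htdef]; linarith
    have htIcc : t ∈ Icc 0 tstar := ⟨htpos.le, le_trans htlt.le hτIcc.2⟩
    have htT : t ∈ Icc 0 T := ⟨htpos.le, le_trans htIcc.2 htstar.2⟩
    have htnA : t ∉ A := fun h => absurd (csInf_le hA_bdd h) (by simp only [← hτdef]; linarith)
    have hRtVt : R t < V t := by
      have : ¬ (F t ≤ 0) := fun h => htnA ⟨htIcc, h⟩
      simp only [hFdef, mem_preimage, mem_Iic] at this
      rw [hVc_eq t htT] at this
      linarith
    -- increment identity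
    have hincr : V τ - V t = ∫ s in Ioc t τ, g s := by
      rw [hrep τ hτT, hrep t htT]
      have : Ioc (0:ℝ) τ = Ioc 0 t ∪ Ioc t τ := (Ioc_union_Ioc_eq_Ioc htT.1 htlt.le).symm
      rw [this, setIntegral_union (Ioc_disjoint_Ioc_of_le le_rfl) measurableSet_Ioc
        (hgint.mono_set (Ioc_subset_Ioc_right htT.2))
        (hgint.mono_set (Ioc_subset_Ioc htT.1 hτT.2))]
      ring
    have hsubT : Ioc t τ ⊆ Icc 0 T := fun s hs => ⟨le_trans htpos.le hs.1.le, le_trans hs.2 hτT.2⟩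
    have hsubT' : Ioc t τ ⊆ Ioc 0 T := fun s hs => ⟨lt_of_le_of_lt htpos.le hs.1, le_trans hs.2 hτT.2⟩
    -- integrability of c*V on Ioc t τ
    have hcVint : IntegrableOn (fun s => c s * V s) (Ioc t τ) := by
      have h1 : IntegrableOn (fun s => Vc s * c s) (Ioc t τ) := by
        apply Integrable.bdd_mul (hcint.mono_set hsubT') hVc_cont.aestronglyMeasurable.restrict
        exact ae_of_all _ hVc_bdd
      have h2 : EqOn (fun s => c s * V s) (fun s => Vc s * c s) (Ioc t τ) := by
        intro s hs; simp only; rw [hVc_eq s (hsubT hs), mul_comm]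
      exact (integrableOn_congr_fun h2 measurableSet_Ioc).mpr h1
    have hcint' : IntegrableOn c (Ioc t τ) := hcint.mono_set hsubT'
    -- lower bound on increment
    have hI1 : -(∫ s in Ioc t τ, c s * V s) ≤ V τ - V t := by
      rw [hincr, ← integral_neg]
      apply setIntegral_mono_on hcVint.neg (hgint.mono_set hsubT') measurableSet_Ioc
      intro s hs
      exact hgc s (hsubT hs)
    set P := ∫ s in Ioc t τ, c s with hPdef
    have hP0 : 0 ≤ P := hInc_nonneg t τ htT hτT
    have hIDτ : ID τ = ID t + P := hID_add t htT τ hτT htlt.le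
    -- upper bound on R increment
    have hRbound : R τ - R t ≤ -(R τ * (P + ε * (τ - t))) := by
      have hxy : ID t + ε * t ≤ ID τ + ε * τ := by
        rw [hIDτ]; nlinarith [htlt.le, hε.1]
      have := exp_conv_aux hxy
      have h2 : (V 0 - ε) * (Real.exp (-(ID τ + ε * τ)) - Real.exp (-(ID t + ε * t)))
          ≤ (V 0 - ε) * (-(Real.exp (-(ID τ + ε * τ)) * ((ID τ + ε * τ) - (ID t + ε * t)))) :=
        mul_le_mul_of_nonneg_left this hV0ε.le
      simp only [hRdef]
      have h3 : (ID τ + ε * τ) - (ID t + ε * t) = P + ε * (τ - t) := by rw [hIDτ]; ring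
      rw [h3] at h2
      nlinarith [h2]
    -- key strict lower bound for the combined integral
    have hcombined_int : (∫ s in Ioc t τ, (c s * V s - R τ * c s))
        = (∫ s in Ioc t τ, c s * V s) - R τ * P := by
      rw [integral_sub hcVint (hcint'.const_mul (R τ)), MeasureTheory.integral_const_mul]
    have hkeylow : ε * R τ * (τ - t) < ∫ s in Ioc t τ, (c s * V s - R τ * c s) := by
      rw [hcombined_int]
      nlinarith [hI1, hRbound, hRtVt, hVτRτ]
    -- upper bound on the combined integral
    have hkeyup : (∫ s in Ioc t τ, (c s * V s - R τ * c s)) ≤ Cc * η * (τ - t) := by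
      have hmono : (∫ s in Ioc t τ, (c s * V s - R τ * c s)) ≤ ∫ _s in Ioc t τ, Cc * η := by
        apply setIntegral_mono_on (hcVint.sub (hcint'.const_mul (R τ)))
          (integrableOn_const (by simp [Real.volume_Ioc])) measurableSet_Ioc
        intro s hs
        have hsT : s ∈ Icc 0 T := hsubT hs
        have hVsRτ : V s - R τ < η := by
          have hdist : dist s τ < δ := by
            rw [Real.dist_eq, abs_of_nonpos (by linarith [hs.2])]
            linarith [hs.1, htτδ]
          have := hδ hsT hdist
          rw [Real.dist_eq] at this
          have habs : V s - V τ < η := lt_of_le_of_lt (le_abs_self _) this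
          linarith [hVτRτ]
        have hc0s := hc0 s hsT
        have hcCs := hcC s hsT
        have : c s * (V s - R τ) ≤ Cc * η := by
          rcases le_or_gt (V s - R τ) 0 with h | h
          · have : c s * (V s - R τ) ≤ 0 := mul_nonpos_of_nonneg_of_nonpos hc0s h
            nlinarith
          · calc c s * (V s - R τ) ≤ Cc * (V s - R τ) := by nlinarith
              _ ≤ Cc * η := by nlinarith
        have hring : c s * V s - R τ * c s = c s * (V s - R τ) := by ring
        simp only [Pi.sub_apply]
        linarith [this]
      calc (∫ s in Ioc t τ, (c s * V s - R τ * c s)) ≤ ∫ _s in Ioc t τ, Cc * η := hmono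
        _ = Cc * η * (τ - t) := by
            rw [setIntegral_const, measureReal_def, Real.volume_Ioc, smul_eq_mul,
              ENNReal.toReal_ofReal (sub_nonneg.mpr htlt.le)]
            ring
    -- contradiction
    have hfinal : Cc * η < ε * R τ := by
      have h1 : Cc * η * (Cc + 1) = Cc * (ε * R τ) := by
        rw [hηdef, mul_assoc, div_mul_cancel₀ _ (by linarith : Cc + 1 ≠ 0)]
        try ring
      nlinarith [mul_pos hε.1 (hRpos τ), hCc0]
    nlinarith [hkeylow, hkeyup, htlt, hfinal, sub_pos.mpr htlt]
  -- take the limit ε → 0⁺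
  have hlim : Tendsto (fun ε : ℝ => (V 0 - ε) * Real.exp (-(ID tstar + ε * tstar)))
      (𝓝[>] (0:ℝ)) (𝓝 ((V 0 - 0) * Real.exp (-(ID tstar + 0 * tstar)))) := by
    apply Tendsto.mono_left _ nhdsWithin_le_nhds
    apply Continuous.tendsto
    exact (continuous_const.sub continuous_id).mul
      (((continuous_const.add (continuous_id.mul continuous_const)).neg).rexp)
  have hlim' : Tendsto (fun ε : ℝ => (V 0 - ε) * Real.exp (-(ID tstar + ε * tstar)))
      (𝓝[>] (0:ℝ)) (𝓝 (V 0 * Real.exp (-(ID tstar)))) := by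
    convert hlim using 2; ring_nf
  refine le_of_tendsto hlim' ?_
  filter_upwards [Ioo_mem_nhdsGT_of_mem (Set.left_mem_Ico.mpr hV0)] with ε hε
  exact key ε hε

/-- **Lemma 2 (a priori estimates).** Let `Γ > 0` satisfy `μ(S) ≤ Γ·S` on `[0,S_in]`,
let `M ≥ max_{[0,S_in]} μ` (`M > 0`), `Ck ≥ ‖k‖_∞` (`Ck > 0`) and `Cq ≥ ‖q‖_∞`. Every
weak solution `(f,S)` on `[0,T]` with input `D` and initial condition `(f₀,S₀) ∈ X`
satisfies, for all `t ∈ [0,T]`: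
(i)  `‖f[t]‖₁ ≤ exp(M·Ck·t)·‖f₀‖₁`;
(ii) `S(t) ≥ S₀·exp(−Γ·Cq·‖f₀‖₁·(exp(M·Ck·t) − 1)/(M·Ck))`;
(iii) `S(t) ≤ S_in(1 − exp(−∫₀^t D)) + S₀·exp(−∫₀^t D)`. -/
theorem a_priori_estimates
    (μ β k q : ℝ → ℝ) (S_in : ℝ) (hmodel : ModelHyp μ β k q S_in)
    (T : ℝ) (hT : 0 < T)
    (D : ℝ → ℝ) (hD : AdmissibleInput D)
    (f : ℝ → ℝ → ℝ) (S : ℝ → ℝ) (f₀ : ℝ → ℝ) (S₀ : ℝ)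
    (hX : MemX μ k S_in f₀ S₀)
    (hsol : IsWeakSolution μ β k q S_in D T f S f₀ S₀)
    (Γ M Ck Cq : ℝ) (hΓpos : 0 < Γ)
    (hΓ : ∀ s ∈ Icc 0 S_in, μ s ≤ Γ * s)
    (hM : ∀ s ∈ Icc 0 S_in, μ s ≤ M) (hMpos : 0 < M)
    (hCk : ∀ a, 0 ≤ a → k a ≤ Ck) (hCkpos : 0 < Ck)
    (hCq : ∀ a, 0 ≤ a → q a ≤ Cq) :
    ∀ t ∈ Icc 0 T,
      (∫ a in Ioi (0:ℝ), |f t a|)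
          ≤ Real.exp (M * Ck * t) * (∫ a in Ioi (0:ℝ), |f₀ a|) ∧
      S₀ * Real.exp (-(Γ * Cq * (∫ a in Ioi (0:ℝ), |f₀ a|)
          * ((Real.exp (M * Ck * t) - 1) / (M * Ck)))) ≤ S t ∧
      S t ≤ S_in * (1 - Real.exp (-(∫ s in (0:ℝ)..t, D s)))
            + S₀ * Real.exp (-(∫ s in (0:ℝ)..t, D s)) := by
  classical
  obtain ⟨hμcont, hμ0, -, -, -, -, -, hβ0, -, hkcont, hk0, -, hqcont, hq0, -, -, -, hSin⟩ := hmodel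
  obtain ⟨hDmeas, hD0, hDbdd⟩ := hD
  obtain ⟨h0a, hS0, hmem, hL1, hjoint, hScont, hbc, hSrep, hweak⟩ := hsol
  have hCq0 : 0 ≤ Cq := le_trans (hq0 0 le_rfl) (hCq 0 le_rfl)
  set u0 : ℝ := ∫ a in Ioi (0:ℝ), |f₀ a| with hu0def
  set u : ℝ → ℝ := fun t => ∫ a in Ioi (0:ℝ), |f t a| with hudef
  have hu_nonneg : ∀ t, 0 ≤ u t := fun t =>
    setIntegral_nonneg measurableSet_Ioi (fun a _ => abs_nonneg _)
  have hu0_nonneg : 0 ≤ u0 :=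
    setIntegral_nonneg measurableSet_Ioi (fun a _ => abs_nonneg _)
  have hSmem : ∀ t ∈ Icc 0 T, S t ∈ Ioo 0 S_in := fun t ht => (hmem t ht).2.2.2.2.1
  -- integrability of w·f t on (0,∞)
  have hwint : ∀ (w : ℝ → ℝ), ContinuousOn w (Ici 0) → (∀ a, 0 ≤ a → 0 ≤ w a) →
      ∀ (Cw : ℝ), (∀ a, 0 ≤ a → w a ≤ Cw) →
      ∀ t ∈ Icc 0 T, IntegrableOn (fun a => w a * f t a) (Ioi 0) := by
    intro w hwcont hw0 Cw hwC t ht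
    have hfi : IntegrableOn (f t) (Ioi 0) := (hmem t ht).2.2.2.1
    apply Integrable.mono' (hfi.abs.const_mul Cw)
    · exact (((hwcont.mono Ioi_subset_Ici_self).aestronglyMeasurable measurableSet_Ioi).mul
        hfi.aestronglyMeasurable)
    · refine (ae_restrict_iff' measurableSet_Ioi).mpr (ae_of_all _ fun a ha => ?_)
      have ha0 : (0:ℝ) ≤ a := le_of_lt ha
      rw [Real.norm_eq_abs, abs_mul, abs_of_nonneg (hw0 a ha0)]
      exact mul_le_mul_of_nonneg_right (hwC a ha0) (abs_nonneg _)
  -- ∫ f t = u t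
  have habs : ∀ t ∈ Icc 0 T, (∫ a in Ioi (0:ℝ), f t a) = u t := by
    intro t ht
    apply setIntegral_congr_fun measurableSet_Ioi
    intro a ha
    exact (abs_of_pos ((hmem t ht).2.1 a (le_of_lt ha))).symm
  have habs0 : (∫ a in Ioi (0:ℝ), f₀ a) = u0 := by
    apply setIntegral_congr_fun measurableSet_Ioi
    intro a ha
    exact (abs_of_pos (hX.2.1 a (le_of_lt ha))).symm
  -- continuity in t of ∫ w·f t
  have hJcont : ∀ (w : ℝ → ℝ), ContinuousOn w (Ici 0) → (∀ a, 0 ≤ a → 0 ≤ w a) →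
      ∀ (Cw : ℝ), (∀ a, 0 ≤ a → w a ≤ Cw) → 0 ≤ Cw →
      ContinuousOn (fun t => ∫ a in Ioi (0:ℝ), w a * f t a) (Icc 0 T) := by
    intro w hwcont hw0 Cw hwC hCw0 t₀ ht₀
    have hkey : ∀ t ∈ Icc 0 T,
        dist (∫ a in Ioi (0:ℝ), w a * f t a) (∫ a in Ioi (0:ℝ), w a * f t₀ a)
        ≤ Cw * ∫ a in Ioi (0:ℝ), |f t a - f t₀ a| := by
      intro t ht
      rw [Real.dist_eq,
        ← integral_sub (hwint w hwcont hw0 Cw hwC t ht) (hwint w hwcont hw0 Cw hwC t₀ ht₀)]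
      have hint2 : IntegrableOn (fun a => |f t a - f t₀ a|) (Ioi 0) :=
        (((hmem t ht).2.2.2.1).sub ((hmem t₀ ht₀).2.2.2.1)).abs
      calc |∫ a in Ioi (0:ℝ), (w a * f t a - w a * f t₀ a)|
          ≤ ∫ a in Ioi (0:ℝ), |w a * f t a - w a * f t₀ a| := by
            simpa [Real.norm_eq_abs] using MeasureTheory.norm_integral_le_integral_norm
              (μ := volume.restrict (Ioi 0)) (fun a => w a * f t a - w a * f t₀ a)
        _ ≤ ∫ a in Ioi (0:ℝ), Cw * |f t a - f t₀ a| := by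
            apply integral_mono_of_nonneg (ae_of_all _ fun a => abs_nonneg _)
              (hint2.const_mul Cw)
            refine (ae_restrict_iff' measurableSet_Ioi).mpr (ae_of_all _ fun a ha => ?_)
            have ha0 : (0:ℝ) ≤ a := le_of_lt ha
            show |w a * f t a - w a * f t₀ a| ≤ Cw * |f t a - f t₀ a|
            have heq2 : w a * f t a - w a * f t₀ a = w a * (f t a - f t₀ a) := by ring
            rw [heq2, abs_mul, abs_of_nonneg (hw0 a ha0)]
            exact mul_le_mul_of_nonneg_right (hwC a ha0) (abs_nonneg _)
        _ = Cw * ∫ a in Ioi (0:ℝ), |f t a - f t₀ a| := MeasureTheory.integral_const_mul Cw _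
    have htend := hL1 t₀ ht₀
    have htend' : Tendsto (fun t => Cw * ∫ a in Ioi (0:ℝ), |f t a - f t₀ a|)
        (nhdsWithin t₀ (Icc 0 T)) (nhds 0) := by
      simpa using htend.const_mul Cw
    apply tendsto_iff_dist_tendsto_zero.mpr
    apply squeeze_zero' (Filter.eventually_of_mem self_mem_nhdsWithin
      (fun t _ => dist_nonneg))
      (Filter.eventually_of_mem self_mem_nhdsWithin (fun t ht => hkey t ht)) htend'
  have hucont : ContinuousOn u (Icc 0 T) := by
    have h1 := hJcont (fun _ => (1:ℝ)) continuousOn_const (fun _ _ => zero_le_one) 1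
      (fun _ _ => le_rfl) zero_le_one
    apply ContinuousOn.congr h1
    intro t ht
    rw [← habs t ht]
    simp
  -- bounds on ∫ w·f t
  have hJle : ∀ (w : ℝ → ℝ), ContinuousOn w (Ici 0) → (∀ a, 0 ≤ a → 0 ≤ w a) →
      ∀ (Cw : ℝ), (∀ a, 0 ≤ a → w a ≤ Cw) → ∀ t ∈ Icc 0 T,
      (0 ≤ ∫ a in Ioi (0:ℝ), w a * f t a) ∧ (∫ a in Ioi (0:ℝ), w a * f t a) ≤ Cw * u t := by
    intro w hwcont hw0 Cw hwC t ht
    have hfi : IntegrableOn (f t) (Ioi 0) := (hmem t ht).2.2.2.1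
    constructor
    · apply setIntegral_nonneg measurableSet_Ioi
      intro a ha
      exact mul_nonneg (hw0 a ha.le) ((hmem t ht).2.1 a ha.le).le
    · have hle : (∫ a in Ioi (0:ℝ), w a * f t a) ≤ ∫ a in Ioi (0:ℝ), Cw * f t a := by
        apply setIntegral_mono_on (hwint w hwcont hw0 Cw hwC t ht) (hfi.const_mul Cw)
          measurableSet_Ioi
        intro a ha
        exact mul_le_mul_of_nonneg_right (hwC a ha.le) ((hmem t ht).2.1 a ha.le).le
      rw [MeasureTheory.integral_const_mul, habs t ht] at hle
      exact hle
  -- the weak formulation with φ ≡ 1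
  have htest : TestFun T (fun _ _ => (1:ℝ)) (fun _ _ => (0:ℝ)) (fun _ _ => (0:ℝ)) := by
    refine ⟨continuousOn_const, continuousOn_const, continuousOn_const,
      fun s _ a _ => ⟨hasDerivAt_const s 1, hasDerivAt_const a 1⟩,
      ⟨1, fun s _ a _ => by norm_num⟩, ⟨0, fun s _ a _ => by norm_num⟩⟩
  have hweak1 : ∀ t ∈ Icc 0 T,
      (∫ a in Ioi (0:ℝ), f₀ a) + (∫ s in (0:ℝ)..t, f s 0)
        = (∫ a in Ioi (0:ℝ), f t a)
          + ∫ s in (0:ℝ)..t, ∫ a in Ioi (0:ℝ), (β a + D s) * f s a := by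
    intro t ht
    have h := hweak (fun _ _ => (1:ℝ)) (fun _ _ => (0:ℝ)) (fun _ _ => (0:ℝ)) htest t ht
    simpa using h
  have hP : ∀ t ∈ Icc 0 T,
      0 ≤ ∫ s in (0:ℝ)..t, ∫ a in Ioi (0:ℝ), (β a + D s) * f s a := by
    intro t ht
    apply intervalIntegral.integral_nonneg ht.1
    intro s hs
    apply setIntegral_nonneg measurableSet_Ioi
    intro a ha
    exact mul_nonneg (add_nonneg (hβ0 a ha.le) (hD0 s hs.1))
      ((hmem s ⟨hs.1, le_trans hs.2 ht.2⟩).2.1 a ha.le).le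
  have hueq : ∀ t ∈ Icc 0 T, u t ≤ u0 + ∫ s in (0:ℝ)..t, f s 0 := by
    intro t ht
    have h := hweak1 t ht
    rw [habs0, habs t ht] at h
    linarith [hP t ht]
  have hfs0_cont : ContinuousOn (fun s => f s 0) (Icc 0 T) := by
    have hc : Continuous (fun s : ℝ => (s, (0:ℝ))) := continuous_id.prodMk continuous_const
    exact hjoint.comp hc.continuousOn (fun s hs => ⟨hs, Set.self_mem_Ici⟩)
  have hfs0_le : ∀ s ∈ Icc 0 T, f s 0 ≤ M * Ck * u s := by
    intro s hs
    rw [hbc s hs]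
    have hS := hSmem s hs
    have hkb := hJle k hkcont hk0 Ck hCk s hs
    calc μ (S s) * ∫ a in Ioi (0:ℝ), k a * f s a
        ≤ M * (Ck * u s) := by
          apply mul_le_mul (hM (S s) ⟨hS.1.le, hS.2.le⟩) hkb.2 hkb.1 hMpos.le
      _ = M * Ck * u s := by ring
  have hule : ∀ t ∈ Icc 0 T, u t ≤ u0 + ∫ s in (0:ℝ)..t, M * Ck * u s := by
    intro t ht
    have hsub : uIcc (0:ℝ) t ⊆ Icc 0 T := by
      rw [uIcc_of_le ht.1]; exact Icc_subset_Icc_right ht.2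
    have hmono : (∫ s in (0:ℝ)..t, f s 0) ≤ ∫ s in (0:ℝ)..t, M * Ck * u s := by
      apply intervalIntegral.integral_mono_on ht.1
        ((hfs0_cont.mono hsub).intervalIntegrable)
        (((continuousOn_const.mul hucont).mono hsub).intervalIntegrable)
      intro s hs
      exact hfs0_le s ⟨hs.1, le_trans hs.2 ht.2⟩
    linarith [hueq t ht]
  -- Grönwall for part (i)
  have hpartI : ∀ t ∈ Icc 0 T, u t ≤ Real.exp (M * Ck * t) * u0 := by
    have hMCk : 0 ≤ M * Ck := (mul_pos hMpos hCkpos).le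
    set ub : ℝ → ℝ := fun s => u (max 0 (min s T)) with hubdef
    have hub_cont : Continuous ub :=
      hucont.comp_continuous (continuous_const.max (continuous_id.min continuous_const))
        (fun s => ⟨le_max_left _ _, max_le hT.le (min_le_right _ _)⟩)
    have hub_eq : ∀ s ∈ Icc 0 T, ub s = u s := by
      intro s hs
      simp only [hubdef]
      rw [min_eq_left hs.2, max_eq_right hs.1]
    have hub_nn : ∀ s, 0 ≤ ub s := fun s => hu_nonneg _
    set vb : ℝ → ℝ := fun t => u0 + ∫ s in (0:ℝ)..t, M * Ck * ub s with hvbdef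
    have hg_cont : Continuous (fun s => M * Ck * ub s) := continuous_const.mul hub_cont
    have hvb_deriv : ∀ t : ℝ, HasDerivAt vb (M * Ck * ub t) t := by
      intro t
      apply HasDerivAt.const_add
      exact intervalIntegral.integral_hasDerivAt_right
        (hg_cont.intervalIntegrable _ _)
        (hg_cont.stronglyMeasurableAtFilter _ _)
        hg_cont.continuousAt
    have hvb_ge : ∀ t ∈ Icc 0 T, u t ≤ vb t := by
      intro t ht
      have hcongr : (∫ s in (0:ℝ)..t, M * Ck * u s) = ∫ s in (0:ℝ)..t, M * Ck * ub s := by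
        apply intervalIntegral.integral_congr
        intro s hs
        rw [uIcc_of_le ht.1] at hs
        show M * Ck * u s = M * Ck * ub s
        rw [hub_eq s ⟨hs.1, le_trans hs.2 ht.2⟩]
      have := hule t ht
      rw [hcongr] at this
      exact this
    have hvb0 : vb 0 = u0 := by simp [hvbdef]
    have hgron := norm_le_gronwallBound_of_norm_deriv_right_le (a := 0) (b := T)
      (f := vb) (f' := fun t => M * Ck * ub t) (δ := u0) (K := M * Ck) (ε := 0)
      ((continuous_iff_continuousAt.mpr (fun t => (hvb_deriv t).continuousAt)).continuousOn)
      (fun t _ => (hvb_deriv t).hasDerivWithinAt)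
      (by rw [hvb0, Real.norm_eq_abs, abs_of_nonneg hu0_nonneg])
      ?_
    · intro t ht
      have h1 := hgron t ht
      rw [gronwallBound_ε0, sub_zero] at h1
      have h2 : vb t ≤ |vb t| := le_abs_self _
      rw [Real.norm_eq_abs] at h1
      calc u t ≤ vb t := hvb_ge t ht
        _ ≤ |vb t| := h2
        _ ≤ u0 * Real.exp (M * Ck * t) := h1
        _ = Real.exp (M * Ck * t) * u0 := by ring
    · intro x hx
      have hx' : x ∈ Icc 0 T := ⟨hx.1, hx.2.le⟩
      have h1 : ub x = u x := hub_eq x hx'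
      have h2 : u x ≤ vb x := hvb_ge x hx'
      rw [Real.norm_eq_abs, Real.norm_eq_abs, abs_of_nonneg (mul_nonneg hMCk (hub_nn x)),
        add_zero, h1]
      have h3 : vb x ≤ |vb x| := le_abs_self _
      nlinarith [hMCk]
  -- setup for parts (ii) and (iii)
  obtain ⟨CD, hCD⟩ := hDbdd T hT
  have hIqcont : ContinuousOn (fun s => ∫ a in Ioi (0:ℝ), q a * f s a) (Icc 0 T) :=
    hJcont q hqcont hq0 Cq hCq hCq0
  have hμScont : ContinuousOn (fun s => μ (S s)) (Icc 0 T) :=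
    hμcont.comp hScont (fun s hs => (hSmem s hs).1.le)
  set G : ℝ → ℝ := fun s =>
    D s * (S_in - S s) - μ (S s) * ∫ a in Ioi (0:ℝ), q a * f s a with hGdef
  have hSrep' : ∀ t ∈ Icc 0 T, S t = S 0 + ∫ s in Ioc 0 t, G s := by
    intro t ht
    have h := hSrep t ht
    rw [intervalIntegral.integral_of_le ht.1] at h
    rw [hS0]
    exact h
  have h2int : IntegrableOn (fun s => μ (S s) * ∫ a in Ioi (0:ℝ), q a * f s a) (Ioc 0 T) :=
    ((hμScont.mul hIqcont).integrableOn_Icc).mono_set Ioc_subset_Icc_self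
  have h1int : IntegrableOn (fun s => D s * (S_in - S s)) (Ioc 0 T) := by
    apply Integrable.mono' (g := fun _ => CD * S_in)
      (integrableOn_const (by simp [Real.volume_Ioc]))
    · exact (hDmeas.aestronglyMeasurable.restrict).mul
        (((continuousOn_const.sub hScont).mono Ioc_subset_Icc_self).aestronglyMeasurable
          measurableSet_Ioc)
    · refine (ae_restrict_iff' measurableSet_Ioc).mpr (ae_of_all _ fun s hs => ?_)
      have hsIcc : s ∈ Icc 0 T := ⟨hs.1.le, hs.2⟩
      have hS := hSmem s hsIcc
      have hD1 : 0 ≤ D s := hD0 s hsIcc.1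
      have hD2 : D s ≤ CD := hCD s hsIcc
      rw [Real.norm_eq_abs, abs_of_nonneg (mul_nonneg hD1 (by linarith [hS.2]))]
      nlinarith [hS.1, hS.2]
  have hGint : IntegrableOn G (Ioc 0 T) := h1int.sub h2int
  -- part (iii)
  have hiii : ∀ t ∈ Icc 0 T,
      S t ≤ S_in * (1 - Real.exp (-(∫ s in (0:ℝ)..t, D s)))
            + S₀ * Real.exp (-(∫ s in (0:ℝ)..t, D s)) := by
    have hcomp := gronwall_lower T hT.le (fun t => S_in - S t) (fun s => -(G s)) D
      (continuousOn_const.sub hScont)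
      (fun t ht => sub_pos.mpr (hSmem t ht).2)
      hGint.neg
      (by
        intro t ht
        have h := hSrep' t ht
        rw [integral_neg]
        linarith [h])
      hDmeas CD (fun s hs => hD0 s hs.1) (fun s hs => hCD s hs)
      (by
        intro s hs
        have hS := hSmem s hs
        have hq' := hJle q hqcont hq0 Cq hCq s hs
        have hμnn : 0 ≤ μ (S s) := hμ0 _ hS.1.le
        simp only [hGdef]
        nlinarith [hq'.1])
    intro t ht
    have h := hcomp t ht
    rw [intervalIntegral.integral_of_le ht.1]
    have hE : S_in * (1 - Real.exp (-(∫ s in Ioc (0:ℝ) t, D s)))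
        + S₀ * Real.exp (-(∫ s in Ioc (0:ℝ) t, D s))
        = S_in - (S_in - S₀) * Real.exp (-(∫ s in Ioc (0:ℝ) t, D s)) := by ring
    rw [hE]
    have h' : (S_in - S 0) * Real.exp (-(∫ s in Ioc (0:ℝ) t, D s)) ≤ S_in - S t := h
    rw [hS0] at h'
    linarith [h']
  -- part (ii)
  have hMCkpos : 0 < M * Ck := mul_pos hMpos hCkpos
  set c2 : ℝ → ℝ := fun s => Γ * Cq * u0 * Real.exp (M * Ck * s) with hc2def
  have hc2cont : Continuous c2 := by
    apply continuous_const.mul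
    exact (continuous_const.mul continuous_id).rexp
  have hΓCqu0 : 0 ≤ Γ * Cq * u0 := mul_nonneg (mul_nonneg hΓpos.le hCq0) hu0_nonneg
  have hii : ∀ t ∈ Icc 0 T,
      S₀ * Real.exp (-(Γ * Cq * u0 * ((Real.exp (M * Ck * t) - 1) / (M * Ck)))) ≤ S t := by
    have hcomp := gronwall_lower T hT.le S G c2 hScont (fun t ht => (hSmem t ht).1) hGint
      hSrep' hc2cont.measurable (Γ * Cq * u0 * Real.exp (M * Ck * T))
      (fun s _ => mul_nonneg hΓCqu0 (Real.exp_pos _).le)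
      (by
        intro s hs
        simp only [hc2def]
        apply mul_le_mul_of_nonneg_left _ hΓCqu0
        exact Real.exp_le_exp.mpr (mul_le_mul_of_nonneg_left hs.2 hMCkpos.le))
      (by
        intro s hs
        have hS := hSmem s hs
        have hq' := hJle q hqcont hq0 Cq hCq s hs
        have hu_le := hpartI s hs
        have hμle : μ (S s) ≤ Γ * S s := hΓ (S s) ⟨hS.1.le, hS.2.le⟩
        have hμnn : 0 ≤ μ (S s) := hμ0 _ hS.1.le
        have h1 : μ (S s) * (∫ a in Ioi (0:ℝ), q a * f s a)
            ≤ (Γ * S s) * (Cq * (Real.exp (M * Ck * s) * u0)) := by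
          apply mul_le_mul hμle _ hq'.1 (mul_nonneg hΓpos.le hS.1.le)
          calc (∫ a in Ioi (0:ℝ), q a * f s a) ≤ Cq * u s := hq'.2
            _ ≤ Cq * (Real.exp (M * Ck * s) * u0) :=
              mul_le_mul_of_nonneg_left (hu_le) hCq0
        have hD' : 0 ≤ D s * (S_in - S s) :=
          mul_nonneg (hD0 s hs.1) (by linarith [hS.2])
        have heq : (Γ * S s) * (Cq * (Real.exp (M * Ck * s) * u0)) = c2 s * S s := by
          simp only [hc2def]; ring
        simp only [hGdef]
        nlinarith [h1, hD', heq])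
    intro t ht
    have h := hcomp t ht
    have hint_c2 : (∫ s in Ioc (0:ℝ) t, c2 s)
        = Γ * Cq * u0 * ((Real.exp (M * Ck * t) - 1) / (M * Ck)) := by
      rw [← intervalIntegral.integral_of_le ht.1]
      simp only [hc2def]
      rw [intervalIntegral.integral_const_mul]
      congr 1
      have hK : (M * Ck) ≠ 0 := ne_of_gt hMCkpos
      have hderiv : ∀ x : ℝ, HasDerivAt (fun s => Real.exp (M * Ck * s) / (M * Ck))
          (Real.exp (M * Ck * x)) x := by
        intro x
        have h1 : HasDerivAt (fun s : ℝ => M * Ck * s) (M * Ck) x := by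
          simpa using (hasDerivAt_id x).const_mul (M * Ck)
        have h3 := h1.exp.div_const (M * Ck)
        have h4 : Real.exp (M * Ck * x) * (M * Ck) / (M * Ck) = Real.exp (M * Ck * x) := by
          field_simp
        rwa [h4] at h3
      rw [intervalIntegral.integral_eq_sub_of_hasDerivAt (fun x _ => hderiv x)
        (((continuous_const.mul continuous_id).rexp).intervalIntegrable 0 t)]
      rw [mul_zero, Real.exp_zero]
      field_simp
    rw [hint_c2, hS0] at h
    exact h
  -- conclusion
  intro t ht
  exact ⟨hpartI t ht, hii t ht, hiii t ht⟩
end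
end

section
/- (Output ODE for weak solutions.) Let T > 0 and let (f,S) be a weak solution on [0,T] with input D ∈ L^∞_loc([0,∞);[0,∞)) and initial condition (f₀,S₀) ∈ X. Then for every bounded φ ∈ C¹([0,∞)) with bounded derivative φ', the map t ↦ ∫₀^∞ f(t,a)φ(a) da is absolutely continuous on [0,T] and satisfies, for almost every t ∈ [0,T], (d/dt) ∫₀^∞ f(t,a)φ(a) da = f(t,0)·φ(0) + ∫₀^∞ (φ'(a) − (β(a)+D(t))φ(a)) f(t,a) da. -/
open MeasureTheory Set Filter

noncomputable section

/-!
Test the weak formulation against the time-independent function `(s, a) ↦ φ(a)`: its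
`∂φ/∂t` vanishes and `∂φ/∂a = φ'`, so the weak identity is the integrated form of the output
ODE. Splitting the `s`-integral needs `s ↦ ∫₀^∞ ((β + D(s))φ − φ') f(s,·)` to be integrable
on `[0,t]`; it is a continuous function plus `D` times a continuous function, by
`L¹`-continuity of `s ↦ f(s,·)` and local boundedness of `D`.
-/

open scoped Topology

section ParametricIntegral

variable {α : Type*} [MeasurableSpace α] {μ : Measure α}

theorem continuousOn_integral_mul_of_tendsto_L1 {X : Type*} [TopologicalSpace X] {s : Set X}
    {f : X → α → ℝ} {h : α → ℝ} {C : ℝ} (hf : ∀ x ∈ s, Integrable (f x) μ)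
    (hL1 : ∀ x₀ ∈ s, Tendsto (fun x => ∫ a, |f x a - f x₀ a| ∂μ) (𝓝[s] x₀) (𝓝 0))
    (hm : AEStronglyMeasurable h μ) (hC : ∀ᵐ a ∂μ, ‖h a‖ ≤ C) :
    ContinuousOn (fun x => ∫ a, h a * f x a ∂μ) s := by
  intro x₀ hx₀
  rw [ContinuousWithinAt, ← tendsto_sub_nhds_zero_iff]
  refine squeeze_zero_norm' ?_ (by simpa using (hL1 x₀ hx₀).const_mul C)
  filter_upwards [self_mem_nhdsWithin] with x hx
  have hdiff : Integrable (fun a => f x a - f x₀ a) μ := (hf x hx).sub (hf x₀ hx₀)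
  calc ‖(∫ a, h a * f x a ∂μ) - ∫ a, h a * f x₀ a ∂μ‖
      = ‖∫ a, h a * (f x a - f x₀ a) ∂μ‖ := by
        rw [← integral_sub ((hf x hx).bdd_mul hm hC) ((hf x₀ hx₀).bdd_mul hm hC)]
        simp only [mul_sub]
    _ ≤ ∫ a, C * |f x a - f x₀ a| ∂μ := by
        refine norm_integral_le_of_norm_le (hdiff.abs.const_mul C) ?_
        filter_upwards [hC] with a ha
        rw [norm_mul, Real.norm_eq_abs]
        exact mul_le_mul_of_nonneg_right ha (abs_nonneg _)
    _ = C * ∫ a, |f x a - f x₀ a| ∂μ := integral_const_mul _ _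

theorem intervalIntegrable_integral_add_mul_of_tendsto_L1 {f : ℝ → α → ℝ} {s : Set ℝ}
    {t₁ t₂ : ℝ} (hs : uIcc t₁ t₂ ⊆ s) (hf : ∀ x ∈ s, Integrable (f x) μ)
    (hL1 : ∀ x₀ ∈ s, Tendsto (fun x => ∫ a, |f x a - f x₀ a| ∂μ) (𝓝[s] x₀) (𝓝 0))
    {h₁ h₂ : α → ℝ} {C₁ C₂ : ℝ}
    (hm₁ : AEStronglyMeasurable h₁ μ) (hC₁ : ∀ᵐ a ∂μ, ‖h₁ a‖ ≤ C₁)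
    (hm₂ : AEStronglyMeasurable h₂ μ) (hC₂ : ∀ᵐ a ∂μ, ‖h₂ a‖ ≤ C₂)
    {c : ℝ → ℝ} (hc : IntervalIntegrable c volume t₁ t₂) :
    IntervalIntegrable (fun x => ∫ a, (h₁ a + c x * h₂ a) * f x a ∂μ) volume t₁ t₂ := by
  have hcont₁ := (continuousOn_integral_mul_of_tendsto_L1 hf hL1 hm₁ hC₁).mono hs
  have hcont₂ := (continuousOn_integral_mul_of_tendsto_L1 hf hL1 hm₂ hC₂).mono hs
  refine (hcont₁.intervalIntegrable.add (hc.mul_continuousOn hcont₂)).congr_ae ?_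
  filter_upwards [ae_restrict_mem measurableSet_uIoc] with x hx
  have hxs : x ∈ s := hs (uIoc_subset_uIcc hx)
  simp only [add_mul, mul_assoc]
  rw [integral_add ((hf x hxs).bdd_mul hm₁ hC₁)
    (((hf x hxs).bdd_mul hm₂ hC₂).const_mul (c x)), integral_const_mul]

end ParametricIntegral

theorem AdmissibleInput.intervalIntegrable {D : ℝ → ℝ} (hD : AdmissibleInput D) {t : ℝ}
    (ht : 0 ≤ t) : IntervalIntegrable D volume 0 t := by
  obtain ⟨CD, hCD⟩ := hD.2.2 (t + 1) (by linarith)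
  rw [intervalIntegrable_iff_integrableOn_Ioc_of_le ht]
  refine Measure.integrableOn_of_bounded measure_Ioc_lt_top.ne hD.1.aestronglyMeasurable
    (M := CD) ?_
  filter_upwards [ae_restrict_mem measurableSet_Ioc] with s hs
  rw [Real.norm_eq_abs, abs_of_nonneg (hD.2.1 s hs.1.le)]
  exact hCD s ⟨hs.1.le, by linarith [hs.2]⟩

theorem testFun_timeIndependent (T : ℝ) {φ φd : ℝ → ℝ} (hφdc : ContinuousOn φd (Ici 0))
    (hφ' : ∀ a, 0 ≤ a → HasDerivAt φ (φd a) a) (hφb : ∃ C, ∀ a, 0 ≤ a → |φ a| ≤ C)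
    (hφdb : ∃ C, ∀ a, 0 ≤ a → |φd a| ≤ C) :
    TestFun T (fun _ a => φ a) (fun _ _ => 0) (fun _ a => φd a) := by
  obtain ⟨Cφ, hCφ⟩ := hφb
  obtain ⟨Cφd, hCφd⟩ := hφdb
  have hφc : ContinuousOn φ (Ici 0) := fun a ha => (hφ' a ha).continuousAt.continuousWithinAt
  exact ⟨hφc.comp continuous_snd.continuousOn fun p hp => hp.2, continuousOn_const,
    hφdc.comp continuous_snd.continuousOn fun p hp => hp.2,
    fun s _ a ha => ⟨hasDerivAt_const s (φ a), hφ' a ha⟩,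
    ⟨Cφ, fun _ _ a ha => hCφ a ha⟩, ⟨Cφd, fun _ _ a ha => by simpa using hCφd a ha⟩⟩

theorem ModelHyp.exists_abs_sub_beta_mul_le {μ β k q : ℝ → ℝ} {S_in : ℝ}
    (hmodel : ModelHyp μ β k q S_in) {φ ψ : ℝ → ℝ} {Cφ Cψ : ℝ}
    (hφ : ∀ a, 0 ≤ a → |φ a| ≤ Cφ) (hψ : ∀ a, 0 ≤ a → |ψ a| ≤ Cψ) :
    ∃ C, ∀ a, 0 ≤ a → |ψ a - β a * φ a| ≤ C := by
  obtain ⟨-, -, -, -, -, -, -, hβ0, ⟨Cβ, hCβ⟩, -⟩ := hmodel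
  refine ⟨Cψ + Cβ * Cφ, fun a ha => ?_⟩
  have hβa : |β a| ≤ Cβ := (abs_of_nonneg (hβ0 a ha)).trans_le (hCβ a ha)
  have hCβ0 : 0 ≤ Cβ := (abs_nonneg _).trans hβa
  calc |ψ a - β a * φ a| ≤ |ψ a| + |β a| * |φ a| := by rw [← abs_mul]; exact abs_sub _ _
    _ ≤ Cψ + Cβ * Cφ := by gcongr <;> first | exact hψ a ha | exact hφ a ha

theorem IsWeakSolution.intervalIntegrable_integral_mul
    {μ β k q : ℝ → ℝ} {S_in : ℝ} {D : ℝ → ℝ} {T : ℝ} {f : ℝ → ℝ → ℝ} {S f₀ : ℝ → ℝ} {S₀ : ℝ}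
    (hmodel : ModelHyp μ β k q S_in) (hD : AdmissibleInput D)
    (hsol : IsWeakSolution μ β k q S_in D T f S f₀ S₀) {φ ψ : ℝ → ℝ}
    (hφc : ContinuousOn φ (Ici 0)) (hψc : ContinuousOn ψ (Ici 0))
    {Cφ Cψ : ℝ} (hCφ : ∀ a, 0 ≤ a → |φ a| ≤ Cφ) (hCψ : ∀ a, 0 ≤ a → |ψ a| ≤ Cψ)
    {t : ℝ} (ht : t ∈ Icc 0 T) :
    IntervalIntegrable
      (fun s => ∫ a in Ioi (0:ℝ), (ψ a - (β a + D s) * φ a) * f s a) volume 0 t := by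
  obtain ⟨-, -, hXt, hL1, -⟩ := hsol
  obtain ⟨C₁, hC₁⟩ := hmodel.exists_abs_sub_beta_mul_le hCφ hCψ
  obtain ⟨-, -, -, -, -, -, hβc, -⟩ := hmodel
  have hm : ∀ {g : ℝ → ℝ}, ContinuousOn g (Ici 0) →
      AEStronglyMeasurable g (volume.restrict (Ioi 0)) := fun hg =>
    (hg.mono Ioi_subset_Ici_self).aestronglyMeasurable measurableSet_Ioi
  have hsub : uIcc 0 t ⊆ Icc 0 T := by
    rw [uIcc_of_le ht.1]; exact Icc_subset_Icc le_rfl ht.2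
  convert intervalIntegrable_integral_add_mul_of_tendsto_L1 hsub
    (fun s hs => (hXt s hs).2.2.2.1) hL1 (hm (hψc.sub (hβc.mul hφc)))
    (ae_restrict_of_forall_mem measurableSet_Ioi fun a ha => hC₁ a ha.le) (hm hφc.neg)
    (ae_restrict_of_forall_mem measurableSet_Ioi fun a ha =>
      (abs_neg (φ a)).trans_le (hCφ a ha.le))
    (hD.intervalIntegrable ht.1) using 4 with s a
  simp only [Pi.neg_apply, Pi.sub_apply, Pi.mul_apply]
  ring

theorem output_ode_for_weak_solutions_general
    (μ β k q : ℝ → ℝ) (S_in : ℝ) (hmodel : ModelHyp μ β k q S_in)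
    (T : ℝ)
    (D : ℝ → ℝ) (hD : AdmissibleInput D)
    (f : ℝ → ℝ → ℝ) (S : ℝ → ℝ) (f₀ : ℝ → ℝ) (S₀ : ℝ)
    (hsol : IsWeakSolution μ β k q S_in D T f S f₀ S₀)
    (φ φd : ℝ → ℝ)
    (hφdc : ContinuousOn φd (Ici 0))
    (hφ' : ∀ a, 0 ≤ a → HasDerivAt φ (φd a) a)
    (hφb : ∃ C, ∀ a, 0 ≤ a → |φ a| ≤ C)
    (hφdb : ∃ C, ∀ a, 0 ≤ a → |φd a| ≤ C) :
    ∀ t ∈ Icc 0 T,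
      (∫ a in Ioi (0:ℝ), f t a * φ a)
        = (∫ a in Ioi (0:ℝ), f₀ a * φ a)
          + ∫ s in (0:ℝ)..t,
              (f s 0 * φ 0
                + ∫ a in Ioi (0:ℝ), (φd a - (β a + D s) * φ a) * f s a) := by
  intro t ht
  have hφc : ContinuousOn φ (Ici 0) := fun a ha => (hφ' a ha).continuousAt.continuousWithinAt
  obtain ⟨Cφ, hCφ⟩ := hφb
  obtain ⟨Cφd, hCφd⟩ := hφdb
  have hK := hsol.intervalIntegrable_integral_mul hmodel hD hφc hφdc hCφ hCφd ht
  obtain ⟨-, -, -, -, hjoint, -, -, -, hweak⟩ := hsol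
  have hw := hweak _ _ _ (testFun_timeIndependent T hφdc hφ' ⟨Cφ, hCφ⟩ ⟨Cφd, hCφd⟩) t ht
  have hH : IntervalIntegrable (fun s => f s 0 * φ 0) volume 0 t := by
    refine ContinuousOn.intervalIntegrable_of_Icc ht.1 (ContinuousOn.mul ?_ continuousOn_const)
    exact hjoint.comp (continuous_id.prodMk continuous_const).continuousOn
      fun s hs => ⟨Icc_subset_Icc le_rfl ht.2 hs, self_mem_Ici⟩
  have hneg : ∫ s in (0:ℝ)..t, ∫ a in Ioi (0:ℝ), (φd a - (β a + D s) * φ a) * f s a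
      = -∫ s in (0:ℝ)..t, ∫ a in Ioi (0:ℝ), ((β a + D s) * φ a - φd a - 0) * f s a := by
    rw [← intervalIntegral.integral_neg]
    congr 1; ext s
    rw [← integral_neg]
    congr 1; ext a; ring
  rw [intervalIntegral.integral_add hH hK, hneg]
  linarith

/-- **Output ODE for weak solutions (Remark 1, eq. (2.8)).** For every weak solution
`(f,S)` on `[0,T]` and every bounded `φ ∈ C¹([0,∞))` with bounded derivative `φd`, the
map `t ↦ ∫₀^∞ f(t,a)φ(a) da` is absolutely continuous on `[0,T]` with a.e. derivative
`f(t,0)φ(0) + ∫₀^∞ (φ'(a) − (β(a)+D(t))φ(a)) f(t,a) da`; equivalently (in integrated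
form), for all `t ∈ [0,T]`:
`∫₀^∞ f(t,a)φ(a) da = ∫₀^∞ f₀(a)φ(a) da + ∫₀^t (f(s,0)φ(0) + ∫₀^∞ (φ'(a) − (β(a)+D(s))φ(a)) f(s,a) da) ds`. -/
theorem output_ode_for_weak_solutions
    (μ β k q : ℝ → ℝ) (S_in : ℝ) (hmodel : ModelHyp μ β k q S_in)
    (T : ℝ) (hT : 0 < T)
    (D : ℝ → ℝ) (hD : AdmissibleInput D)
    (f : ℝ → ℝ → ℝ) (S : ℝ → ℝ) (f₀ : ℝ → ℝ) (S₀ : ℝ)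
    (hX : MemX μ k S_in f₀ S₀)
    (hsol : IsWeakSolution μ β k q S_in D T f S f₀ S₀)
    (φ φd : ℝ → ℝ)
    (hφc : ContinuousOn φ (Ici 0)) (hφdc : ContinuousOn φd (Ici 0))
    (hφ' : ∀ a, 0 ≤ a → HasDerivAt φ (φd a) a)
    (hφb : ∃ C, ∀ a, 0 ≤ a → |φ a| ≤ C)
    (hφdb : ∃ C, ∀ a, 0 ≤ a → |φd a| ≤ C) :
    ∀ t ∈ Icc 0 T,
      (∫ a in Ioi (0:ℝ), f t a * φ a)
        = (∫ a in Ioi (0:ℝ), f₀ a * φ a)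
          + ∫ s in (0:ℝ)..t,
              (f s 0 * φ 0
                + ∫ a in Ioi (0:ℝ), (φd a - (β a + D s) * φ a) * f s a) :=
  output_ode_for_weak_solutions_general μ β k q S_in hmodel T D hD f S f₀ S₀ hsol φ φd hφdc hφ' hφb
    hφdb
end
end

section
/- (Differential equation for the total population.) Let T > 0 and let (f,S) be a weak solution on [0,T] with input D ∈ L^∞_loc([0,∞);[0,∞)) and initial condition (f₀,S₀) ∈ X. Then the map t ↦ ∫₀^∞ f(t,a) da is absolutely continuous on [0,T] and satisfies, for almost every t ∈ [0,T], (d/dt) ∫₀^∞ f(t,a) da = μ(S(t)) ∫₀^∞ k(a) f(t,a) da − D(t) ∫₀^∞ f(t,a) da − ∫₀^∞ β(a) f(t,a) da. -/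
open MeasureTheory Set Filter

noncomputable section

/-! The constant test function `φ ≡ 1` turns the weak formulation into the integrated mass
balance `∫ f(t) + ∫₀ᵗ ∫ (β + D) f = ∫ f₀ + ∫₀ᵗ f(s,0) ds`; the renewal condition identifies
the boundary flux `f(s,0)` with `μ(S(s)) ∫ k f(s,·)`. What remains is integrability in time,
which comes from the `L¹`-continuity of `t ↦ f(t,·)` (making every bounded moment of `f`
continuous in `t`) and from `D` being locally bounded. -/

open MeasureTheory Set Filter Topology

section L1Continuity

variable {α X : Type*} [MeasurableSpace α] [TopologicalSpace X] {ν : Measure α}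

theorem norm_integral_mul_sub_integral_mul_le {w g₁ g₂ : α → ℝ} {C : ℝ}
    (hg₁ : Integrable g₁ ν) (hg₂ : Integrable g₂ ν)
    (hw : AEStronglyMeasurable w ν) (hwC : ∀ᵐ a ∂ν, ‖w a‖ ≤ C) :
    ‖(∫ a, w a * g₁ a ∂ν) - ∫ a, w a * g₂ a ∂ν‖ ≤ C * ∫ a, |g₁ a - g₂ a| ∂ν := by
  rw [← integral_sub (hg₁.bdd_mul hw hwC) (hg₂.bdd_mul hw hwC), ← integral_const_mul]
  refine norm_integral_le_of_norm_le ((hg₁.sub hg₂).abs.const_mul C) ?_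
  filter_upwards [hwC] with a ha
  rw [← mul_sub, norm_mul, Real.norm_eq_abs (g₁ a - g₂ a)]
  exact mul_le_mul_of_nonneg_right ha (abs_nonneg _)

theorem continuousOn_integral_bdd_mul {g : X → α → ℝ} {w : α → ℝ} {C : ℝ} {s : Set X}
    (hg : ∀ t ∈ s, Integrable (g t) ν)
    (hw : AEStronglyMeasurable w ν) (hwC : ∀ᵐ a ∂ν, ‖w a‖ ≤ C)
    (hL1 : ∀ t₀ ∈ s, Tendsto (fun t => ∫ a, |g t a - g t₀ a| ∂ν) (𝓝[s] t₀) (𝓝 0)) :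
    ContinuousOn (fun t => ∫ a, w a * g t a ∂ν) s := by
  intro t₀ ht₀
  rw [ContinuousWithinAt, tendsto_iff_norm_sub_tendsto_zero]
  refine squeeze_zero' (Eventually.of_forall fun _ => norm_nonneg _) ?_
    (by simpa using (hL1 t₀ ht₀).const_mul C)
  filter_upwards [self_mem_nhdsWithin] with t ht
  exact norm_integral_mul_sub_integral_mul_le (hg t ht) (hg t₀ ht₀) hw hwC

end L1Continuity

theorem AdmissibleInput.integrableOn_Icc {D : ℝ → ℝ} (hD : AdmissibleInput D) (t : ℝ) :
    IntegrableOn D (Icc 0 t) := by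
  obtain ⟨hmeas, hnonneg, hbdd⟩ := hD
  obtain ⟨C, hC⟩ := hbdd (max t 1) (lt_max_of_lt_right one_pos)
  refine Measure.integrableOn_of_bounded (M := C) measure_Icc_lt_top.ne
    hmeas.aestronglyMeasurable ?_
  filter_upwards [ae_restrict_mem measurableSet_Icc] with s hs
  rw [Real.norm_of_nonneg (hnonneg s hs.1)]
  exact hC s ⟨hs.1, hs.2.trans (le_max_left _ _)⟩

theorem testFun_const (T c : ℝ) : TestFun T (fun _ _ => c) (fun _ _ => 0) (fun _ _ => 0) :=
  ⟨continuousOn_const, continuousOn_const, continuousOn_const,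
    fun _ _ _ _ => ⟨hasDerivAt_const _ _, hasDerivAt_const _ _⟩,
    ⟨|c|, fun _ _ _ _ => le_rfl⟩, ⟨0, by simp⟩⟩

namespace IsWeakSolution

variable {μ β k q D : ℝ → ℝ} {S_in T S₀ t : ℝ} {f : ℝ → ℝ → ℝ} {S f₀ w : ℝ → ℝ} {C : ℝ}

theorem integrableOn (hsol : IsWeakSolution μ β k q S_in D T f S f₀ S₀) (ht : t ∈ Icc 0 T) :
    IntegrableOn (f t) (Ioi 0) :=
  (hsol.2.2.1 t ht).2.2.2.1

theorem integrableOn_mul (hsol : IsWeakSolution μ β k q S_in D T f S f₀ S₀)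
    (hw : ContinuousOn w (Ici 0)) (hwC : ∀ a, 0 ≤ a → |w a| ≤ C) (ht : t ∈ Icc 0 T) :
    IntegrableOn (fun a => w a * f t a) (Ioi 0) :=
  (hsol.integrableOn ht).bdd_mul ((hw.mono Ioi_subset_Ici_self).aestronglyMeasurable
    measurableSet_Ioi) ((ae_restrict_mem measurableSet_Ioi).mono fun a ha => hwC a ha.le)

theorem continuousOn_integral_mul (hsol : IsWeakSolution μ β k q S_in D T f S f₀ S₀)
    (hw : ContinuousOn w (Ici 0)) (hwC : ∀ a, 0 ≤ a → |w a| ≤ C) :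
    ContinuousOn (fun t => ∫ a in Ioi 0, w a * f t a) (Icc 0 T) := by
  obtain ⟨-, -, hX, hL1, -⟩ := hsol
  exact continuousOn_integral_bdd_mul (fun t ht => (hX t ht).2.2.2.1)
    ((hw.mono Ioi_subset_Ici_self).aestronglyMeasurable measurableSet_Ioi)
    ((ae_restrict_mem measurableSet_Ioi).mono fun a ha => hwC a ha.le) hL1

theorem continuousOn_integral (hsol : IsWeakSolution μ β k q S_in D T f S f₀ S₀) :
    ContinuousOn (fun t => ∫ a in Ioi 0, f t a) (Icc 0 T) := by
  simpa using hsol.continuousOn_integral_mul (w := fun _ => 1) (C := 1) continuousOn_const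
    (fun _ _ => by simp)

theorem continuousOn_boundary (hsol : IsWeakSolution μ β k q S_in D T f S f₀ S₀) :
    ContinuousOn (fun t => f t 0) (Icc 0 T) := by
  obtain ⟨-, -, -, -, hjoint, -⟩ := hsol
  exact hjoint.comp (continuousOn_id.prodMk continuousOn_const) fun _ hs => ⟨hs, mem_Ici.2 le_rfl⟩

theorem boundary_eq (hsol : IsWeakSolution μ β k q S_in D T f S f₀ S₀) (ht : t ∈ Icc 0 T) :
    f t 0 = μ (S t) * ∫ a in Ioi 0, k a * f t a :=
  hsol.2.2.2.2.2.2.1 t ht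

theorem integral_add_mul_eq (hsol : IsWeakSolution μ β k q S_in D T f S f₀ S₀)
    (hw : ContinuousOn w (Ici 0)) (hwC : ∀ a, 0 ≤ a → |w a| ≤ C) (ht : t ∈ Icc 0 T) (c : ℝ) :
    ∫ a in Ioi 0, (w a + c) * f t a = (∫ a in Ioi 0, w a * f t a) + c * ∫ a in Ioi 0, f t a := by
  simp only [add_mul]
  rw [integral_add (hsol.integrableOn_mul hw hwC ht) ((hsol.integrableOn ht).const_mul c),
    integral_const_mul]

theorem integral_add_integral_boundary (hsol : IsWeakSolution μ β k q S_in D T f S f₀ S₀)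
    (ht : t ∈ Icc 0 T) :
    (∫ a in Ioi 0, f₀ a) + ∫ s in 0..t, f s 0
      = (∫ a in Ioi 0, f t a) + ∫ s in 0..t, ∫ a in Ioi 0, (β a + D s) * f s a := by
  obtain ⟨-, -, -, -, -, -, -, -, hweak⟩ := hsol
  simpa using hweak _ _ _ (testFun_const T 1) t ht

end IsWeakSolution

theorem total_population_ode_general
    (μ β k q : ℝ → ℝ) (S_in : ℝ) (hmodel : ModelHyp μ β k q S_in)
    (T : ℝ)
    (D : ℝ → ℝ) (hD : AdmissibleInput D)
    (f : ℝ → ℝ → ℝ) (S : ℝ → ℝ) (f₀ : ℝ → ℝ) (S₀ : ℝ)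
    (hsol : IsWeakSolution μ β k q S_in D T f S f₀ S₀) :
    ∀ t ∈ Icc 0 T,
      (∫ a in Ioi (0:ℝ), f t a)
        = (∫ a in Ioi (0:ℝ), f₀ a)
          + ∫ s in (0:ℝ)..t,
              (μ (S s) * (∫ a in Ioi (0:ℝ), k a * f s a)
                - D s * (∫ a in Ioi (0:ℝ), f s a)
                - ∫ a in Ioi (0:ℝ), β a * f s a) := by
  obtain ⟨-, -, -, -, -, -, hβ, hβ_nonneg, ⟨Cβ, hCβ⟩, -⟩ := hmodel
  have hβ_bdd : ∀ a, 0 ≤ a → |β a| ≤ Cβ := fun a ha =>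
    (abs_of_nonneg (hβ_nonneg a ha)).trans_le (hCβ a ha)
  intro t ht
  have hsub : Icc 0 t ⊆ Icc 0 T := Icc_subset_Icc_right ht.2
  have hbalance := hsol.integral_add_integral_boundary ht
  rw [intervalIntegral.integral_congr fun s hs =>
    hsol.integral_add_mul_eq hβ hβ_bdd (hsub (uIcc_of_le ht.1 ▸ hs)) (D s)] at hbalance
  have hbirth : IntervalIntegrable (fun s => f s 0) volume 0 t :=
    (hsol.continuousOn_boundary.mono hsub).intervalIntegrable_of_Icc ht.1
  have hdeath : IntervalIntegrable (fun s => ∫ a in Ioi 0, β a * f s a) volume 0 t :=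
    ((hsol.continuousOn_integral_mul hβ hβ_bdd).mono hsub).intervalIntegrable_of_Icc ht.1
  have hdilution : IntervalIntegrable (fun s => D s * ∫ a in Ioi 0, f s a) volume 0 t :=
    (intervalIntegrable_iff_integrableOn_Icc_of_le ht.1).2 <|
      (hD.integrableOn_Icc t).mul_continuousOn (hsol.continuousOn_integral.mono hsub) isCompact_Icc
  rw [intervalIntegral.integral_congr (g := fun s => f s 0 - ((∫ a in Ioi 0, β a * f s a)
      + D s * ∫ a in Ioi 0, f s a)) fun s hs => ?_,
    intervalIntegral.integral_sub hbirth (hdeath.add hdilution)]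
  · linarith
  · dsimp only
    rw [hsol.boundary_eq (hsub (uIcc_of_le ht.1 ▸ hs))]
    ring

/-- **Differential equation for the total population (eq. (A12)).** For every weak
solution `(f,S)` on `[0,T]` the map `t ↦ ∫₀^∞ f(t,a) da` is absolutely continuous on
`[0,T]` with a.e. derivative
`μ(S(t))∫₀^∞ k(a) f(t,a) da − D(t)∫₀^∞ f(t,a) da − ∫₀^∞ β(a) f(t,a) da`; equivalently
(in integrated form), for all `t ∈ [0,T]`:
`∫₀^∞ f(t,a) da = ∫₀^∞ f₀(a) da + ∫₀^t (μ(S(s))∫₀^∞ k f(s,·) − D(s)∫₀^∞ f(s,·) − ∫₀^∞ β f(s,·)) ds`. -/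
theorem total_population_ode
    (μ β k q : ℝ → ℝ) (S_in : ℝ) (hmodel : ModelHyp μ β k q S_in)
    (T : ℝ) (hT : 0 < T)
    (D : ℝ → ℝ) (hD : AdmissibleInput D)
    (f : ℝ → ℝ → ℝ) (S : ℝ → ℝ) (f₀ : ℝ → ℝ) (S₀ : ℝ)
    (hX : MemX μ k S_in f₀ S₀)
    (hsol : IsWeakSolution μ β k q S_in D T f S f₀ S₀) :
    ∀ t ∈ Icc 0 T,
      (∫ a in Ioi (0:ℝ), f t a)
        = (∫ a in Ioi (0:ℝ), f₀ a)
          + ∫ s in (0:ℝ)..t,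
              (μ (S s) * (∫ a in Ioi (0:ℝ), k a * f s a)
                - D s * (∫ a in Ioi (0:ℝ), f s a)
                - ∫ a in Ioi (0:ℝ), β a * f s a) :=
  total_population_ode_general μ β k q S_in hmodel T D hD f S f₀ S₀ hsol
end
end
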